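/- arXiv:1807.09569 — 4 statements merged into one kernel-verified Lean document; each statement's English description precedes it below -/
import Mathlib

section
/- Let u, v be integers with v > u ≥ 0, let K ≥ 1 and N ≥ 0 be integers. Then there exist rational coefficients a_m (K ≤ m ≤ (K+N)v − u) and b_ℓ (1 ≤ ℓ ≤ K) such that the polynomial identity Σ_{K ≤ m ≤ (K+N)v − u} a_m·(X − 1)^m = 1 + X^{Nv}·Σ_{1 ≤ ℓ ≤ K} b_ℓ·X^{ℓv − u} holds in ℚ[X]. The coefficients b_ℓ are unique and given explicitly by b_ℓ = ((−1)^ℓ / ((ℓ−1)!·(K−ℓ)!)) · Π_{1 ≤ j ≤ K, j ≠ ℓ} (j + N − u/v). -/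
open scoped BigOperators
open Polynomial Finset

/-- The rational interpolation nodes `j + N - u/v`. -/
noncomputable def hbE (u v N : ℕ) (j : ℕ) : ℚ := (j : ℚ) + N - (u : ℚ) / v

/-- The natural exponents `Nv + (ℓv - u)`. -/
def hbEn (u v N : ℕ) (ℓ : ℕ) : ℕ := N * v + (ℓ * v - u)

theorem hbEn_cast (u v N : ℕ) (huv : u < v) {ℓ : ℕ} (hl : 1 ≤ ℓ) :
    ((hbEn u v N ℓ : ℚ)) = (v : ℚ) * hbE u v N ℓ := by
  have hv : (0:ℕ) < v := lt_of_le_of_lt (Nat.zero_le u) huv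
  have hu : u ≤ ℓ * v := le_trans (le_of_lt huv) (le_mul_of_one_le_left (Nat.zero_le v) hl)
  have hv' : (v : ℚ) ≠ 0 := Nat.cast_ne_zero.mpr hv.ne'
  unfold hbEn hbE
  push_cast [Nat.cast_sub hu]
  field_simp
  ring

theorem hbE_injOn (u v K N : ℕ) : Set.InjOn (hbE u v N) (Finset.Icc 1 K) := by
  intro i _ j _ h
  unfold hbE at h
  have : (i : ℚ) = j := by linarith
  exact_mod_cast this

theorem hb_card (K : ℕ) : (Finset.Icc 1 K).card = K := by rw [Nat.card_Icc]; omega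

theorem hbEn_le (u v K N : ℕ) (huv : u < v) {ℓ : ℕ} (hℓ : ℓ ∈ Icc 1 K) :
    hbEn u v N ℓ ≤ (K + N) * v - u := by
  obtain ⟨h1, h2⟩ := Finset.mem_Icc.mp hℓ
  have e1 : ℓ * v ≤ K * v := Nat.mul_le_mul_right v h2
  have e2 : v ≤ ℓ * v := Nat.le_mul_of_pos_left v h1
  have e3 : (K + N) * v = K * v + N * v := add_mul K N v
  unfold hbEn
  omega

theorem hb_basis_moment (u v K N : ℕ) (huv : u < v) {m : ℕ} (hm : m < K) :
    ∑ ℓ ∈ Icc 1 K, (Lagrange.basis (Icc 1 K) (hbE u v N) ℓ).eval 0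
        * ((hbEn u v N ℓ).choose m : ℚ)
      = if m = 0 then 1 else 0 := by
  have hv : (0:ℕ) < v := lt_of_le_of_lt (Nat.zero_le u) huv
  have hv' : (v : ℚ) ≠ 0 := Nat.cast_ne_zero.mpr hv.ne'
  have hfac : ((m.factorial : ℚ)) ≠ 0 := Nat.cast_ne_zero.mpr m.factorial_ne_zero
  set g : ℚ[X] := C ((m.factorial : ℚ)⁻¹) * (descPochhammer ℚ m).comp (C (v:ℚ) * X) with hg
  have hgl : ∀ ℓ ∈ Icc 1 K, g.eval (hbE u v N ℓ) = ((hbEn u v N ℓ).choose m : ℚ) := by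
    intro ℓ hℓ
    have hl1 : 1 ≤ ℓ := (Finset.mem_Icc.mp hℓ).1
    rw [hg]
    simp only [eval_mul, eval_C, eval_comp, eval_X]
    rw [← hbEn_cast u v N huv hl1, descPochhammer_eval_eq_descFactorial,
      Nat.descFactorial_eq_factorial_mul_choose]
    push_cast
    field_simp
  have hg0 : g.eval 0 = if m = 0 then 1 else 0 := by
    rw [hg]
    simp only [eval_mul, eval_C, eval_comp, eval_X, mul_zero]
    have : (0 : ℚ) = ((0 : ℕ) : ℚ) := by norm_num
    rw [this, descPochhammer_eval_eq_descFactorial]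
    cases m with
    | zero => simp
    | succ k => simp [Nat.descFactorial_succ]
  have hnd : g.natDegree ≤ m := by
    refine le_trans (natDegree_C_mul_le _ _) ?_
    rw [natDegree_comp, descPochhammer_natDegree, natDegree_C_mul_X _ hv', mul_one]
  have hdeg : g.degree < ((Icc 1 K).card : WithBot ℕ) := by
    refine lt_of_le_of_lt degree_le_natDegree ?_
    rw [hb_card]
    exact_mod_cast lt_of_le_of_lt hnd hm
  have hinterp := Lagrange.eq_interpolate (hbE_injOn u v K N) hdeg
  have h0 := congrArg (eval 0) hinterp
  rw [hg0] at h0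
  rw [Lagrange.interpolate_apply, eval_finset_sum] at h0
  simp only [eval_mul, eval_C] at h0
  rw [h0]
  refine Finset.sum_congr rfl fun ℓ hℓ => ?_
  rw [hgl ℓ hℓ, mul_comm]

theorem hb_unique_core (u v K N : ℕ) (huv : u < v) (c : ℕ → ℚ)
    (hc : ∀ m < K, ∑ ℓ ∈ Icc 1 K, c ℓ * ((hbEn u v N ℓ).choose m : ℚ) = 0) :
    ∀ ℓ ∈ Icc 1 K, c ℓ = 0 := by
  have hv : (0:ℕ) < v := lt_of_le_of_lt (Nat.zero_le u) huv
  have hv' : (v : ℚ) ≠ 0 := Nat.cast_ne_zero.mpr hv.ne'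
  have hpow : ∀ m < K, ∑ ℓ ∈ Icc 1 K, c ℓ * ((hbEn u v N ℓ : ℚ)) ^ m = 0 := by
    intro m
    induction m using Nat.strong_induction_on with
    | _ m ih =>
      intro hm
      have hdp : ∑ ℓ ∈ Icc 1 K, c ℓ * (descPochhammer ℚ m).eval ((hbEn u v N ℓ : ℚ)) = 0 := by
        have heq : ∀ ℓ : ℕ, c ℓ * (descPochhammer ℚ m).eval ((hbEn u v N ℓ : ℚ))
            = (m.factorial : ℚ) * (c ℓ * ((hbEn u v N ℓ).choose m : ℚ)) := by
          intro ℓ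
          rw [descPochhammer_eval_eq_descFactorial,
            Nat.descFactorial_eq_factorial_mul_choose]
          push_cast; ring
        calc ∑ ℓ ∈ Icc 1 K, c ℓ * (descPochhammer ℚ m).eval ((hbEn u v N ℓ : ℚ))
            = (m.factorial : ℚ) * ∑ ℓ ∈ Icc 1 K, c ℓ * ((hbEn u v N ℓ).choose m : ℚ) := by
              rw [Finset.mul_sum]; exact Finset.sum_congr rfl fun ℓ _ => heq ℓ
          _ = 0 := by rw [hc m hm, mul_zero]
      have hmono : (descPochhammer ℚ m).coeff m = 1 := by
        have hmn := monic_descPochhammer ℚ m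
        have hdn := descPochhammer_natDegree (R := ℚ) m
        calc (descPochhammer ℚ m).coeff m
            = (descPochhammer ℚ m).coeff (descPochhammer ℚ m).natDegree := by rw [hdn]
          _ = 1 := hmn.coeff_natDegree
      have hexp : ∀ x : ℚ, x ^ m
          = (descPochhammer ℚ m).eval x
            - ∑ j ∈ range m, (descPochhammer ℚ m).coeff j * x ^ j := by
        intro x
        have h1 : (descPochhammer ℚ m).eval x
            = ∑ j ∈ range (m + 1), (descPochhammer ℚ m).coeff j * x ^ j :=
          eval_eq_sum_range' (by rw [descPochhammer_natDegree]; omega) x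
        rw [Finset.sum_range_succ, hmono, one_mul] at h1
        linarith
      calc ∑ ℓ ∈ Icc 1 K, c ℓ * ((hbEn u v N ℓ : ℚ)) ^ m
          = ∑ ℓ ∈ Icc 1 K, (c ℓ * (descPochhammer ℚ m).eval ((hbEn u v N ℓ : ℚ))
              - ∑ j ∈ range m, (descPochhammer ℚ m).coeff j
                  * (c ℓ * ((hbEn u v N ℓ : ℚ)) ^ j)) := by
            refine Finset.sum_congr rfl fun ℓ _ => ?_
            rw [hexp, mul_sub, Finset.mul_sum]
            congr 1
            exact Finset.sum_congr rfl fun j _ => by ring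
        _ = (∑ ℓ ∈ Icc 1 K, c ℓ * (descPochhammer ℚ m).eval ((hbEn u v N ℓ : ℚ)))
            - ∑ ℓ ∈ Icc 1 K, ∑ j ∈ range m, (descPochhammer ℚ m).coeff j
                * (c ℓ * ((hbEn u v N ℓ : ℚ)) ^ j) := Finset.sum_sub_distrib _ _
        _ = 0 := by
            rw [hdp, Finset.sum_comm, zero_sub, neg_eq_zero]
            refine Finset.sum_eq_zero fun j hj => ?_
            rw [← Finset.mul_sum, ih j (Finset.mem_range.mp hj)
              (lt_trans (Finset.mem_range.mp hj) hm), mul_zero]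
  intro ℓ₀ hℓ₀
  obtain ⟨hℓ₀1, hℓ₀K⟩ := Finset.mem_Icc.mp hℓ₀
  set L : ℚ[X] := Lagrange.basis (Icc 1 K) (hbE u v N) ℓ₀ with hL
  set h : ℚ[X] := L.comp (C ((v:ℚ)⁻¹) * X) with hh
  have hLd : L.natDegree = K - 1 := by
    rw [hL, Lagrange.natDegree_basis (hbE_injOn u v K N) hℓ₀, hb_card]
  have hhd : h.natDegree < K := by
    rw [hh, natDegree_comp, hLd, natDegree_C_mul_X _ (inv_ne_zero hv'), mul_one]
    omega
  have hhe : ∀ ℓ ∈ Icc 1 K, h.eval ((hbEn u v N ℓ : ℚ)) = if ℓ = ℓ₀ then 1 else 0 := by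
    intro ℓ hℓ
    have hl1 : 1 ≤ ℓ := (Finset.mem_Icc.mp hℓ).1
    rw [hh, eval_comp]
    simp only [eval_mul, eval_C, eval_X]
    rw [hbEn_cast u v N huv hl1, inv_mul_cancel_left₀ hv']
    by_cases hcase : ℓ = ℓ₀
    · subst hcase
      rw [if_pos rfl, hL, Lagrange.eval_basis_self (hbE_injOn u v K N) hℓ]
    · rw [if_neg hcase, hL, Lagrange.eval_basis_of_ne (fun hx => hcase hx.symm) hℓ]
  have key : ∑ ℓ ∈ Icc 1 K, c ℓ * h.eval ((hbEn u v N ℓ : ℚ)) = c ℓ₀ := by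
    rw [Finset.sum_congr rfl fun ℓ hℓ => by rw [hhe ℓ hℓ]]
    simp only [mul_ite, mul_one, mul_zero]
    rw [Finset.sum_ite_eq' (Icc 1 K) ℓ₀ c, if_pos hℓ₀]
  rw [← key]
  calc ∑ ℓ ∈ Icc 1 K, c ℓ * h.eval ((hbEn u v N ℓ : ℚ))
      = ∑ ℓ ∈ Icc 1 K, ∑ j ∈ range K, h.coeff j * (c ℓ * ((hbEn u v N ℓ : ℚ)) ^ j) := by
        refine Finset.sum_congr rfl fun ℓ _ => ?_
        rw [eval_eq_sum_range' hhd, Finset.mul_sum]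
        exact Finset.sum_congr rfl fun j _ => by ring
    _ = 0 := by
        rw [Finset.sum_comm]
        refine Finset.sum_eq_zero fun j hj => ?_
        rw [← Finset.mul_sum, hpow j (Finset.mem_range.mp hj), mul_zero]

theorem hb_identity_moments (u v K N : ℕ) (a' b' : ℕ → ℚ)
    (hid : (∑ m ∈ Finset.Icc K ((K + N) * v - u),
          Polynomial.C (a' m) * (Polynomial.X - 1) ^ m) =
        1 + Polynomial.X ^ (N * v) *
          ∑ ℓ ∈ Finset.Icc 1 K, Polynomial.C (b' ℓ) * Polynomial.X ^ (ℓ * v - u)) :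
    ∀ m < K, ∑ ℓ ∈ Icc 1 K, b' ℓ * ((hbEn u v N ℓ).choose m : ℚ)
      = if m = 0 then -1 else 0 := by
  intro m hm
  have h2 := congrArg (fun p : ℚ[X] => (p.comp (X + 1)).coeff m) hid
  simp only [Polynomial.sum_comp, mul_comp, C_comp, pow_comp, sub_comp, add_comp, X_comp,
    one_comp, mul_comp] at h2
  rw [add_sub_cancel_right] at h2
  have hL : (∑ m' ∈ Finset.Icc K ((K + N) * v - u), C (a' m') * X ^ m').coeff m = 0 := by
    rw [finset_sum_coeff]
    refine Finset.sum_eq_zero fun m' hm' => ?_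
    have : K ≤ m' := (Finset.mem_Icc.mp hm').1
    rw [coeff_C_mul, coeff_X_pow, if_neg (by omega), mul_zero]
  rw [hL] at h2
  have hR : (X + 1 : ℚ[X]) ^ (N * v) * ∑ ℓ ∈ Icc 1 K, C (b' ℓ) * (X + 1) ^ (ℓ * v - u)
      = ∑ ℓ ∈ Icc 1 K, C (b' ℓ) * (X + 1) ^ (hbEn u v N ℓ) := by
    rw [Finset.mul_sum]
    refine Finset.sum_congr rfl fun ℓ _ => ?_
    rw [mul_left_comm, ← pow_add]
    rfl
  rw [hR] at h2
  have hRc : ((1 : ℚ[X]) + ∑ ℓ ∈ Icc 1 K, C (b' ℓ) * (X + 1) ^ (hbEn u v N ℓ)).coeff m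
      = (if m = 0 then 1 else 0) + ∑ ℓ ∈ Icc 1 K, b' ℓ * ((hbEn u v N ℓ).choose m : ℚ) := by
    rw [coeff_add, coeff_one, finset_sum_coeff]
    congr 1
    refine Finset.sum_congr rfl fun ℓ _ => ?_
    rw [coeff_C_mul, coeff_X_add_one_pow]
  rw [hRc] at h2
  rcases eq_or_ne m 0 with h | h <;> simp [h] at h2 ⊢ <;> linarith

theorem hb_exists (u v K N : ℕ) (huv : u < v) (b' : ℕ → ℚ)
    (hb : ∀ m < K, ∑ ℓ ∈ Icc 1 K, b' ℓ * ((hbEn u v N ℓ).choose m : ℚ)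
      = if m = 0 then -1 else 0) :
    ∃ a : ℕ → ℚ, (∑ m ∈ Finset.Icc K ((K + N) * v - u),
          Polynomial.C (a m) * (Polynomial.X - 1) ^ m) =
        1 + Polynomial.X ^ (N * v) *
          ∑ ℓ ∈ Finset.Icc 1 K, Polynomial.C (b' ℓ) * Polynomial.X ^ (ℓ * v - u) := by
  set D := (K + N) * v - u with hD
  set Q : ℚ[X] := 1 + ∑ ℓ ∈ Icc 1 K, C (b' ℓ) * (X + 1) ^ (hbEn u v N ℓ) with hQ
  have hQc : ∀ m, Q.coeff m
      = (if m = 0 then 1 else 0) + ∑ ℓ ∈ Icc 1 K, b' ℓ * ((hbEn u v N ℓ).choose m : ℚ) := by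
    intro m
    rw [hQ, coeff_add, coeff_one, finset_sum_coeff]
    congr 1
    exact Finset.sum_congr rfl fun ℓ _ => by rw [coeff_C_mul, coeff_X_add_one_pow]
  have hlow : ∀ m < K, Q.coeff m = 0 := by
    intro m hm
    rw [hQc, hb m hm]
    rcases eq_or_ne m 0 with h | h <;> simp [h]
  have hhigh : ∀ m, D < m → Q.coeff m = 0 := by
    intro m hm
    rw [hQc]
    have hm0 : m ≠ 0 := by omega
    rw [if_neg hm0, zero_add]
    refine Finset.sum_eq_zero fun ℓ hℓ => ?_
    rw [Nat.choose_eq_zero_of_lt (lt_of_le_of_lt (hbEn_le u v K N huv hℓ) hm)]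
    simp
  have hsum : ∑ m ∈ Icc K D, C (Q.coeff m) * X ^ m = Q := by
    ext n
    rw [finset_sum_coeff]
    simp only [coeff_C_mul, coeff_X_pow, mul_ite, mul_one, mul_zero]
    rw [Finset.sum_ite_eq (Icc K D) n (fun m => Q.coeff m)]
    by_cases hn : n ∈ Icc K D
    · rw [if_pos hn]
    · rw [if_neg hn]
      rw [Finset.mem_Icc] at hn
      rcases Nat.lt_or_ge n K with h | h
      · exact (hlow n h).symm
      · exact (hhigh n (by omega)).symm
  refine ⟨fun m => Q.coeff m, ?_⟩
  have hcomp := congrArg (fun p : ℚ[X] => p.comp (X - 1)) hsum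
  simp only [Polynomial.sum_comp, mul_comp, C_comp, pow_comp, X_comp, hQ, add_comp,
    one_comp] at hcomp
  rw [sub_add_cancel] at hcomp
  rw [hcomp]
  congr 1
  rw [Finset.mul_sum]
  exact Finset.sum_congr rfl fun ℓ _ => by rw [mul_left_comm, ← pow_add]; rfl

theorem hb_prod_id (n : ℕ) : ∏ i ∈ Icc 1 n, (i : ℚ) = (n.factorial : ℚ) := by
  rw [← Nat.cast_prod]
  congr 1
  rw [← Finset.Ico_add_one_right_eq_Icc, Finset.prod_Ico_id_eq_factorial]

theorem hb_prodA (ℓ : ℕ) (h1 : 1 ≤ ℓ) :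
    ∏ j ∈ Icc 1 (ℓ - 1), ((ℓ : ℚ) - j) = ((ℓ - 1).factorial : ℚ) := by
  rw [← hb_prod_id (ℓ - 1)]
  refine Finset.prod_nbij' (fun j => ℓ - j) (fun i => ℓ - i) ?_ ?_ ?_ ?_ ?_ <;>
    intro a ha <;> simp only [Finset.mem_Icc] at ha ⊢
  · omega
  · omega
  · omega
  · omega
  · have : a ≤ ℓ := by omega
    push_cast [Nat.cast_sub this]
    ring

theorem hb_prodB (K ℓ : ℕ) (h2 : ℓ ≤ K) :
    ∏ j ∈ Icc (ℓ + 1) K, ((ℓ : ℚ) - j) = (-1) ^ (K - ℓ) * ((K - ℓ).factorial : ℚ) := by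
  have step1 : ∀ j ∈ Icc (ℓ + 1) K, ((ℓ : ℚ) - j) = (-1) * ((j - ℓ : ℕ) : ℚ) := by
    intro j hj
    have : ℓ ≤ j := by have := (Finset.mem_Icc.mp hj).1; omega
    push_cast [Nat.cast_sub this]
    ring
  rw [Finset.prod_congr rfl step1, Finset.prod_mul_distrib, Finset.prod_const, Nat.card_Icc]
  have hcard : K + 1 - (ℓ + 1) = K - ℓ := by omega
  rw [hcard]
  congr 1
  rw [← hb_prod_id (K - ℓ)]
  refine Finset.prod_nbij' (fun j => j - ℓ) (fun i => i + ℓ) ?_ ?_ ?_ ?_ ?_ <;>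
    intro a ha <;> simp only [Finset.mem_Icc] at ha ⊢ <;> omega

theorem hb_prod_sub (K ℓ : ℕ) (h1 : 1 ≤ ℓ) (h2 : ℓ ≤ K) :
    ∏ j ∈ (Icc 1 K).erase ℓ, ((ℓ : ℚ) - j)
      = (-1) ^ (K - ℓ) * ((ℓ - 1).factorial : ℚ) * ((K - ℓ).factorial : ℚ) := by
  have hset : (Icc 1 K).erase ℓ = Icc 1 (ℓ - 1) ∪ Icc (ℓ + 1) K := by
    ext j
    simp only [Finset.mem_erase, Finset.mem_Icc, Finset.mem_union]
    omega
  have hdisj : Disjoint (Icc 1 (ℓ - 1)) (Icc (ℓ + 1) K) := by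
    rw [Finset.disjoint_left]
    intro j hj hj'
    simp only [Finset.mem_Icc] at hj hj'
    omega
  rw [hset, Finset.prod_union hdisj, hb_prodA ℓ h1, hb_prodB K ℓ h2]
  ring

theorem hb_formula (u v K N : ℕ) {ℓ : ℕ} (hℓ : ℓ ∈ Icc 1 K) :
    -(Lagrange.basis (Icc 1 K) (hbE u v N) ℓ).eval 0
      = (-1) ^ ℓ / ((Nat.factorial (ℓ - 1) : ℚ) * (Nat.factorial (K - ℓ) : ℚ)) *
          ∏ j ∈ (Finset.Icc 1 K).erase ℓ, ((j : ℚ) + N - (u : ℚ) / v) := by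
  obtain ⟨h1, h2⟩ := Finset.mem_Icc.mp hℓ
  have hdiff : ∀ j : ℕ, hbE u v N ℓ - hbE u v N j = (ℓ : ℚ) - j := by
    intro j; unfold hbE; ring
  have heval : (Lagrange.basis (Icc 1 K) (hbE u v N) ℓ).eval 0
      = ∏ j ∈ (Icc 1 K).erase ℓ, (((ℓ : ℚ) - j)⁻¹ * -(hbE u v N j)) := by
    rw [Lagrange.basis, eval_prod]
    refine Finset.prod_congr rfl fun j _ => ?_
    rw [Lagrange.basisDivisor, eval_mul, eval_C, eval_sub, eval_X, eval_C, hdiff]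
    ring
  rw [heval, Finset.prod_mul_distrib, Finset.prod_inv_distrib, hb_prod_sub K ℓ h1 h2]
  have hneg : ∏ j ∈ (Icc 1 K).erase ℓ, -(hbE u v N j)
      = (-1) ^ (K - 1) * ∏ j ∈ (Icc 1 K).erase ℓ, hbE u v N j := by
    rw [Finset.prod_congr rfl (fun j _ => (neg_eq_neg_one_mul (hbE u v N j))),
      Finset.prod_mul_distrib, Finset.prod_const, Finset.card_erase_of_mem hℓ, hb_card]
  rw [hneg]
  have hP : ∏ j ∈ (Icc 1 K).erase ℓ, hbE u v N j
      = ∏ j ∈ (Finset.Icc 1 K).erase ℓ, ((j : ℚ) + N - (u : ℚ) / v) := rfl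
  rw [hP]
  have hsgn : ((-1 : ℚ)) ^ (K - ℓ) * (-1) ^ (K - 1) * (-1) = (-1) ^ ℓ := by
    rw [mul_assoc, ← pow_succ, ← pow_add, neg_one_pow_eq_pow_mod_two,
      neg_one_pow_eq_pow_mod_two (n := ℓ)]
    congr 1
    omega
  set P : ℚ := ∏ j ∈ (Finset.Icc 1 K).erase ℓ, ((j : ℚ) + N - (u : ℚ) / v)
  rw [mul_inv, mul_inv, ← inv_pow, inv_neg_one, div_eq_mul_inv, ← hsgn, mul_inv]
  ring

/-- **Lemma 3.1**: the polynomial identity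
`∑_{K ≤ m ≤ (K+N)v-u} a_m (X-1)^m = 1 + X^{Nv} ∑_{1 ≤ ℓ ≤ K} b_ℓ X^{ℓv-u}` in `ℚ[X]`,
with the coefficients `b_ℓ` unique and given explicitly. -/
theorem polynomial_identity_heath_brown
    (u v K N : ℕ) (huv : u < v) (hK : 1 ≤ K) :
    ∃ a b : ℕ → ℚ,
      ((∑ m ∈ Finset.Icc K ((K + N) * v - u),
          Polynomial.C (a m) * (Polynomial.X - 1) ^ m) =
        1 + Polynomial.X ^ (N * v) *
          ∑ ℓ ∈ Finset.Icc 1 K, Polynomial.C (b ℓ) * Polynomial.X ^ (ℓ * v - u)) ∧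
      (∀ ℓ ∈ Finset.Icc 1 K,
        b ℓ = (-1) ^ ℓ / ((Nat.factorial (ℓ - 1) : ℚ) * (Nat.factorial (K - ℓ) : ℚ)) *
          ∏ j ∈ (Finset.Icc 1 K).erase ℓ, ((j : ℚ) + N - (u : ℚ) / v)) ∧
      (∀ a' b' : ℕ → ℚ,
        ((∑ m ∈ Finset.Icc K ((K + N) * v - u),
            Polynomial.C (a' m) * (Polynomial.X - 1) ^ m) =
          1 + Polynomial.X ^ (N * v) *
            ∑ ℓ ∈ Finset.Icc 1 K, Polynomial.C (b' ℓ) * Polynomial.X ^ (ℓ * v - u)) →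
        ∀ ℓ ∈ Finset.Icc 1 K, b' ℓ = b ℓ) := by
  set b : ℕ → ℚ := fun ℓ => -(Lagrange.basis (Icc 1 K) (hbE u v N) ℓ).eval 0 with hbdef
  have hbm : ∀ m < K, ∑ ℓ ∈ Icc 1 K, b ℓ * ((hbEn u v N ℓ).choose m : ℚ)
      = if m = 0 then -1 else 0 := by
    intro m hm
    have h0 := hb_basis_moment u v K N huv hm
    have : ∑ ℓ ∈ Icc 1 K, b ℓ * ((hbEn u v N ℓ).choose m : ℚ)
        = -∑ ℓ ∈ Icc 1 K, (Lagrange.basis (Icc 1 K) (hbE u v N) ℓ).eval 0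
            * ((hbEn u v N ℓ).choose m : ℚ) := by
      rw [← Finset.sum_neg_distrib]
      exact Finset.sum_congr rfl fun ℓ _ => by rw [hbdef]; ring
    rw [this, h0]
    rcases eq_or_ne m 0 with h | h <;> simp [h]
  obtain ⟨a, ha⟩ := hb_exists u v K N huv b hbm
  refine ⟨a, b, ha, ?_, ?_⟩
  · intro ℓ hℓ
    exact hb_formula u v K N hℓ
  · intro a' b' hid ℓ hℓ
    have hbm' := hb_identity_moments u v K N a' b' hid
    have hzero := hb_unique_core u v K N huv (fun ℓ => b' ℓ - b ℓ) (fun m hm => by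
      simp only [sub_mul]
      rw [Finset.sum_sub_distrib, hbm' m hm, hbm m hm, sub_self]) ℓ hℓ
    have : b' ℓ - b ℓ = 0 := hzero
    linarith
end

section
/- Let v, u, r be integers with v > u ≥ 0 and r ≥ 0, let K ≥ 1 be an integer and x ≥ 1. Then there exist rational numbers c⁺_ℓ and c⁻_ℓ (1 ≤ ℓ ≤ K), bounded in absolute value in terms of K and r only, such that for every n ≤ x: (i) τ_{r + u/v}(n) = Σ_{ℓ=1}^{K} c⁺_ℓ · Σ_{m₁⋯m_{ℓ+r}·n₁⋯n_{ℓv−u} = n, each nᵢ ≤ x^{1/K}} τ_{−1/v}(n₁)⋯τ_{−1/v}(n_{ℓv−u}); and (ii) if r ≥ 1, τ_{−r + u/v}(n) = Σ_{ℓ=1}^{K} c⁻_ℓ · Σ_{m₁⋯m_{ℓ−1}·n₁⋯n_{ℓv+(r−1)v−u} = n, each nᵢ ≤ x^{1/K}} τ_{−1/v}(n₁)⋯τ_{−1/v}(n_{ℓv+(r−1)v−u}). -/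
open scoped Classical BigOperators

noncomputable section

/-- Complex-valued generalized divisor function `τ_z`, with
`τ_z(p^ℓ) = C(z+ℓ-1, ℓ) = (∏_{i<ℓ} (z+i))/ℓ!`. -/
def tauC (z : ℂ) (n : ℕ) : ℂ :=
  n.factorization.prod fun _ ℓ => (∏ i ∈ Finset.range ℓ, (z + i)) / (Nat.factorial ℓ)

namespace HB
open Finset ArithmeticFunction Polynomial

def bc (z : ℂ) (ℓ : ℕ) : ℂ := (∏ i ∈ Finset.range ℓ, (z + i)) / (Nat.factorial ℓ)

lemma bc_zero (z : ℂ) : bc z 0 = 1 := by simp [bc]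

lemma factorial_ne_zero_c (ℓ : ℕ) : ((Nat.factorial ℓ : ℂ)) ≠ 0 := by
  exact_mod_cast Nat.cast_ne_zero.mpr (Nat.factorial_ne_zero ℓ)

lemma bc_succ_mul (z : ℂ) (ℓ : ℕ) : ((ℓ:ℂ)+1) * bc z (ℓ+1) = (z + ℓ) * bc z ℓ := by
  have h1 : ((Nat.factorial ℓ : ℂ)) ≠ 0 := factorial_ne_zero_c ℓ
  have h2 : ((ℓ:ℂ)+1) ≠ 0 := by
    have := Nat.cast_add_one_ne_zero (R := ℂ) ℓ
    simpa using this
  simp only [bc, Finset.prod_range_succ, Nat.factorial_succ]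
  push_cast
  field_simp

lemma bc_vandermonde (z w : ℂ) : ∀ ℓ : ℕ,
    ∑ i ∈ range (ℓ+1), bc z i * bc w (ℓ - i) = bc (z+w) ℓ := by
  intro ℓ
  induction ℓ with
  | zero => simp [bc]
  | succ ℓ ih =>
    have hL : ((ℓ:ℂ)+1) ≠ 0 := by
      have := Nat.cast_add_one_ne_zero (R := ℂ) ℓ
      simpa using this
    have key : ((ℓ:ℂ)+1) * (∑ i ∈ range (ℓ+2), bc z i * bc w (ℓ+1 - i))
        = (z + w + ℓ) * ∑ i ∈ range (ℓ+1), bc z i * bc w (ℓ - i) := by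
      have expand : ∀ i ∈ range (ℓ+2),
          ((ℓ:ℂ)+1) * (bc z i * bc w (ℓ+1-i))
            = (i:ℂ) * (bc z i * bc w (ℓ+1-i)) + ((ℓ+1-i : ℕ):ℂ) * (bc z i * bc w (ℓ+1-i)) := by
        intro i hi
        have hi' : i ≤ ℓ + 1 := by simpa [Nat.lt_succ_iff] using mem_range.mp hi
        have : ((ℓ+1-i : ℕ):ℂ) = ((ℓ:ℂ)+1) - (i:ℂ) := by
          push_cast [Nat.cast_sub hi']
          ring
        rw [this]; ring
      rw [mul_sum, sum_congr rfl expand, sum_add_distrib]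
      have claim1 : ∑ i ∈ range (ℓ+2), (i:ℂ) * (bc z i * bc w (ℓ+1-i))
          = ∑ i ∈ range (ℓ+1), (z + i) * (bc z i * bc w (ℓ-i)) := by
        rw [Finset.sum_range_succ' (fun i => (i:ℂ) * (bc z i * bc w (ℓ+1-i))) (ℓ+1)]
        simp only [Nat.cast_zero, zero_mul, add_zero]
        refine Finset.sum_congr rfl fun i hi => ?_
        have h1 : ℓ + 1 - (i+1) = ℓ - i := by omega
        have h2 : ((i:ℂ)+1) * bc z (i+1) = (z + i) * bc z i := bc_succ_mul z i
        rw [h1]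
        push_cast
        calc ((i:ℂ)+1) * (bc z (i+1) * bc w (ℓ-i))
            = (((i:ℂ)+1) * bc z (i+1)) * bc w (ℓ-i) := by ring
          _ = ((z + i) * bc z i) * bc w (ℓ-i) := by rw [h2]
          _ = (z + i) * (bc z i * bc w (ℓ-i)) := by ring
      have claim2 : ∑ i ∈ range (ℓ+2), ((ℓ+1-i : ℕ):ℂ) * (bc z i * bc w (ℓ+1-i))
          = ∑ i ∈ range (ℓ+1), (w + ((ℓ-i:ℕ):ℂ)) * (bc z i * bc w (ℓ-i)) := by
        rw [Finset.sum_range_succ]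
        simp only [Nat.sub_self, Nat.cast_zero, zero_mul, add_zero]
        refine Finset.sum_congr rfl fun i hi => ?_
        have hi' : i ≤ ℓ := by simpa [Nat.lt_succ_iff] using mem_range.mp hi
        have h1 : ℓ + 1 - i = (ℓ - i) + 1 := by omega
        have h2 : (((ℓ-i:ℕ):ℂ)+1) * bc w ((ℓ-i)+1) = (w + ((ℓ-i:ℕ):ℂ)) * bc w (ℓ-i) :=
          bc_succ_mul w (ℓ-i)
        rw [h1]
        calc (((ℓ-i) + 1 : ℕ):ℂ) * (bc z i * bc w ((ℓ-i)+1))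
            = ((((ℓ-i:ℕ):ℂ)+1) * bc w ((ℓ-i)+1)) * bc z i := by push_cast; ring
          _ = ((w + ((ℓ-i:ℕ):ℂ)) * bc w (ℓ-i)) * bc z i := by rw [h2]
          _ = (w + ((ℓ-i:ℕ):ℂ)) * (bc z i * bc w (ℓ-i)) := by ring
      rw [claim1, claim2, ← sum_add_distrib, mul_sum]
      refine Finset.sum_congr rfl fun i hi => ?_
      have hi' : i ≤ ℓ := by simpa [Nat.lt_succ_iff] using mem_range.mp hi
      have : ((ℓ-i:ℕ):ℂ) = (ℓ:ℂ) - (i:ℂ) := by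
        push_cast [Nat.cast_sub hi']; ring
      rw [this]; ring
    have rhs : ((ℓ:ℂ)+1) * bc (z+w) (ℓ+1) = (z + w + ℓ) * bc (z+w) ℓ := bc_succ_mul (z+w) ℓ
    have := key.trans (by rw [ih, ← rhs])
    exact mul_left_cancel₀ hL this

def T (z : ℂ) : ArithmeticFunction ℂ := ⟨fun n => if n = 0 then 0 else tauC z n, by simp⟩

lemma T_apply (z : ℂ) {n : ℕ} (hn : n ≠ 0) : T z n = tauC z n := by
  simp [T, hn]

lemma tauC_one_eq (z : ℂ) : tauC z 1 = 1 := by simp [tauC]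

lemma tauC_prime_pow {p : ℕ} (hp : p.Prime) (z : ℂ) (e : ℕ) : tauC z (p ^ e) = bc z e := by
  rw [tauC, hp.factorization_pow, Finsupp.prod_single_index]
  · rfl
  · simp

lemma T_isMult (z : ℂ) : (T z).IsMultiplicative := by
  rw [ArithmeticFunction.IsMultiplicative.iff_ne_zero]
  constructor
  · rw [T_apply z one_ne_zero, tauC_one_eq]
  · intro m n hm hn hmn
    rw [T_apply z (mul_ne_zero hm hn), T_apply z hm, T_apply z hn]
    unfold tauC
    rw [Nat.factorization_mul hm hn, Finsupp.prod_add_index_of_disjoint]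
    rw [Nat.support_factorization, Nat.support_factorization]
    exact hmn.disjoint_primeFactors

lemma T_mul (z w : ℂ) : T z * T w = T (z + w) := by
  rw [ArithmeticFunction.IsMultiplicative.eq_iff_eq_on_prime_powers _ ((T_isMult z).mul (T_isMult w)) _
    (T_isMult (z+w))]
  intro p e hp
  have hpp : p ≠ 0 := hp.ne_zero
  rw [ArithmeticFunction.mul_apply,
    Nat.sum_divisorsAntidiagonal (fun a b => T z a * T w b),
    Nat.sum_divisors_prime_pow hp]
  have : ∀ j ∈ range (e+1), T z (p^j) * T w (p^e / p^j) = bc z j * bc w (e - j) := by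
    intro j hj
    have hj' : j ≤ e := by simpa [Nat.lt_succ_iff] using mem_range.mp hj
    rw [Nat.pow_div hj' hp.pos, T_apply z (pow_ne_zero _ hpp), T_apply w (pow_ne_zero _ hpp),
      tauC_prime_pow hp, tauC_prime_pow hp]
  rw [sum_congr rfl this, bc_vandermonde, T_apply _ (pow_ne_zero _ hpp), tauC_prime_pow hp]

lemma T_zero : T 0 = 1 := by
  ext n
  rcases eq_or_ne n 0 with rfl | hn
  · simp
  rcases eq_or_ne n 1 with rfl | hn1
  · rw [T_apply _ one_ne_zero, tauC_one_eq]; simp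
  · rw [T_apply _ hn, ArithmeticFunction.one_apply_ne hn1]
    unfold tauC
    rw [Finsupp.prod]
    have h2 : 1 < n := by omega
    obtain ⟨p, hp⟩ := (Nat.nonempty_primeFactors.mpr h2)
    refine Finset.prod_eq_zero (i := p) (by rwa [Nat.support_factorization]) ?_
    have hpos : 0 < n.factorization p :=
      Nat.Prime.factorization_pos_of_dvd (Nat.prime_of_mem_primeFactors hp) hn
        (Nat.dvd_of_mem_primeFactors hp)
    rw [Finset.prod_eq_zero (Finset.mem_range.mpr hpos) (by simp)]
    simp

lemma T_pow (z : ℂ) (k : ℕ) : T z ^ k = T ((k:ℂ) * z) := by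
  induction k with
  | zero => simpa using T_zero.symm
  | succ k ih =>
    rw [pow_succ, ih, T_mul]
    push_cast
    ring_nf

lemma T_one_apply {n : ℕ} (hn : n ≠ 0) : T 1 n = 1 := by
  rw [T_apply _ hn]
  unfold tauC
  rw [Finsupp.prod]
  apply Finset.prod_eq_one
  intro p hp
  have : ∏ i ∈ range (n.factorization p), ((1:ℂ) + i) = (Nat.factorial (n.factorization p) : ℂ) := by
    rw [← Finset.prod_range_add_one_eq_factorial (n.factorization p)]
    push_cast
    exact Finset.prod_congr rfl fun i _ => by ring
  rw [this, div_self (by exact_mod_cast Nat.cast_ne_zero.mpr (Nat.factorial_ne_zero _))]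

lemma prod_apply_piFinset : ∀ (k : ℕ) (f : Fin k → ArithmeticFunction ℂ) (n : ℕ), n ≠ 0 →
    (∏ i, f i) n = ∑ t ∈ Fintype.piFinset (fun _ : Fin k => n.divisors),
      if ∏ i, t i = n then ∏ i, (f i) (t i) else 0 := by
  intro k
  induction k with
  | zero =>
    intro f n hn
    have hsingle : (Fintype.piFinset (fun _ : Fin 0 => n.divisors))
        = {fun i : Fin 0 => i.elim0} := by
      apply Finset.eq_singleton_iff_unique_mem.mpr
      constructor
      · rw [Fintype.mem_piFinset]; intro i; exact i.elim0
      · intro t ht; funext i; exact i.elim0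
    rw [hsingle, Finset.sum_singleton]
    simp [ArithmeticFunction.one_apply, eq_comm]
  | succ k ih =>
    intro f n hn
    rw [Fin.prod_univ_succ, ArithmeticFunction.mul_apply]
    have hext : ∀ m : ℕ, m ∣ n →
        (∏ i : Fin k, f i.succ) m = ∑ t ∈ Fintype.piFinset (fun _ : Fin k => n.divisors),
          if ∏ i, t i = m then ∏ i, (f i.succ) (t i) else 0 := by
      intro m hm
      have hm0 : m ≠ 0 := by
        rintro rfl; exact hn (Nat.eq_zero_of_zero_dvd hm)
      rw [ih (fun i => f i.succ) m hm0]
      apply Finset.sum_subset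
      · exact Fintype.piFinset_subset _ _ fun _ => Nat.divisors_subset_of_dvd hn hm
      · intro t ht hts
        have : ¬ (∏ i, t i = m) := by
          intro hprod
          exact hts (Fintype.mem_piFinset.mpr fun i => Nat.mem_divisors.mpr
            ⟨hprod ▸ Finset.dvd_prod_of_mem t (Finset.mem_univ i), hm0⟩)
        rw [if_neg this]
    have step : ∑ x ∈ n.divisorsAntidiagonal, f 0 x.1 * (∏ i : Fin k, f i.succ) x.2
        = ∑ x ∈ n.divisorsAntidiagonal, ∑ t ∈ Fintype.piFinset (fun _ : Fin k => n.divisors),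
            if ∏ i, t i = x.2 then f 0 x.1 * ∏ i, (f i.succ) (t i) else 0 := by
      refine Finset.sum_congr rfl fun x hx => ?_
      obtain ⟨hx1, hx2⟩ := Nat.mem_divisorsAntidiagonal.mp hx
      have hdvd : x.2 ∣ n := Dvd.intro_left x.1 hx1
      rw [hext x.2 hdvd, Finset.mul_sum]
      exact Finset.sum_congr rfl fun t ht => by rw [mul_ite, mul_zero]
    rw [step, ← Finset.sum_product']
    rw [← Finset.sum_filter, ← Finset.sum_filter]
    refine Finset.sum_bij' (fun q _ => Fin.cons q.1.1 q.2)
      (fun t _ => ((t 0, ∏ i : Fin k, t i.succ), fun i => t i.succ)) ?_ ?_ ?_ ?_ ?_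
    · intro q hq
      simp only [Finset.mem_filter, Finset.mem_product] at hq
      obtain ⟨⟨hq1, hq2⟩, hq3⟩ := hq
      obtain ⟨he, _⟩ := Nat.mem_divisorsAntidiagonal.mp hq1
      rw [Finset.mem_filter]
      constructor
      · rw [Fintype.mem_piFinset]
        intro i
        refine Fin.cases ?_ ?_ i
        · simp only [Fin.cons_zero]
          exact Nat.mem_divisors.mpr ⟨Dvd.intro _ he, hn⟩
        · intro j
          simp only [Fin.cons_succ]
          exact Fintype.mem_piFinset.mp hq2 j
      · simp only [Fin.prod_univ_succ, Fin.cons_zero, Fin.cons_succ]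
        rw [hq3, he]
    · intro t ht
      simp only [Finset.mem_filter] at ht
      obtain ⟨ht1, ht2⟩ := ht
      simp only [Finset.mem_filter, Finset.mem_product]
      refine ⟨⟨?_, ?_⟩, trivial⟩
      · rw [Nat.mem_divisorsAntidiagonal]
        exact ⟨by rw [← Fin.prod_univ_succ]; exact ht2, hn⟩
      · rw [Fintype.mem_piFinset]
        intro i
        exact Fintype.mem_piFinset.mp ht1 i.succ
    · intro q hq
      simp only [Finset.mem_filter, Finset.mem_product] at hq
      obtain ⟨⟨hq1, hq2⟩, hq3⟩ := hq
      have h0 : (Fin.cons q.1.1 q.2 : Fin (k+1) → ℕ) 0 = q.1.1 := Fin.cons_zero _ _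
      have hsucc : ∀ i : Fin k, (Fin.cons q.1.1 q.2 : Fin (k+1) → ℕ) i.succ = q.2 i :=
        fun i => Fin.cons_succ _ _ i
      ext <;> simp [h0, hsucc, ← hq3]
    · intro t ht
      exact Fin.cons_self_tail t
    · intro q hq
      simp only [Fin.prod_univ_succ, Fin.cons_zero, Fin.cons_succ]

lemma pow_mul_pow_apply (f g : ArithmeticFunction ℂ) (a b : ℕ) (n : ℕ) (hn : n ≠ 0) :
    (f ^ a * g ^ b) n
      = ∑ p ∈ (Fintype.piFinset fun _ : Fin a => n.divisors) ×ˢ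
          (Fintype.piFinset fun _ : Fin b => n.divisors),
        if (∏ i, p.1 i) * (∏ j, p.2 j) = n then (∏ i, f (p.1 i)) * (∏ j, g (p.2 j)) else 0 := by
  have hF : (∏ i : Fin (a+b), Fin.append (fun _ : Fin a => f) (fun _ : Fin b => g) i)
      = f ^ a * g ^ b := by
    rw [Fin.prod_univ_add]
    have h1 : (∏ i : Fin a, Fin.append (fun _ : Fin a => f) (fun _ : Fin b => g) (Fin.castAdd b i))
        = f ^ a := by
      rw [Finset.prod_congr rfl fun i _ => Fin.append_left _ _ i]
      rw [Finset.prod_const, Finset.card_univ, Fintype.card_fin]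
    have h2 : (∏ i : Fin b, Fin.append (fun _ : Fin a => f) (fun _ : Fin b => g) (Fin.natAdd a i))
        = g ^ b := by
      rw [Finset.prod_congr rfl fun i _ => Fin.append_right _ _ i]
      rw [Finset.prod_const, Finset.card_univ, Fintype.card_fin]
    rw [h1, h2]
  rw [← hF, prod_apply_piFinset _ _ n hn]
  rw [← Finset.sum_filter, ← Finset.sum_filter]
  refine Finset.sum_bij' (fun t _ => ((fun i => t (Fin.castAdd b i)), (fun j => t (Fin.natAdd a j))))
    (fun p _ => Fin.append p.1 p.2) ?_ ?_ ?_ ?_ ?_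
  · intro t ht
    simp only [Finset.mem_filter] at ht
    obtain ⟨ht1, ht2⟩ := ht
    simp only [Finset.mem_filter, Finset.mem_product]
    refine ⟨⟨?_, ?_⟩, ?_⟩
    · exact Fintype.mem_piFinset.mpr fun i => Fintype.mem_piFinset.mp ht1 _
    · exact Fintype.mem_piFinset.mpr fun i => Fintype.mem_piFinset.mp ht1 _
    · rw [← Fin.prod_univ_add]; exact ht2
  · intro p hp
    simp only [Finset.mem_filter, Finset.mem_product] at hp
    obtain ⟨⟨hp1, hp2⟩, hp3⟩ := hp
    rw [Finset.mem_filter]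
    constructor
    · rw [Fintype.mem_piFinset]
      intro i
      refine Fin.addCases (fun j => ?_) (fun j => ?_) i
      · simp only [Fin.append_left]; exact Fintype.mem_piFinset.mp hp1 j
      · simp only [Fin.append_right]; exact Fintype.mem_piFinset.mp hp2 j
    · simp only [Fin.prod_univ_add, Fin.append_left, Fin.append_right]
      exact hp3
  · intro t ht
    exact Fin.append_castAdd_natAdd
  · intro p hp
    ext <;> simp [Fin.append_left, Fin.append_right]
  · intro t ht
    simp only [Fin.prod_univ_add, Fin.append_left, Fin.append_right]

def Gle (v K : ℕ) (x : ℝ) : ArithmeticFunction ℂ :=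
  ⟨fun m => if ((m:ℝ) ≤ x ^ (1/(K:ℝ)) ∧ m ≠ 0) then tauC (-(1:ℂ)/(v:ℂ)) m else 0, by simp⟩

lemma Gle_apply (v K : ℕ) (x : ℝ) (m : ℕ) :
    Gle v K x m = if ((m:ℝ) ≤ x ^ (1/(K:ℝ)) ∧ m ≠ 0) then tauC (-(1:ℂ)/(v:ℂ)) m else 0 := rfl

def evalAF (n : ℕ) : ArithmeticFunction ℂ →+ ℂ where
  toFun := fun F => F n
  map_zero' := ArithmeticFunction.zero_apply
  map_add' := fun F G => ArithmeticFunction.add_apply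

lemma vanish (h : ArithmeticFunction ℂ) (y : ℝ) (hy : 1 ≤ y)
    (hh : ∀ m : ℕ, (m:ℝ) ≤ y → h m = 0) :
    ∀ k, ∀ n : ℕ, (n:ℝ) ≤ y ^ (k+1) → (h ^ (k+1)) n = 0 := by
  intro k
  induction k with
  | zero => intro n hn; simpa using hh n (by simpa using hn)
  | succ k ih =>
    intro n hn
    rw [pow_succ', ArithmeticFunction.mul_apply]
    apply Finset.sum_eq_zero
    intro q hq
    obtain ⟨hqe, hn0⟩ := Nat.mem_divisorsAntidiagonal.mp hq
    by_cases hd : (q.1 : ℝ) ≤ y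
    · rw [hh q.1 hd, zero_mul]
    · push_neg at hd
      have hy0 : (0:ℝ) < y := lt_of_lt_of_le zero_lt_one hy
      have h1 : (q.1:ℝ) * (q.2:ℝ) = (n:ℝ) := by exact_mod_cast congrArg (Nat.cast : ℕ → ℝ) hqe
      have e1 : y * (q.2:ℝ) ≤ (q.1:ℝ) * (q.2:ℝ) :=
        mul_le_mul_of_nonneg_right (le_of_lt hd) (Nat.cast_nonneg _)
      have e2 : (q.1:ℝ) * (q.2:ℝ) ≤ y ^ (k+1) * y := by
        rw [h1]; calc (n:ℝ) ≤ y ^ (k+1+1) := hn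
          _ = y ^ (k+1) * y := by rw [pow_succ]
      have e3 : y * (q.2:ℝ) ≤ y * y ^ (k+1) := by
        calc y * (q.2:ℝ) ≤ y ^ (k+1) * y := le_trans e1 e2
          _ = y * y ^ (k+1) := by ring
      have hq2 : (q.2:ℝ) ≤ y ^ (k+1) := le_of_mul_le_mul_left e3 hy0
      rw [ih q.2 hq2, mul_zero]

lemma main_step (K : ℕ) (hK : 1 ≤ K) (x : ℝ) (hx : 1 ≤ x) (v : ℕ) (hv : 0 < v)
    (z : ℂ) (s t : ℕ → ℕ) (c : ℕ → ℚ)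
    (hzv : ∀ ℓ ∈ Finset.Icc 1 K, (s ℓ : ℂ) + (t ℓ : ℂ) * (-(1:ℂ)/(v:ℂ)) = z)
    (hc : ∀ j, j < K → ∑ ℓ ∈ Finset.Icc 1 K, (c ℓ : ℚ) * ((t ℓ).choose j : ℚ)
      = if j = 0 then 1 else 0)
    (n : ℕ) (hn1 : 1 ≤ n) (hnx : (n:ℝ) ≤ x) :
    tauC z n = ∑ ℓ ∈ Finset.Icc 1 K, (c ℓ : ℂ) * ((T 1 ^ s ℓ * Gle v K x ^ t ℓ) n) := by
  have hn0 : n ≠ 0 := by omega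
  have hv0 : (v:ℂ) ≠ 0 := Nat.cast_ne_zero.mpr hv.ne'
  set y : ℝ := x ^ (1/(K:ℝ)) with hy_def
  have hy : 1 ≤ y := Real.one_le_rpow hx (by positivity)
  have hyx : y ^ K = x := by
    rw [hy_def, ← Real.rpow_natCast (x ^ (1/(K:ℝ))) K, ← Real.rpow_mul (le_trans zero_le_one hx),
      one_div, inv_mul_cancel₀ (Nat.cast_ne_zero.mpr (by omega)), Real.rpow_one]
  set G : ArithmeticFunction ℂ := T (-(1:ℂ)/(v:ℂ)) with hG
  set Gt : ArithmeticFunction ℂ := G - Gle v K x with hGt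
  have hGle : Gle v K x = -Gt + G := by rw [hGt]; ring
  -- Gt vanishes below y
  have hGtv : ∀ m : ℕ, (m:ℝ) ≤ y → (-Gt) m = 0 := by
    intro m hm
    rcases eq_or_ne m 0 with rfl | hm0
    · simp
    · have h1 : Gle v K x m = G m := by
        rw [Gle_apply, if_pos ⟨hm, hm0⟩, hG, T_apply _ hm0]
      have h2 : (-Gt) m = Gle v K x m - G m := by
        have h3 : evalAF m (-Gt) = evalAF m (Gle v K x) - evalAF m G := by
          rw [map_neg, hGt, map_sub]; ring
        exact h3
      rw [h2, h1, sub_self]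
  set w : ℕ → ℂ := fun j => z + (j:ℂ) * ((v:ℂ)⁻¹) with hw
  set A : ℕ → ℂ := fun j => (T (w j) * (-Gt) ^ j) n with hA
  -- step 1+2: expansion
  set N : ℕ := ((Finset.Icc 1 K).sup t) + 1 with hN
  have expand : ∀ ℓ ∈ Finset.Icc 1 K,
      (T 1 ^ s ℓ * Gle v K x ^ t ℓ) n
        = ∑ j ∈ range N, (((t ℓ).choose j : ℕ) : ℂ) * A j := by
    intro ℓ hℓ
    have hfun : T 1 ^ s ℓ * Gle v K x ^ t ℓ
        = ∑ j ∈ range (t ℓ + 1), ((t ℓ).choose j) • (T (w j) * (-Gt) ^ j) := by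
      rw [hGle, add_pow]
      rw [Finset.mul_sum]
      refine Finset.sum_congr rfl fun j hj => ?_
      have hj' : j ≤ t ℓ := by simpa [Nat.lt_succ_iff] using mem_range.mp hj
      have hT : T 1 ^ s ℓ * G ^ (t ℓ - j) = T (w j) := by
        rw [T_pow, hG, T_pow, T_mul]
        congr 1
        have hcast : ((t ℓ - j : ℕ) : ℂ) = (t ℓ : ℂ) - (j:ℂ) := by
          push_cast [Nat.cast_sub hj']; ring
        rw [hcast]
        linear_combination hzv ℓ hℓ
      calc T 1 ^ s ℓ * ((-Gt) ^ j * G ^ (t ℓ - j) * ((t ℓ).choose j : ArithmeticFunction ℂ))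
          = ((t ℓ).choose j : ArithmeticFunction ℂ) * ((T 1 ^ s ℓ * G ^ (t ℓ - j)) * (-Gt) ^ j) := by
            ring
        _ = ((t ℓ).choose j) • (T (w j) * (-Gt) ^ j) := by
            rw [hT, nsmul_eq_mul]
    have happ : (T 1 ^ s ℓ * Gle v K x ^ t ℓ) n
        = ∑ j ∈ range (t ℓ + 1), (((t ℓ).choose j : ℕ):ℂ) * A j := by
      calc (T 1 ^ s ℓ * Gle v K x ^ t ℓ) n
          = evalAF n (T 1 ^ s ℓ * Gle v K x ^ t ℓ) := rfl
        _ = evalAF n (∑ j ∈ range (t ℓ + 1), ((t ℓ).choose j) • (T (w j) * (-Gt) ^ j)) := by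
            rw [hfun]
        _ = ∑ j ∈ range (t ℓ + 1), evalAF n (((t ℓ).choose j) • (T (w j) * (-Gt) ^ j)) :=
            map_sum _ _ _
        _ = ∑ j ∈ range (t ℓ + 1), (((t ℓ).choose j : ℕ):ℂ) * A j := by
            refine Finset.sum_congr rfl fun j _ => ?_
            rw [AddMonoidHom.map_nsmul, nsmul_eq_mul]
            rfl
    rw [happ]
    apply Finset.sum_subset
    · apply Finset.range_subset_range.mpr
      have := Finset.le_sup (f := t) hℓ
      omega
    · intro j hjN hj
      have : t ℓ < j := by
        simp only [mem_range, not_lt] at hj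
        omega
      rw [Nat.choose_eq_zero_of_lt this]
      simp
  -- A j = 0 for K ≤ j
  have hAzero : ∀ j, K ≤ j → A j = 0 := by
    intro j hj
    show (T (w j) * (-Gt) ^ j) n = 0
    rw [ArithmeticFunction.mul_apply]
    apply Finset.sum_eq_zero
    intro q hq
    obtain ⟨hqe, _⟩ := Nat.mem_divisorsAntidiagonal.mp hq
    have hq2n : (q.2:ℝ) ≤ (n:ℝ) := by
      have : q.2 ∣ n := Dvd.intro_left q.1 hqe
      exact_mod_cast Nat.cast_le.mpr (Nat.le_of_dvd (by omega) this)
    have hq2 : (q.2:ℝ) ≤ y ^ j := by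
      calc (q.2:ℝ) ≤ (n:ℝ) := hq2n
        _ ≤ x := hnx
        _ = y ^ K := hyx.symm
        _ ≤ y ^ j := pow_le_pow_right₀ hy hj
    have hj1 : j = (j - 1) + 1 := by omega
    rw [hj1, vanish (-Gt) y hy hGtv (j-1) q.2 (by rw [← hj1]; exact hq2), mul_zero]
  -- A 0 = tauC z n
  have hA0 : A 0 = tauC z n := by
    show (T (w 0) * (-Gt) ^ 0) n = tauC z n
    rw [pow_zero, mul_one]
    have hw0 : w 0 = z := by simp [hw]
    rw [hw0, T_apply _ hn0]
  -- combine
  rw [Finset.sum_congr rfl fun ℓ hℓ => by rw [expand ℓ hℓ]]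
  rw [Finset.sum_congr rfl fun ℓ (hℓ : ℓ ∈ Finset.Icc 1 K) => Finset.mul_sum _ _ _]
  rw [Finset.sum_comm]
  have hterm : ∀ j ∈ range N, (∑ ℓ ∈ Finset.Icc 1 K, (c ℓ:ℂ) * ((((t ℓ).choose j : ℕ):ℂ) * A j))
      = (∑ ℓ ∈ Finset.Icc 1 K, (c ℓ:ℂ) * (((t ℓ).choose j : ℕ):ℂ)) * A j := by
    intro j _
    rw [Finset.sum_mul]
    exact Finset.sum_congr rfl fun ℓ _ => by ring
  rw [Finset.sum_congr rfl hterm]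
  have hcoef : ∀ j, j < K → (∑ ℓ ∈ Finset.Icc 1 K, (c ℓ:ℂ) * (((t ℓ).choose j : ℕ):ℂ))
      = if j = 0 then 1 else 0 := by
    intro j hjK
    have h0 := hc j hjK
    by_cases hj0 : j = 0
    · subst hj0
      rw [if_pos rfl] at h0 ⊢
      have h0c : ((∑ ℓ ∈ Finset.Icc 1 K, (c ℓ:ℚ) * ((t ℓ).choose 0 : ℚ) : ℚ) : ℂ) = 1 := by
        rw [h0]; norm_num
      push_cast at h0c
      exact h0c
    · rw [if_neg hj0] at h0 ⊢
      have h0c : ((∑ ℓ ∈ Finset.Icc 1 K, (c ℓ:ℚ) * ((t ℓ).choose j : ℚ) : ℚ) : ℂ) = 0 := by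
        rw [h0]; norm_num
      push_cast at h0c
      exact h0c
  rw [Finset.sum_eq_single_of_mem 0 (Finset.mem_range.mpr (by omega))]
  · rw [hcoef 0 (by omega), if_pos rfl, one_mul, hA0]
  · intro j hjN hj0
    by_cases hjK : j < K
    · rw [hcoef j hjK, if_neg hj0, zero_mul]
    · rw [hAzero j (by omega), mul_zero]

lemma cast_choose_mul_factorial (n j : ℕ) :
    ((n.choose j : ℚ)) * (Nat.factorial j : ℚ) = ∏ i ∈ range j, ((n:ℚ) - i) := by
  induction j with
  | zero => simp
  | succ j ih =>
    rw [Finset.prod_range_succ, ← ih]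
    have h1 : n.choose (j+1) * (j+1) = n.choose j * (n - j) := Nat.choose_succ_right_eq n j
    have key : ((n.choose (j+1):ℚ)) * ((j:ℚ)+1) = (n.choose j:ℚ) * ((n:ℚ) - j) := by
      rcases le_or_gt j n with h | h
      · have h2 := congrArg (fun m : ℕ => (m:ℚ)) h1
        push_cast [Nat.cast_sub h] at h2
        exact h2
      · rw [Nat.choose_eq_zero_of_lt (by omega), Nat.choose_eq_zero_of_lt (by omega)]
        simp
    calc (n.choose (j+1):ℚ) * (((j+1).factorial):ℚ)
        = ((n.choose (j+1):ℚ) * ((j:ℚ)+1)) * (j.factorial:ℚ) := by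
          rw [Nat.factorial_succ]; push_cast; ring
      _ = ((n.choose j:ℚ) * ((n:ℚ) - j)) * (j.factorial:ℚ) := by rw [key]
      _ = (n.choose j:ℚ) * (j.factorial:ℚ) * ((n:ℚ) - j) := by ring

lemma nat_abs_sub_ge_one {p q : ℕ} (h : p ≠ q) : (1:ℚ) ≤ |(p:ℚ) - q| := by
  have hz : ((p:ℤ) - q) ≠ 0 := sub_ne_zero.mpr (by exact_mod_cast h)
  have h1 : (1:ℤ) ≤ |(p:ℤ) - q| := Int.one_le_abs hz
  have h3 : (1:ℚ) ≤ ((|(p:ℤ) - q| : ℤ) : ℚ) := by exact_mod_cast h1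
  have h2 : ((|(p:ℤ) - q| : ℤ) : ℚ) = |(p:ℚ) - q| := by push_cast; norm_num
  rwa [h2] at h3

lemma coeffs_exist (K r : ℕ) (hK : 1 ≤ K) (u v : ℕ) (huv : u < v) (b : ℕ → ℕ)
    (hb1 : ∀ ℓ ∈ Finset.Icc 1 K, 1 ≤ b ℓ) (hbK : ∀ ℓ ∈ Finset.Icc 1 K, b ℓ ≤ K + r)
    (hbinj : ∀ ℓ ∈ Finset.Icc 1 K, ∀ k ∈ Finset.Icc 1 K, k ≠ ℓ → b k ≠ b ℓ) :
    ∃ c : ℕ → ℚ,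
      (∀ ℓ ∈ Finset.Icc 1 K, |(c ℓ : ℝ)| ≤ ((K + r + 1 : ℕ):ℝ) ^ K) ∧
      (∀ j, j < K → ∑ ℓ ∈ Finset.Icc 1 K, c ℓ * (((b ℓ * v - u).choose j : ℕ) : ℚ)
        = if j = 0 then 1 else 0) := by
  have hv : 0 < v := by omega
  set s : Finset ℕ := Finset.Icc 1 K with hs
  set a : ℕ → ℚ := fun ℓ => ((b ℓ * v - u : ℕ) : ℚ) with ha
  have hacast : ∀ ℓ ∈ s, a ℓ = (b ℓ:ℚ) * v - u := by
    intro ℓ hℓ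
    have hu : u ≤ b ℓ * v := le_trans huv.le (le_trans (Nat.le_mul_of_pos_left v (hb1 ℓ hℓ)) (le_refl _))
    rw [ha]
    push_cast [Nat.cast_sub hu]
    ring
  have hvpos : (0:ℚ) < v := by exact_mod_cast hv
  have hdiff : ∀ ℓ ∈ s, ∀ k ∈ s, k ≠ ℓ → (v:ℚ) ≤ |a k - a ℓ| := by
    intro ℓ hℓ k hk hkl
    rw [hacast ℓ hℓ, hacast k hk]
    have : (b k:ℚ) * v - u - ((b ℓ:ℚ) * v - u) = ((b k:ℚ) - b ℓ) * v := by ring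
    rw [this, abs_mul, abs_of_nonneg (by positivity : (0:ℚ) ≤ (v:ℚ))]
    have h1 : (1:ℚ) ≤ |(b k:ℚ) - b ℓ| := nat_abs_sub_ge_one (hbinj ℓ hℓ k hk hkl)
    nlinarith [hvpos]
  have hane : ∀ ℓ ∈ s, ∀ k ∈ s, k ≠ ℓ → a k ≠ a ℓ := by
    intro ℓ hℓ k hk hkl h
    have := hdiff ℓ hℓ k hk hkl
    rw [h, sub_self, abs_zero] at this
    linarith
  have hvs : Set.InjOn a s := by
    intro p hp q hq hpq
    by_contra h
    exact hane q (by exact_mod_cast hq) p (by exact_mod_cast hp) h hpq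
  set c : ℕ → ℚ := fun ℓ => ∏ k ∈ s.erase ℓ, a k / (a k - a ℓ) with hc
  refine ⟨c, ?_, ?_⟩
  · -- bound
    intro ℓ hℓ
    have hb : |c ℓ| ≤ ((K + r + 1 : ℕ):ℚ) ^ K := by
      rw [hc]
      simp only []
      rw [Finset.abs_prod]
      have hfac : ∀ k ∈ s.erase ℓ, |a k / (a k - a ℓ)| ≤ ((K + r + 1 : ℕ):ℚ) := by
        intro k hk
        obtain ⟨hkl, hks⟩ := Finset.mem_erase.mp hk
        have hden : (v:ℚ) ≤ |a k - a ℓ| := hdiff ℓ hℓ k hks hkl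
        have hdenpos : (0:ℚ) < |a k - a ℓ| := lt_of_lt_of_le hvpos hden
        rw [abs_div]
        rw [div_le_iff₀ hdenpos]
        have hnum : |a k| ≤ ((K + r:ℕ):ℚ) * v := by
          rw [hacast k hks, abs_of_nonneg]
          · have : (b k:ℚ) ≤ ((K + r:ℕ):ℚ) := by exact_mod_cast hbK k hks
            nlinarith [Nat.cast_nonneg (α := ℚ) u]
          · have hu : (u:ℚ) ≤ (b k:ℚ) * v := by
              have : u ≤ b k * v := le_trans huv.le (Nat.le_mul_of_pos_left v (hb1 k hks))
              exact_mod_cast this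
            linarith
        calc |a k| ≤ ((K + r:ℕ):ℚ) * v := hnum
          _ ≤ ((K + r + 1:ℕ):ℚ) * v := by
              have : ((K + r:ℕ):ℚ) ≤ ((K + r + 1:ℕ):ℚ) := by exact_mod_cast Nat.le_succ _
              nlinarith
          _ ≤ ((K + r + 1:ℕ):ℚ) * |a k - a ℓ| := by
              have h1 : (0:ℚ) ≤ ((K + r + 1:ℕ):ℚ) := by positivity
              nlinarith
      calc ∏ k ∈ s.erase ℓ, |a k / (a k - a ℓ)|
          ≤ ∏ _k ∈ s.erase ℓ, ((K + r + 1 : ℕ):ℚ) :=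
            Finset.prod_le_prod (fun k _ => abs_nonneg _) hfac
        _ = ((K + r + 1 : ℕ):ℚ) ^ (s.erase ℓ).card := Finset.prod_const _
        _ ≤ ((K + r + 1 : ℕ):ℚ) ^ K := by
            apply pow_le_pow_right₀ (by exact_mod_cast Nat.le_add_left 1 (K + r))
            calc (s.erase ℓ).card ≤ s.card := Finset.card_erase_le
              _ = K := by rw [hs, Nat.card_Icc]; omega
    have : |(c ℓ : ℝ)| = ((|c ℓ| : ℚ) : ℝ) := by rw [Rat.cast_abs]
    rw [this]
    exact_mod_cast hb
  · -- interpolation identity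
    intro j hjK
    set f : Polynomial ℚ := ∏ i ∈ range j, (X - C (i:ℚ)) with hf
    have hmon : ∀ i ∈ range j, (X - C (i:ℚ)) ≠ 0 := fun i _ => Polynomial.X_sub_C_ne_zero _
    have hnatdeg : f.natDegree = j := by
      rw [hf, Polynomial.natDegree_prod _ _ hmon]
      have h9 : ∑ i ∈ range j, (X - C (i:ℚ)).natDegree = ∑ _i ∈ range j, 1 :=
        Finset.sum_congr rfl fun i _ => Polynomial.natDegree_X_sub_C (i:ℚ)
      rw [h9]
      simp
    have hfne : f ≠ 0 := by
      rw [hf]; exact Finset.prod_ne_zero_iff.mpr hmon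
    have hcard : s.card = K := by rw [hs, Nat.card_Icc]; omega
    have hlt : f.degree < s.card := by
      rw [Polynomial.degree_eq_natDegree hfne, hnatdeg, hcard]
      exact_mod_cast hjK
    have hinterp := Lagrange.eq_interpolate (v := a) hvs hlt
    have heval := congrArg (Polynomial.eval 0) hinterp
    rw [Lagrange.interpolate_apply, Polynomial.eval_finset_sum] at heval
    have heval2 : f.eval 0 = ∑ ℓ ∈ s, f.eval (a ℓ) * (Lagrange.basis s a ℓ).eval 0 := by
      rw [heval]
      exact Finset.sum_congr rfl fun ℓ _ => by rw [Polynomial.eval_mul, Polynomial.eval_C]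
    have hbasis : ∀ ℓ ∈ s, (Lagrange.basis s a ℓ).eval 0 = c ℓ := by
      intro ℓ hℓ
      rw [Lagrange.basis, Polynomial.eval_prod, hc]
      refine Finset.prod_congr rfl fun k hk => ?_
      obtain ⟨hkl, hks⟩ := Finset.mem_erase.mp hk
      have hne : a ℓ - a k ≠ 0 := sub_ne_zero.mpr (Ne.symm (hane ℓ hℓ k hks hkl))
      have hne' : a k - a ℓ ≠ 0 := sub_ne_zero.mpr (hane ℓ hℓ k hks hkl)
      rw [Lagrange.basisDivisor, Polynomial.eval_mul, Polynomial.eval_C, Polynomial.eval_sub,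
        Polynomial.eval_X, Polynomial.eval_C]
      field_simp
      ring
    have hevalf : ∀ ℓ ∈ s, f.eval (a ℓ) = (((b ℓ * v - u).choose j : ℕ) : ℚ) * (Nat.factorial j : ℚ) := by
      intro ℓ hℓ
      rw [hf, Polynomial.eval_prod]
      rw [cast_choose_mul_factorial]
      exact Finset.prod_congr rfl fun i _ => by
        rw [Polynomial.eval_sub, Polynomial.eval_X, Polynomial.eval_C, ha]
    have heval0 : f.eval 0 = if j = 0 then 1 else 0 := by
      rcases Nat.eq_zero_or_pos j with rfl | hj
      · simp [hf]
      · rw [if_neg (by omega), hf, Polynomial.eval_prod]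
        apply Finset.prod_eq_zero (Finset.mem_range.mpr hj)
        simp
    have hfin : (if j = 0 then (1:ℚ) else 0)
        = ∑ ℓ ∈ s, ((((b ℓ * v - u).choose j : ℕ) : ℚ) * (Nat.factorial j : ℚ)) * c ℓ := by
      rw [← heval0, heval2]
      exact Finset.sum_congr rfl fun ℓ hℓ => by rw [hevalf ℓ hℓ, hbasis ℓ hℓ]
    have hjfac : (Nat.factorial j : ℚ) ≠ 0 := by exact_mod_cast Nat.factorial_ne_zero j
    have goal2 : (∑ ℓ ∈ s, c ℓ * (((b ℓ * v - u).choose j : ℕ) : ℚ)) * (Nat.factorial j : ℚ)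
        = (if j = 0 then (1:ℚ) else 0) * (Nat.factorial j : ℚ) := by
      rw [Finset.sum_mul]
      have : (if j = 0 then (1:ℚ) else 0) * (Nat.factorial j : ℚ)
          = if j = 0 then (1:ℚ) else 0 := by
        rcases eq_or_ne j 0 with rfl | hj
        · simp
        · simp [hj]
      rw [this, hfin]
      exact Finset.sum_congr rfl fun ℓ _ => by ring
    exact mul_right_cancel₀ hjfac goal2

lemma inner_sum (v K : ℕ) (x : ℝ) (a b n : ℕ) (hn : n ≠ 0) :
    (∑ p ∈ (Fintype.piFinset fun _ : Fin a => n.divisors) ×ˢ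
        (Fintype.piFinset fun _ : Fin b => n.divisors),
      if ((∏ i, p.1 i) * (∏ j, p.2 j) = n ∧ ∀ j, ((p.2 j : ℕ):ℝ) ≤ x ^ (1/(K:ℝ))) then
        ∏ j, tauC (-(1:ℂ)/(v:ℂ)) (p.2 j) else 0)
    = (T 1 ^ a * Gle v K x ^ b) n := by
  rw [pow_mul_pow_apply _ _ a b n hn]
  refine Finset.sum_congr rfl fun p hp => ?_
  obtain ⟨hp1, hp2⟩ := Finset.mem_product.mp hp
  by_cases hprod : (∏ i, p.1 i) * (∏ j, p.2 j) = n
  · have hT1 : (∏ i, T 1 (p.1 i)) = 1 := Finset.prod_eq_one fun i _ =>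
      T_one_apply (ne_of_gt (Nat.pos_of_mem_divisors (Fintype.mem_piFinset.mp hp1 i)))
    have hGleV : ∀ j, Gle v K x (p.2 j)
        = if ((p.2 j:ℝ) ≤ x ^ (1/(K:ℝ))) then tauC (-(1:ℂ)/(v:ℂ)) (p.2 j) else 0 := by
      intro j
      have h0 : p.2 j ≠ 0 := ne_of_gt (Nat.pos_of_mem_divisors (Fintype.mem_piFinset.mp hp2 j))
      rw [Gle_apply]
      by_cases hle : ((p.2 j:ℝ) ≤ x ^ (1/(K:ℝ)))
      · rw [if_pos ⟨hle, h0⟩, if_pos hle]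
      · rw [if_neg (fun hcon => hle hcon.1), if_neg hle]
    by_cases hall : ∀ j, ((p.2 j:ℝ)) ≤ x ^ (1/(K:ℝ))
    · rw [if_pos ⟨hprod, hall⟩, if_pos hprod, hT1, one_mul]
      exact Finset.prod_congr rfl fun j _ => by rw [hGleV j, if_pos (hall j)]
    · push_neg at hall
      obtain ⟨j0, hj0⟩ := hall
      rw [if_neg (fun hcon => absurd (hcon.2 j0) (not_le.mpr hj0)), if_pos hprod, hT1, one_mul]
      exact (Finset.prod_eq_zero (Finset.mem_univ j0)
        (by rw [hGleV j0, if_neg (not_le.mpr hj0)])).symm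
  · rw [if_neg (fun hcon => hprod hcon.1), if_neg hprod]

end HB

open HB in
/-- **Theorem 3.2** (combinatorial identity of Heath-Brown's type for `τ_{±r + u/v}`):
for `n ≤ x`, `τ_{r+u/v}(n)` (resp. `τ_{-r+u/v}(n)` for `r ≥ 1`) is a bounded rational linear
combination of sums over factorizations of `n` with the prescribed numbers of unconstrained
factors `mᵢ` and factors `nⱼ ≤ x^{1/K}` weighted by `τ_{-1/v}`. -/
theorem heath_brown_identity_tau_rational (K r : ℕ) (hK : 1 ≤ K) :
    ∃ Cb : ℝ, 0 < Cb ∧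
      ∀ u v : ℕ, u < v → ∀ x : ℝ, 1 ≤ x →
        ∃ cp cm : ℕ → ℚ,
          (∀ ℓ ∈ Finset.Icc 1 K, |(cp ℓ : ℝ)| ≤ Cb ∧ |(cm ℓ : ℝ)| ≤ Cb) ∧
          (∀ n : ℕ, 1 ≤ n → (n : ℝ) ≤ x →
            tauC ((r : ℂ) + (u : ℂ) / (v : ℂ)) n =
              ∑ ℓ ∈ Finset.Icc 1 K, (cp ℓ : ℂ) *
                ∑ p ∈ (Fintype.piFinset fun _ : Fin (ℓ + r) => n.divisors) ×ˢ
                    (Fintype.piFinset fun _ : Fin (ℓ * v - u) => n.divisors),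
                  if (∏ i, p.1 i) * (∏ j, p.2 j) = n ∧
                      (∀ j, (p.2 j : ℝ) ≤ x ^ (1 / (K : ℝ))) then
                    ∏ j, tauC (-(1 : ℂ) / (v : ℂ)) (p.2 j)
                  else 0) ∧
          (1 ≤ r → ∀ n : ℕ, 1 ≤ n → (n : ℝ) ≤ x →
            tauC (-(r : ℂ) + (u : ℂ) / (v : ℂ)) n =
              ∑ ℓ ∈ Finset.Icc 1 K, (cm ℓ : ℂ) *
                ∑ p ∈ (Fintype.piFinset fun _ : Fin (ℓ - 1) => n.divisors) ×ˢ
                    (Fintype.piFinset fun _ : Fin (ℓ * v + (r - 1) * v - u) => n.divisors),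
                  if (∏ i, p.1 i) * (∏ j, p.2 j) = n ∧
                      (∀ j, (p.2 j : ℝ) ≤ x ^ (1 / (K : ℝ))) then
                    ∏ j, tauC (-(1 : ℂ) / (v : ℂ)) (p.2 j)
                  else 0) := by
  refine ⟨((K + r + 1 : ℕ):ℝ) ^ K, by positivity, ?_⟩
  intro u v huv x hx
  have hv : 0 < v := by omega
  have hvC : (v:ℂ) ≠ 0 := Nat.cast_ne_zero.mpr hv.ne'
  obtain ⟨cp, hcpB, hcp⟩ := coeffs_exist K r hK u v huv (fun ℓ => ℓ)
    (fun ℓ hℓ => (Finset.mem_Icc.mp hℓ).1)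
    (fun ℓ hℓ => by have := (Finset.mem_Icc.mp hℓ).2; show ℓ ≤ K + r; omega)
    (fun ℓ _ k _ h => h)
  have hplus : ∀ n : ℕ, 1 ≤ n → (n : ℝ) ≤ x →
      tauC ((r : ℂ) + (u : ℂ) / (v : ℂ)) n =
        ∑ ℓ ∈ Finset.Icc 1 K, (cp ℓ : ℂ) *
          ∑ p ∈ (Fintype.piFinset fun _ : Fin (ℓ + r) => n.divisors) ×ˢ
              (Fintype.piFinset fun _ : Fin (ℓ * v - u) => n.divisors),
            if (∏ i, p.1 i) * (∏ j, p.2 j) = n ∧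
                (∀ j, (p.2 j : ℝ) ≤ x ^ (1 / (K : ℝ))) then
              ∏ j, tauC (-(1 : ℂ) / (v : ℂ)) (p.2 j)
            else 0 := by
    intro n hn1 hnx
    have hn0 : n ≠ 0 := by omega
    have hzv : ∀ ℓ ∈ Finset.Icc 1 K,
        (((fun ℓ => ℓ + r) ℓ : ℕ) : ℂ) + (((fun ℓ => ℓ * v - u) ℓ : ℕ) : ℂ) * (-(1:ℂ)/(v:ℂ))
          = (r : ℂ) + (u : ℂ) / (v : ℂ) := by
      intro ℓ hℓ
      have hℓ1 : 1 ≤ ℓ := (Finset.mem_Icc.mp hℓ).1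
      have hu : u ≤ ℓ * v := le_trans huv.le (Nat.le_mul_of_pos_left v hℓ1)
      simp only []
      push_cast [Nat.cast_sub hu]
      field_simp
      ring
    have hms := main_step K hK x hx v hv ((r : ℂ) + (u : ℂ) / (v : ℂ))
      (fun ℓ => ℓ + r) (fun ℓ => ℓ * v - u) cp hzv (fun j hj => hcp j hj) n hn1 hnx
    rw [hms]
    refine Finset.sum_congr rfl fun ℓ hℓ => ?_
    rw [← inner_sum v K x (ℓ + r) (ℓ * v - u) n hn0]
  rcases Nat.eq_zero_or_pos r with hr0 | hr1
  · refine ⟨cp, cp, fun ℓ hℓ => ⟨hcpB ℓ hℓ, hcpB ℓ hℓ⟩, hplus, ?_⟩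
    intro h1r
    omega
  · obtain ⟨cm, hcmB, hcm⟩ := coeffs_exist K r hK u v huv (fun ℓ => ℓ + r - 1)
      (fun ℓ hℓ => by have := (Finset.mem_Icc.mp hℓ).1; show 1 ≤ ℓ + r - 1; omega)
      (fun ℓ hℓ => by have := (Finset.mem_Icc.mp hℓ).2; show ℓ + r - 1 ≤ K + r; omega)
      (fun ℓ hℓ k hk h => by
        show k + r - 1 ≠ ℓ + r - 1
        have hk1 : 1 ≤ k := (Finset.mem_Icc.mp hk).1
        have hl1 : 1 ≤ ℓ := (Finset.mem_Icc.mp hℓ).1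
        omega)
    refine ⟨cp, cm, fun ℓ hℓ => ⟨hcpB ℓ hℓ, hcmB ℓ hℓ⟩, hplus, ?_⟩
    intro _ n hn1 hnx
    have hn0 : n ≠ 0 := by omega
    have hbt : ∀ ℓ : ℕ, (ℓ + r - 1) * v = ℓ * v + (r - 1) * v := by
      intro ℓ
      have h : ℓ + r - 1 = ℓ + (r - 1) := by omega
      rw [h, Nat.add_mul]
    have hzv : ∀ ℓ ∈ Finset.Icc 1 K,
        (((fun ℓ => ℓ - 1) ℓ : ℕ) : ℂ)
          + (((fun ℓ => ℓ * v + (r - 1) * v - u) ℓ : ℕ) : ℂ) * (-(1:ℂ)/(v:ℂ))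
          = -(r : ℂ) + (u : ℂ) / (v : ℂ) := by
      intro ℓ hℓ
      have hℓ1 : 1 ≤ ℓ := (Finset.mem_Icc.mp hℓ).1
      have hu : u ≤ ℓ * v + (r - 1) * v :=
        le_trans huv.le (le_trans (Nat.le_mul_of_pos_left v hℓ1) (Nat.le_add_right _ _))
      simp only []
      push_cast [Nat.cast_sub hu, Nat.cast_sub hℓ1, Nat.cast_sub hr1]
      field_simp
      ring
    have hcm' : ∀ j, j < K → ∑ ℓ ∈ Finset.Icc 1 K,
        cm ℓ * (((ℓ * v + (r - 1) * v - u).choose j : ℕ) : ℚ) = if j = 0 then 1 else 0 := by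
      intro j hj
      have := hcm j hj
      refine Eq.trans (Finset.sum_congr rfl fun ℓ _ => ?_) this
      rw [hbt ℓ]
    have hms := main_step K hK x hx v hv (-(r : ℂ) + (u : ℂ) / (v : ℂ))
      (fun ℓ => ℓ - 1) (fun ℓ => ℓ * v + (r - 1) * v - u) cm hzv hcm' n hn1 hnx
    rw [hms]
    refine Finset.sum_congr rfl fun ℓ hℓ => ?_
    rw [← inner_sum v K x (ℓ - 1) (ℓ * v + (r - 1) * v - u) n hn0]

end
end

section
/- Let K be a positive integer and A, x ≥ 1. For every z ∈ ℂ with |z| ≤ A there exist complex numbers c_ℓ (0 ≤ ℓ < K), namely c_ℓ = (−1)^ℓ·Σ_{ℓ ≤ k < K} (−1)^k·C(z,k)·C(k,ℓ), satisfying |c_ℓ| = O_{K,A}(1), such that for every multiplicative function f and every n ≤ x one has f^{(∗z)}(n) = Σ_{0 ≤ ℓ < K} c_ℓ · Σ_{n = n₁n₂, P⁺(n₁) ≤ x^{1/K}} f^{(∗(z−ℓ))}(n₁)·f^{(∗ℓ)}(n₂). -/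
open scoped Classical BigOperators

noncomputable section

/-- Generalized binomial coefficient `C(z, r) = z(z-1)⋯(z-r+1)/r!`. -/
def cbinom (z : ℂ) (r : ℕ) : ℂ := (∏ i ∈ Finset.range r, (z - i)) / (Nat.factorial r)

/-- The `z`-fold Dirichlet convolution power `f^{(∗z)}` of a multiplicative function `f`:
the multiplicative function with
`f^{(∗z)}(p^ν) = ∑_{1≤r≤ν} C(z,r) ∑_{λ₁+⋯+λ_r=ν, λᵢ≥1} f(p^{λ₁})⋯f(p^{λ_r})`. -/
def zconv (f : ℕ → ℂ) (z : ℂ) (n : ℕ) : ℂ :=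
  n.factorization.prod fun p ν =>
    ∑ r ∈ Finset.Icc 1 ν, cbinom z r *
      ∑ lam ∈ (Fintype.piFinset fun _ : Fin r => Finset.Icc 1 ν).filter
          (fun lam => ∑ i, lam i = ν),
        ∏ i, f (p ^ lam i)

/-- `P⁺(n)`, the largest prime factor of `n`, with `P⁺(1) = 1`. -/
def Pplus (n : ℕ) : ℕ := if n ≤ 1 then 1 else n.primeFactors.sup id

/-- The coefficients `c_ℓ = (-1)^ℓ ∑_{ℓ ≤ k < K} (-1)^k C(z,k) C(k,ℓ)` of Theorem 3.3. -/
def linnikCoeff (z : ℂ) (K ℓ : ℕ) : ℂ :=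
  (-1) ^ ℓ * ∑ k ∈ Finset.Ico ℓ K, (-1) ^ k * cbinom z k * (k.choose ℓ : ℂ)

def Acomp (f : ℕ → ℂ) (p : ℕ) (r ν : ℕ) : ℂ :=
  ∑ lam ∈ (Fintype.piFinset fun _ : Fin r => Finset.Icc 1 ν).filter
      (fun lam => ∑ i, lam i = ν),
    ∏ i, f (p ^ lam i)

def Gp (f : ℕ → ℂ) (z : ℂ) (p ν : ℕ) : ℂ :=
  ∑ r ∈ Finset.range (ν + 1), cbinom z r * Acomp f p r ν

lemma cbinom_zero (z : ℂ) : cbinom z 0 = 1 := by simp [cbinom]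

lemma cbinom_nat_zero (r : ℕ) (hr : r ≠ 0) : cbinom 0 r = 0 := by
  simp only [cbinom, div_eq_zero_iff]
  left
  rw [Finset.prod_eq_zero_iff]
  exact ⟨0, by simpa using Nat.pos_of_ne_zero hr, by simp⟩

lemma Acomp_zero_left (f : ℕ → ℂ) (p ν : ℕ) :
    Acomp f p 0 ν = if ν = 0 then 1 else 0 := by
  unfold Acomp
  rcases eq_or_ne ν 0 with h | h
  · simp [h]
  · simp [h, Ne.symm h]

lemma Acomp_eq_zero_of_lt (f : ℕ → ℂ) (p : ℕ) {r ν : ℕ} (h : ν < r) :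
    Acomp f p r ν = 0 := by
  unfold Acomp
  rw [Finset.sum_eq_zero]
  intro lam hlam
  exfalso
  simp only [Finset.mem_filter, Fintype.mem_piFinset, Finset.mem_Icc] at hlam
  have h1 : ∀ i, 1 ≤ lam i := fun i => (hlam.1 i).1
  have : (r : ℕ) ≤ ∑ i : Fin r, lam i := by
    calc (r:ℕ) = ∑ _i : Fin r, 1 := by simp
    _ ≤ ∑ i : Fin r, lam i := Finset.sum_le_sum (fun i _ => h1 i)
  omega

lemma Gp_zero_right (f : ℕ → ℂ) (z : ℂ) (p : ℕ) : Gp f z p 0 = 1 := by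
  simp [Gp, Acomp_zero_left, cbinom_zero]

lemma Gp_eq_local (f : ℕ → ℂ) (z : ℂ) (p ν : ℕ) (hν : ν ≠ 0) :
    Gp f z p ν =
      ∑ r ∈ Finset.Icc 1 ν, cbinom z r *
        ∑ lam ∈ (Fintype.piFinset fun _ : Fin r => Finset.Icc 1 ν).filter
            (fun lam => ∑ i, lam i = ν),
          ∏ i, f (p ^ lam i) := by
  have : Finset.range (ν + 1) = insert 0 (Finset.Icc 1 ν) := by
    ext a; simp [Finset.mem_range, Finset.mem_Icc]; omega
  rw [Gp, this, Finset.sum_insert (by simp)]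
  rw [Acomp_zero_left]
  simp [hν, Acomp]

lemma zconv_eq_prod (f : ℕ → ℂ) (z : ℂ) (n : ℕ) :
    zconv f z n = ∏ p ∈ n.primeFactors, Gp f z p (n.factorization p) := by
  rw [zconv, Finsupp.prod, Nat.support_factorization]
  refine Finset.prod_congr rfl (fun p hp => ?_)
  rw [Gp_eq_local]
  have := Nat.Prime.factorization_pos_of_dvd (Nat.prime_of_mem_primeFactors hp)
    (by exact fun h => by simp [h] at hp) (Nat.dvd_of_mem_primeFactors hp)
  omega

lemma zconv_one (f : ℕ → ℂ) (z : ℂ) : zconv f z 1 = 1 := by simp [zconv]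

lemma zconv_zero (f : ℕ → ℂ) (z : ℂ) : zconv f z 0 = 1 := by simp [zconv]

lemma zconv_mul (f : ℕ → ℂ) (z : ℂ) {m n : ℕ} (h : Nat.Coprime m n) :
    zconv f z (m * n) = zconv f z m * zconv f z n := by
  rcases eq_or_ne m 0 with rfl | hm
  · have : n = 1 := by simpa [Nat.Coprime] using h
    simp [this, zconv_zero, zconv_one]
  rcases eq_or_ne n 0 with rfl | hn
  · have : m = 1 := by simpa [Nat.Coprime] using h
    simp [this, zconv_zero, zconv_one]
  unfold zconv
  rw [Nat.factorization_mul_of_coprime h, Finsupp.prod_add_index_of_disjoint]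
  rw [Nat.support_factorization, Nat.support_factorization]
  exact Nat.Coprime.disjoint_primeFactors h

lemma zconv_prime_pow (f : ℕ → ℂ) (z : ℂ) {p : ℕ} (hp : p.Prime) (ν : ℕ) (hν : ν ≠ 0) :
    zconv f z (p ^ ν) =
      ∑ r ∈ Finset.Icc 1 ν, cbinom z r *
        ∑ lam ∈ (Fintype.piFinset fun _ : Fin r => Finset.Icc 1 ν).filter
            (fun lam => ∑ i, lam i = ν),
          ∏ i, f (p ^ lam i) := by
  unfold zconv
  rw [hp.factorization_pow]
  rw [Finsupp.prod, Finsupp.support_single_ne_zero _ hν, Finset.prod_singleton,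
    Finsupp.single_eq_same]

lemma compSet_cap {r ν M : ℕ} (h : ν ≤ M) :
    (Fintype.piFinset fun _ : Fin r => Finset.Icc 1 M).filter (fun lam => ∑ i, lam i = ν)
      = (Fintype.piFinset fun _ : Fin r => Finset.Icc 1 ν).filter
          (fun lam => ∑ i, lam i = ν) := by
  ext lam
  simp only [Finset.mem_filter, Fintype.mem_piFinset, Finset.mem_Icc]
  constructor
  · rintro ⟨h1, h2⟩
    refine ⟨fun i => ⟨(h1 i).1, ?_⟩, h2⟩
    calc lam i ≤ ∑ j, lam j := Finset.single_le_sum (fun j _ => Nat.zero_le _) (Finset.mem_univ i)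
    _ = ν := h2
  · rintro ⟨h1, h2⟩
    exact ⟨fun i => ⟨(h1 i).1, le_trans (h1 i).2 h⟩, h2⟩

lemma Acomp_peel (f : ℕ → ℂ) (p : ℕ) (r ν : ℕ) :
    Acomp f p (r + 1) ν = ∑ a ∈ Finset.Icc 1 ν, f (p ^ a) * Acomp f p r (ν - a) := by
  unfold Acomp
  simp_rw [Finset.mul_sum]
  rw [Finset.sum_sigma' (Finset.Icc 1 ν)
    (fun a => (Fintype.piFinset fun _ : Fin r => Finset.Icc 1 (ν - a)).filter
      (fun lam => ∑ i, lam i = ν - a))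
    (fun a lam => f (p ^ a) * ∏ i, f (p ^ lam i))]
  refine Finset.sum_nbij' (i := fun lam => (⟨lam 0, Fin.tail lam⟩ :
       (_ : ℕ) × (Fin r → ℕ)))
    (j := fun x => Fin.cons x.1 x.2) ?_ ?_ ?_ ?_ ?_
  · intro lam hlam
    simp only [Finset.mem_filter, Fintype.mem_piFinset, Finset.mem_Icc] at hlam
    obtain ⟨h1, h2⟩ := hlam
    have hsum : lam 0 + ∑ i : Fin r, Fin.tail lam i = ν := by
      rw [← h2, Fin.sum_univ_succ]; rfl
    have h0ν : lam 0 ≤ ν := by omega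
    simp only [Finset.mem_sigma, Finset.mem_filter, Fintype.mem_piFinset, Finset.mem_Icc]
    refine ⟨⟨(h1 0).1, h0ν⟩, fun i => ⟨(h1 i.succ).1, ?_⟩, by omega⟩
    have : Fin.tail lam i ≤ ∑ j : Fin r, Fin.tail lam j :=
      Finset.single_le_sum (fun j _ => Nat.zero_le _) (Finset.mem_univ i)
    omega
  · intro x hx
    simp only [Finset.mem_sigma, Finset.mem_filter, Fintype.mem_piFinset, Finset.mem_Icc] at hx
    obtain ⟨hx1, hx2, hx3⟩ := hx
    simp only [Finset.mem_filter, Fintype.mem_piFinset, Finset.mem_Icc]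
    constructor
    · intro i
      refine Fin.cases ?_ (fun j => ?_) i
      · simpa using hx1
      · simp only [Fin.cons_succ]
        exact ⟨(hx2 j).1, le_trans (hx2 j).2 (Nat.sub_le _ _)⟩
    · rw [Fin.sum_univ_succ]
      simp only [Fin.cons_zero, Fin.cons_succ]
      have : x.1 ≤ ν := hx1.2
      omega
  · intro lam _; exact Fin.cons_self_tail lam
  · intro x _
    ext1
    · simp
    · simp [Fin.tail_cons]
  · intro lam _
    rw [Fin.prod_univ_succ]
    rfl

lemma cbinom_succ_succ (w : ℂ) (r : ℕ) :
    cbinom (w + 1) (r + 1) = cbinom w (r + 1) + cbinom w r := by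
  unfold cbinom
  have h1 : (∏ i ∈ Finset.range (r+1), (w + 1 - (i:ℕ)))
      = (w + 1) * ∏ i ∈ Finset.range r, (w - (i:ℕ)) := by
    rw [Finset.prod_range_succ']
    push_cast
    rw [sub_zero, mul_comm]
    congr 1
    refine Finset.prod_congr rfl (fun i _ => by push_cast; ring)
  have h2 : (∏ i ∈ Finset.range (r+1), (w - (i:ℕ)))
      = (∏ i ∈ Finset.range r, (w - (i:ℕ))) * (w - r) := Finset.prod_range_succ _ _
  have hr1 : ((r+1).factorial : ℂ) ≠ 0 := Nat.cast_ne_zero.2 (Nat.factorial_ne_zero _)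
  have hr0 : ((r).factorial : ℂ) ≠ 0 := Nat.cast_ne_zero.2 (Nat.factorial_ne_zero _)
  rw [h1, h2, Nat.factorial_succ]
  have hr2 : ((r : ℂ) + 1) ≠ 0 := by
    have := Nat.cast_add_one_ne_zero (R := ℂ) r
    simpa using this
  push_cast
  field_simp
  ring

lemma Gp_succ (f : ℕ → ℂ) (hf1 : f 1 = 1) (w : ℂ) (p ν : ℕ) :
    Gp f (w + 1) p ν = ∑ a ∈ Finset.range (ν + 1), f (p ^ a) * Gp f w p (ν - a) := by
  have hGext : ∀ a, a ≤ ν → Gp f w p (ν - a)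
      = ∑ s ∈ Finset.range (ν + 1), cbinom w s * Acomp f p s (ν - a) := by
    intro a ha
    rw [Gp]
    refine Finset.sum_subset (by intro s hs; simp only [Finset.mem_range] at *; omega) ?_
    intro s hs hns
    simp only [Finset.mem_range] at hs hns
    rw [Acomp_eq_zero_of_lt f p (by omega), mul_zero]
  have hsplit : Finset.range (ν + 1) = insert 0 (Finset.Icc 1 ν) := by
    ext a; simp only [Finset.mem_range, Finset.mem_insert, Finset.mem_Icc]; omega
  -- RHS computation
  have hRHS : ∑ a ∈ Finset.range (ν + 1), f (p ^ a) * Gp f w p (ν - a)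
      = Gp f w p ν + ∑ s ∈ Finset.range (ν + 1), cbinom w s * Acomp f p (s + 1) ν := by
    conv_lhs => rw [hsplit]
    rw [Finset.sum_insert (by simp)]
    rw [pow_zero, hf1, one_mul, Nat.sub_zero]
    congr 1
    have : ∀ a ∈ Finset.Icc 1 ν, f (p ^ a) * Gp f w p (ν - a)
        = ∑ s ∈ Finset.range (ν + 1), cbinom w s * (f (p ^ a) * Acomp f p s (ν - a)) := by
      intro a ha
      simp only [Finset.mem_Icc] at ha
      rw [hGext a ha.2, Finset.mul_sum]
      refine Finset.sum_congr rfl (fun s _ => by ring)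
    rw [Finset.sum_congr rfl this, Finset.sum_comm]
    refine Finset.sum_congr rfl (fun s _ => ?_)
    rw [Acomp_peel, Finset.mul_sum]
  rw [hRHS]
  -- LHS computation
  have hL : ∑ s ∈ Finset.range (ν + 1), cbinom w s * Acomp f p (s + 1) ν
      = ∑ s ∈ Finset.range ν, cbinom w s * Acomp f p (s + 1) ν := by
    rw [Finset.sum_range_succ, Acomp_eq_zero_of_lt f p (Nat.lt_succ_self ν), mul_zero, add_zero]
  rw [hL, Gp, Gp]
  rw [Finset.sum_range_succ' (fun r => cbinom (w + 1) r * Acomp f p r ν) ν]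
  rw [Finset.sum_range_succ' (fun r => cbinom w r * Acomp f p r ν) ν]
  have : ∀ i ∈ Finset.range ν, cbinom (w + 1) (i + 1) * Acomp f p (i + 1) ν
      = cbinom w (i + 1) * Acomp f p (i + 1) ν + cbinom w i * Acomp f p (i + 1) ν := by
    intro i _
    rw [cbinom_succ_succ]; ring
  rw [Finset.sum_congr rfl this, Finset.sum_add_distrib, cbinom_zero, cbinom_zero]
  ring

lemma Gp_nat_add (f : ℕ → ℂ) (hf1 : f 1 = 1) (p : ℕ) (m : ℕ) :
    ∀ (w : ℂ) (ν : ℕ),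
      ∑ a ∈ Finset.range (ν + 1), Gp f (m : ℂ) p a * Gp f w p (ν - a)
        = Gp f ((m : ℂ) + w) p ν := by
  induction m with
  | zero =>
    intro w ν
    have h0 : ∀ a : ℕ, Gp f ((0:ℕ) : ℂ) p a = if a = 0 then 1 else 0 := by
      intro a
      rcases eq_or_ne a 0 with rfl | ha
      · simp [Gp_zero_right]
      · push_cast
        rw [Gp, Finset.sum_eq_zero, if_neg ha]
        intro r _
        rcases eq_or_ne r 0 with rfl | hr0
        · rw [Acomp_zero_left, if_neg ha, mul_zero]
        · rw [cbinom_nat_zero r hr0, zero_mul]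
    rw [Finset.sum_eq_single 0]
    · rw [Nat.sub_zero, h0 0, if_pos rfl, one_mul, Nat.cast_zero, zero_add]
    · intro b _ hb; rw [h0 b, if_neg hb, zero_mul]
    · intro h; exfalso; exact h (by simp)
  | succ m ih =>
    intro w ν
    have hcast : ((m + 1 : ℕ) : ℂ) = (m : ℂ) + 1 := by push_cast; ring
    have hstep : ∀ a : ℕ, Gp f ((m + 1 : ℕ) : ℂ) p a
        = ∑ c ∈ Finset.range (a + 1), f (p ^ c) * Gp f (m : ℂ) p (a - c) := by
      intro a; rw [hcast, Gp_succ f hf1]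
    have hgoalR : Gp f (((m + 1 : ℕ) : ℂ) + w) p ν
        = ∑ c ∈ Finset.range (ν + 1), f (p ^ c) *
            ∑ b ∈ Finset.range (ν - c + 1), Gp f (m : ℂ) p b * Gp f w p (ν - c - b) := by
      have h1 : (((m + 1 : ℕ) : ℂ) + w) = ((m : ℂ) + w) + 1 := by push_cast; ring
      rw [h1, Gp_succ f hf1]
      refine Finset.sum_congr rfl (fun c _ => ?_)
      rw [ih w (ν - c)]
    rw [hgoalR]
    simp_rw [hstep, Finset.sum_mul, Finset.mul_sum]
    rw [Finset.sum_sigma' (Finset.range (ν + 1)) (fun a => Finset.range (a + 1))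
      (fun a c => f (p ^ c) * Gp f (m : ℂ) p (a - c) * Gp f w p (ν - a))]
    rw [Finset.sum_sigma' (Finset.range (ν + 1)) (fun c => Finset.range (ν - c + 1))
      (fun c b => f (p ^ c) * (Gp f (m : ℂ) p b * Gp f w p (ν - c - b)))]
    refine Finset.sum_nbij' (i := fun x => ⟨x.2, x.1 - x.2⟩) (j := fun x => ⟨x.1 + x.2, x.1⟩)
      ?_ ?_ ?_ ?_ ?_
    · intro x hx
      simp only [Finset.mem_sigma, Finset.mem_range] at *
      omega
    · intro x hx
      simp only [Finset.mem_sigma, Finset.mem_range] at *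
      omega
    · intro x hx
      simp only [Finset.mem_sigma, Finset.mem_range] at hx
      have : x.2 + (x.1 - x.2) = x.1 := by omega
      exact Sigma.ext (by simpa using this) (by simp)
    · intro x hx
      exact Sigma.ext (by simp) (by simp)
    · intro x hx
      simp only [Finset.mem_sigma, Finset.mem_range] at hx
      have h2 : ν - x.2 - (x.1 - x.2) = ν - x.1 := by omega
      simp only [h2]
      ring

lemma zconv_prime_pow' (f : ℕ → ℂ) (z : ℂ) {p : ℕ} (hp : p.Prime) (ν : ℕ) :
    zconv f z (p ^ ν) = Gp f z p ν := by
  rcases eq_or_ne ν 0 with rfl | hν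
  · rw [pow_zero, zconv_one, Gp_zero_right]
  · rw [zconv_prime_pow f z hp ν hν, Gp_eq_local f z p ν hν]

/-- The arithmetic function associated to `zconv f z`. -/
def zconvArith (f : ℕ → ℂ) (z : ℂ) : ArithmeticFunction ℂ :=
  ⟨fun n => if n = 0 then 0 else zconv f z n, by simp⟩

lemma zconvArith_apply (f : ℕ → ℂ) (z : ℂ) {n : ℕ} (hn : n ≠ 0) :
    zconvArith f z n = zconv f z n := by
  simp [zconvArith, hn]

lemma zconvArith_mult (f : ℕ → ℂ) (z : ℂ) : (zconvArith f z).IsMultiplicative := by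
  refine ⟨by simp [zconvArith, zconv_one], ?_⟩
  intro m n h
  rcases eq_or_ne m 0 with rfl | hm
  · have : n = 1 := by simpa [Nat.Coprime] using h
    simp [this, zconvArith, zconv_one]
  rcases eq_or_ne n 0 with rfl | hn
  · have : m = 1 := by simpa [Nat.Coprime] using h
    simp [this, zconvArith, zconv_one]
  rw [zconvArith_apply f z (Nat.mul_ne_zero hm hn), zconvArith_apply f z hm,
    zconvArith_apply f z hn, zconv_mul f z h]

lemma zconvArith_conv (f : ℕ → ℂ) (hf1 : f 1 = 1) (m : ℕ) (w : ℂ) :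
    zconvArith f (m : ℂ) * zconvArith f w = zconvArith f ((m : ℂ) + w) := by
  rw [ArithmeticFunction.IsMultiplicative.eq_iff_eq_on_prime_powers _
    ((zconvArith_mult f _).mul (zconvArith_mult f _)) _ (zconvArith_mult f _)]
  intro p i hp
  rw [ArithmeticFunction.mul_apply, Nat.sum_divisorsAntidiagonal
    (fun d e => zconvArith f (m : ℂ) d * zconvArith f w e),
    Nat.sum_divisors_prime_pow hp]
  have hppow : ∀ k : ℕ, (p : ℕ) ^ k ≠ 0 := fun k => pow_ne_zero k hp.pos.ne'
  calc ∑ a ∈ Finset.range (i + 1),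
        zconvArith f (m : ℂ) (p ^ a) * zconvArith f w (p ^ i / p ^ a)
      = ∑ a ∈ Finset.range (i + 1), Gp f (m : ℂ) p a * Gp f w p (i - a) := by
        refine Finset.sum_congr rfl (fun a ha => ?_)
        simp only [Finset.mem_range] at ha
        have ha' : a ≤ i := by omega
        rw [Nat.pow_div ha' hp.pos, zconvArith_apply f _ (hppow a),
          zconvArith_apply f _ (hppow (i - a)), zconv_prime_pow' f _ hp,
          zconv_prime_pow' f _ hp]
    _ = Gp f ((m : ℂ) + w) p i := Gp_nat_add f hf1 p m w i
    _ = zconvArith f ((m : ℂ) + w) (p ^ i) := by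
        rw [zconvArith_apply f _ (hppow i), zconv_prime_pow' f _ hp]

lemma zconv_conv (f : ℕ → ℂ) (hf1 : f 1 = 1) (m : ℕ) (w : ℂ) {n : ℕ} (hn : n ≠ 0) :
    ∑ d ∈ n.divisors, zconv f (m : ℂ) d * zconv f w (n / d) = zconv f ((m : ℂ) + w) n := by
  have h := congrArg (fun g : ArithmeticFunction ℂ => g n) (zconvArith_conv f hf1 m w)
  rw [ArithmeticFunction.mul_apply, Nat.sum_divisorsAntidiagonal
    (fun d e => zconvArith f (m : ℂ) d * zconvArith f w e)] at h
  rw [zconvArith_apply f _ hn] at h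
  rw [← h]
  refine Finset.sum_congr rfl (fun d hd => ?_)
  obtain ⟨hdvd, _⟩ := Nat.mem_divisors.mp hd
  have hd0 : d ≠ 0 := ne_of_gt (Nat.pos_of_mem_divisors hd)
  have hnd0 : n / d ≠ 0 := by
    have := Nat.div_pos (Nat.le_of_dvd (Nat.pos_of_ne_zero hn) hdvd) (Nat.pos_of_ne_zero hd0)
    omega
  rw [zconvArith_apply f _ hd0, zconvArith_apply f _ hnd0]

/-- The convolution identity in the form used in the main theorem. -/
lemma zconv_conv_sub (f : ℕ → ℂ) (hf1 : f 1 = 1) (ℓ : ℕ) (z : ℂ) {n : ℕ} (hn : n ≠ 0) :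
    ∑ d ∈ n.divisors, zconv f (z - ℓ) d * zconv f (ℓ : ℂ) (n / d) = zconv f z n := by
  have hflip : ∑ d ∈ n.divisors, zconv f (z - ℓ) d * zconv f (ℓ : ℂ) (n / d)
      = ∑ d ∈ n.divisors, zconv f (ℓ : ℂ) d * zconv f (z - ℓ) (n / d) := by
    rw [← Nat.sum_div_divisors n (fun d => zconv f (ℓ : ℂ) d * zconv f (z - ℓ) (n / d))]
    refine Finset.sum_congr rfl (fun d hd => ?_)
    obtain ⟨hdvd, _⟩ := Nat.mem_divisors.mp hd
    rw [Nat.div_div_self hdvd hn]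
    ring
  rw [hflip, zconv_conv f hf1 ℓ (z - ℓ) hn]
  congr 1
  ring

lemma prod_cast_desc (m k : ℕ) :
    ∏ i ∈ Finset.range k, ((m : ℂ) - i) = (m.descFactorial k : ℂ) := by
  induction k with
  | zero => simp
  | succ k ih =>
    rw [Finset.prod_range_succ, ih, Nat.descFactorial_succ]
    rcases lt_or_ge k m with h | h
    · push_cast [Nat.cast_sub h.le]
      ring
    · rcases eq_or_lt_of_le h with rfl | h2
      · simp [Nat.descFactorial_succ]
      · rw [Nat.descFactorial_eq_zero_iff_lt.mpr h2]
        simp [Nat.descFactorial_eq_zero_iff_lt.mpr (by omega : m < k + 1)]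

lemma cbinom_nat (m k : ℕ) : cbinom (m : ℂ) k = (m.choose k : ℂ) := by
  rw [cbinom, prod_cast_desc, Nat.descFactorial_eq_factorial_mul_choose]
  push_cast
  rw [mul_comm, mul_div_assoc, div_self (Nat.cast_ne_zero.2 (Nat.factorial_ne_zero k)), mul_one]

lemma alt_sum_complex (n : ℕ) :
    ∑ j ∈ Finset.range (n + 1), (-1 : ℂ) ^ j * (n.choose j : ℂ)
      = if n = 0 then 1 else 0 := by
  have h := Int.alternating_sum_range_choose (n := n)
  have h2 := congrArg (fun z : ℤ => (z : ℂ)) h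
  push_cast at h2
  rw [h2]

lemma linnikCoeff_nat {K m : ℕ} (ℓ : ℕ) (hm : m < K) :
    linnikCoeff (m : ℂ) K ℓ = if ℓ = m then 1 else 0 := by
  unfold linnikCoeff
  simp_rw [cbinom_nat]
  by_cases hlm : ℓ ≤ m
  · have hsub : Finset.Icc ℓ m ⊆ Finset.Ico ℓ K := by
      intro k hk; simp only [Finset.mem_Icc, Finset.mem_Ico] at *; omega
    rw [← Finset.sum_subset hsub (by
      intro k hk hnk
      simp only [Finset.mem_Icc, Finset.mem_Ico] at hk hnk
      rw [Nat.choose_eq_zero_of_lt (by omega)]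
      simp)]
    rw [show Finset.Icc ℓ m = Finset.Ico ℓ (m + 1) from (Finset.Ico_add_one_right_eq_Icc ℓ m)]
    rw [Finset.sum_Ico_eq_sum_range]
    have hterm : ∀ j ∈ Finset.range (m + 1 - ℓ),
        (-1 : ℂ) ^ (ℓ + j) * (m.choose (ℓ + j) : ℂ) * ((ℓ + j).choose ℓ : ℂ)
          = (-1 : ℂ) ^ ℓ * (m.choose ℓ : ℂ) * ((-1 : ℂ) ^ j * ((m - ℓ).choose j : ℂ)) := by
      intro j hj
      simp only [Finset.mem_range] at hj
      have h1 : ℓ + j ≤ m := by omega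
      have h2 := Nat.choose_mul (n := m) (Nat.le_add_right ℓ j)
      rw [Nat.add_sub_cancel_left] at h2
      have h3 : (m.choose (ℓ + j) : ℂ) * ((ℓ + j).choose ℓ : ℂ)
          = (m.choose ℓ : ℂ) * ((m - ℓ).choose j : ℂ) := by
        rw [← Nat.cast_mul, ← Nat.cast_mul, h2]
      rw [pow_add]
      calc (-1 : ℂ) ^ ℓ * (-1) ^ j * (m.choose (ℓ + j) : ℂ) * ((ℓ + j).choose ℓ : ℂ)
          = (-1 : ℂ) ^ ℓ * (-1) ^ j * ((m.choose (ℓ + j) : ℂ) * ((ℓ + j).choose ℓ : ℂ)) := by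
            ring
        _ = (-1 : ℂ) ^ ℓ * (-1) ^ j * ((m.choose ℓ : ℂ) * ((m - ℓ).choose j : ℂ)) := by rw [h3]
        _ = _ := by ring
    rw [Finset.sum_congr rfl hterm, ← Finset.mul_sum]
    rw [show m + 1 - ℓ = (m - ℓ) + 1 by omega, alt_sum_complex]
    have hneg : (-1 : ℂ) ^ ℓ * ((-1 : ℂ) ^ ℓ * (m.choose ℓ : ℂ)) = (m.choose ℓ : ℂ) := by
      rw [← mul_assoc, ← pow_add, Even.neg_one_pow ⟨ℓ, by ring⟩, one_mul]
    rcases eq_or_lt_of_le hlm with rfl | hlt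
    · rw [if_pos rfl, if_pos (Nat.sub_self ℓ)]
      rw [mul_one, hneg, Nat.choose_self, Nat.cast_one]
    · rw [if_neg (by omega), if_neg (by omega)]
      simp
  · rw [Finset.sum_eq_zero, mul_zero, if_neg (by omega)]
    intro k hk
    simp only [Finset.mem_Ico] at hk
    rw [Nat.choose_eq_zero_of_lt (by omega)]
    simp

def pbinom (r : ℕ) : Polynomial ℂ :=
  Polynomial.C ((r.factorial : ℂ)⁻¹) *
    ∏ i ∈ Finset.range r, (Polynomial.X - Polynomial.C (i : ℂ))

lemma pbinom_eval (z : ℂ) (r : ℕ) : (pbinom r).eval z = cbinom z r := by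
  rw [pbinom, cbinom, Polynomial.eval_mul, Polynomial.eval_C, Polynomial.eval_prod]
  simp only [Polynomial.eval_sub, Polynomial.eval_X, Polynomial.eval_C]
  rw [div_eq_mul_inv, mul_comm]

lemma pbinom_natDegree_le (r : ℕ) : (pbinom r).natDegree ≤ r := by
  refine le_trans (Polynomial.natDegree_C_mul_le _ _) ?_
  refine le_trans (Polynomial.natDegree_prod_le _ _) ?_
  have h1 : ∀ i ∈ Finset.range r, (Polynomial.X - Polynomial.C (i : ℂ)).natDegree = 1 :=
    fun i _ => Polynomial.natDegree_X_sub_C _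
  rw [Finset.sum_congr rfl h1]
  simp

def pLin (K ℓ : ℕ) : Polynomial ℂ :=
  Polynomial.C ((-1 : ℂ) ^ ℓ) *
    ∑ k ∈ Finset.Ico ℓ K, Polynomial.C ((-1 : ℂ) ^ k * (k.choose ℓ : ℂ)) * pbinom k

lemma pLin_eval (z : ℂ) (K ℓ : ℕ) : (pLin K ℓ).eval z = linnikCoeff z K ℓ := by
  rw [pLin, linnikCoeff, Polynomial.eval_mul, Polynomial.eval_C, Polynomial.eval_finset_sum]
  congr 1
  refine Finset.sum_congr rfl (fun k _ => ?_)
  rw [Polynomial.eval_mul, Polynomial.eval_C, pbinom_eval]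
  ring

lemma pLin_natDegree_lt {K : ℕ} (hK : 1 ≤ K) (ℓ : ℕ) : (pLin K ℓ).natDegree < K := by
  have h : (pLin K ℓ).natDegree ≤ K - 1 := by
    refine le_trans (Polynomial.natDegree_C_mul_le _ _) ?_
    refine Polynomial.natDegree_sum_le_of_forall_le _ _ (fun k hk => ?_)
    simp only [Finset.mem_Ico] at hk
    refine le_trans (Polynomial.natDegree_C_mul_le _ _) ?_
    exact le_trans (pbinom_natDegree_le k) (by omega)
  omega

lemma degree_lt_of_natDegree_lt {p : Polynomial ℂ} {K : ℕ} (h : p.natDegree < K) :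
    p.degree < (K : ℕ) := by
  refine lt_of_le_of_lt (Polynomial.degree_le_natDegree) ?_
  exact_mod_cast Nat.cast_lt.mpr h

lemma linnik_interpolation {K : ℕ} (hK : 1 ≤ K) (Q : Polynomial ℂ) (hQ : Q.natDegree < K)
    (z : ℂ) :
    Q.eval z = ∑ ℓ ∈ Finset.range K, linnikCoeff z K ℓ * Q.eval (ℓ : ℂ) := by
  set R : Polynomial ℂ := ∑ ℓ ∈ Finset.range K, Polynomial.C (Q.eval (ℓ : ℂ)) * pLin K ℓ
    with hR
  have hReval : ∀ w : ℂ, R.eval w = ∑ ℓ ∈ Finset.range K, linnikCoeff w K ℓ * Q.eval (ℓ : ℂ) := by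
    intro w
    rw [hR, Polynomial.eval_finset_sum]
    refine Finset.sum_congr rfl (fun ℓ _ => ?_)
    rw [Polynomial.eval_mul, Polynomial.eval_C, pLin_eval]
    ring
  have hQR : Q = R := by
    set s : Finset ℂ := (Finset.range K).image (Nat.cast : ℕ → ℂ) with hs
    have hcard : s.card = K := by
      rw [hs, Finset.card_image_of_injective _ Nat.cast_injective, Finset.card_range]
    refine Polynomial.eq_of_degrees_lt_of_eval_finset_eq s ?_ ?_ ?_
    · rw [hcard]; exact degree_lt_of_natDegree_lt hQ
    · rw [hcard]
      refine degree_lt_of_natDegree_lt ?_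
      have : R.natDegree ≤ K - 1 := by
        refine Polynomial.natDegree_sum_le_of_forall_le _ _ (fun ℓ _ => ?_)
        refine le_trans (Polynomial.natDegree_C_mul_le _ _) ?_
        have := pLin_natDegree_lt hK ℓ
        omega
      omega
    · intro x hx
      rw [hs] at hx
      obtain ⟨m, hm, rfl⟩ := Finset.mem_image.mp hx
      simp only [Finset.mem_range] at hm
      rw [hReval]
      have : ∀ ℓ ∈ Finset.range K, linnikCoeff (m : ℂ) K ℓ * Q.eval (ℓ : ℂ)
          = if ℓ = m then Q.eval (ℓ : ℂ) else 0 := by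
        intro ℓ _
        rw [linnikCoeff_nat ℓ hm]
        split <;> simp
      rw [Finset.sum_congr rfl this, Finset.sum_ite_eq' (Finset.range K) m
        (fun ℓ => Q.eval (ℓ : ℂ)), if_pos (Finset.mem_range.mpr hm)]
  conv_lhs => rw [hQR]
  exact hReval z

lemma cbinom_abs_le {K : ℕ} {A : ℝ} (hA : 1 ≤ A) {z : ℂ} (hz : ‖z‖ ≤ A)
    {k : ℕ} (hk : k ≤ K) : ‖cbinom z k‖ ≤ (A + K) ^ K := by
  have hAK : (1 : ℝ) ≤ A + K := by
    have : (0:ℝ) ≤ (K:ℝ) := Nat.cast_nonneg K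
    linarith
  rw [cbinom, norm_div]
  have h1 : ‖∏ i ∈ Finset.range k, (z - i)‖ ≤ (A + K) ^ k := by
    rw [norm_prod]
    calc ∏ i ∈ Finset.range k, ‖z - i‖
        ≤ ∏ _i ∈ Finset.range k, (A + K) := by
          refine Finset.prod_le_prod (fun i _ => norm_nonneg _) (fun i hi => ?_)
          simp only [Finset.mem_range] at hi
          calc ‖z - i‖ ≤ ‖z‖ + ‖(i : ℂ)‖ := by
                simpa [sub_eq_add_neg] using norm_add_le z (-(i : ℂ))
            _ ≤ A + K := by
              rw [Complex.norm_natCast]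
              have : (i : ℝ) ≤ (K : ℝ) := by exact_mod_cast le_of_lt (lt_of_lt_of_le hi hk)
              linarith
      _ = (A + K) ^ k := by rw [Finset.prod_const, Finset.card_range]
  have h2 : (1 : ℝ) ≤ ‖((k.factorial : ℕ) : ℂ)‖ := by
    rw [Complex.norm_natCast]
    exact_mod_cast Nat.one_le_iff_ne_zero.mpr (Nat.factorial_ne_zero k)
  calc ‖∏ i ∈ Finset.range k, (z - i)‖ / ‖((k.factorial : ℕ) : ℂ)‖
      ≤ ‖∏ i ∈ Finset.range k, (z - i)‖ / 1 := by
        refine div_le_div_of_nonneg_left (norm_nonneg _) one_pos h2 |>.trans ?_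
        · exact le_refl _
    _ = ‖∏ i ∈ Finset.range k, (z - i)‖ := div_one _
    _ ≤ (A + K) ^ k := h1
    _ ≤ (A + K) ^ K := pow_le_pow_right₀ hAK hk

lemma linnikCoeff_abs_le {K : ℕ} (hK : 1 ≤ K) {A : ℝ} (hA : 1 ≤ A) {z : ℂ}
    (hz : ‖z‖ ≤ A) (ℓ : ℕ) :
    ‖linnikCoeff z K ℓ‖ ≤ (K : ℝ) * ((A + K) ^ K * (K : ℝ) ^ K) := by
  have habs1 : ‖(-1 : ℂ)‖ = 1 := by simp
  rw [linnikCoeff, norm_mul, norm_pow, habs1, one_pow, one_mul]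
  calc ‖∑ k ∈ Finset.Ico ℓ K, (-1) ^ k * cbinom z k * (k.choose ℓ : ℂ)‖
      ≤ ∑ k ∈ Finset.Ico ℓ K, ‖(-1) ^ k * cbinom z k * (k.choose ℓ : ℂ)‖ :=
        norm_sum_le _ _
    _ ≤ ∑ _k ∈ Finset.Ico ℓ K, ((A + K) ^ K * (K : ℝ) ^ K) := by
        refine Finset.sum_le_sum (fun k hk => ?_)
        simp only [Finset.mem_Ico] at hk
        rw [norm_mul, norm_mul, norm_pow, habs1, one_pow, one_mul, Complex.norm_natCast]
        refine mul_le_mul (cbinom_abs_le hA hz (le_of_lt hk.2)) ?_ (Nat.cast_nonneg _) ?_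
        · calc ((k.choose ℓ : ℕ) : ℝ) ≤ ((k ^ ℓ : ℕ) : ℝ) := by
                exact_mod_cast Nat.choose_le_pow k ℓ
            _ ≤ ((K ^ K : ℕ) : ℝ) := by
                exact_mod_cast Nat.pow_le_pow_left (le_of_lt hk.2) ℓ |>.trans
                  (Nat.pow_le_pow_right (by omega) (by omega))
            _ = (K : ℝ) ^ K := by push_cast; ring
        · positivity
    _ = (Finset.Ico ℓ K).card * ((A + K) ^ K * (K : ℝ) ^ K) := by
        rw [Finset.sum_const, nsmul_eq_mul]
    _ ≤ (K : ℝ) * ((A + K) ^ K * (K : ℝ) ^ K) := by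
        have hcard : (Finset.Ico ℓ K).card ≤ K := by
          rw [Nat.card_Ico]; omega
        have hpos : (0:ℝ) ≤ (A + K) ^ K * (K : ℝ) ^ K := by positivity
        exact mul_le_mul_of_nonneg_right (by exact_mod_cast hcard) hpos


section decomp
variable {n : ℕ} (y : ℝ)

/-- the `y`-smooth part of `n` -/
def smoothPart (y : ℝ) (n : ℕ) : ℕ :=
  ∏ p ∈ n.primeFactors.filter (fun p : ℕ => (p : ℝ) ≤ y), p ^ n.factorization p

/-- the `y`-rough part of `n` -/
def roughPart (y : ℝ) (n : ℕ) : ℕ :=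
  ∏ p ∈ n.primeFactors.filter (fun p : ℕ => ¬((p : ℝ) ≤ y)), p ^ n.factorization p

lemma smooth_mul_rough (hn : n ≠ 0) : smoothPart y n * roughPart y n = n := by
  rw [smoothPart, roughPart, Finset.prod_filter_mul_prod_filter_not]
  conv_rhs => rw [← Nat.factorization_prod_pow_eq_self hn]
  rw [Finsupp.prod, Nat.support_factorization]

lemma prodPart_ne_zero (t : Finset ℕ) (ht : t ⊆ n.primeFactors) :
    ∏ p ∈ t, p ^ n.factorization p ≠ 0 := by
  refine Finset.prod_ne_zero_iff.mpr (fun p hp => ?_)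
  exact pow_ne_zero _ (Nat.prime_of_mem_primeFactors (ht hp)).pos.ne'

lemma prodPart_factorization (t : Finset ℕ) (ht : t ⊆ n.primeFactors) (q : ℕ) :
    (∏ p ∈ t, p ^ n.factorization p).factorization q
      = if q ∈ t then n.factorization q else 0 := by
  rw [Nat.factorization_prod (fun p hp =>
    pow_ne_zero _ (Nat.prime_of_mem_primeFactors (ht hp)).pos.ne')]
  rw [Finset.sum_apply']
  have : ∀ p ∈ t, ((p ^ n.factorization p).factorization) q
      = if p = q then n.factorization p else 0 := by
    intro p hp
    rw [(Nat.prime_of_mem_primeFactors (ht hp)).factorization_pow, Finsupp.single_apply]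
  rw [Finset.sum_congr rfl this, Finset.sum_ite_eq' t q (fun p => n.factorization p)]

lemma prodPart_primeFactors (t : Finset ℕ) (ht : t ⊆ n.primeFactors) :
    (∏ p ∈ t, p ^ n.factorization p).primeFactors = t := by
  ext q
  rw [← Nat.support_factorization, Finsupp.mem_support_iff, prodPart_factorization t ht q]
  constructor
  · intro h
    by_contra hq
    simp [hq] at h
  · intro hq
    have : n.factorization q ≠ 0 := by
      have := ht hq
      rw [← Nat.support_factorization, Finsupp.mem_support_iff] at this
      exact this
    simp [hq, this]

lemma coprime_smooth_rough (hn : n ≠ 0) : Nat.Coprime (smoothPart y n) (roughPart y n) := by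
  have h1 : (smoothPart y n).primeFactors = n.primeFactors.filter (fun p : ℕ => (p : ℝ) ≤ y) :=
    prodPart_primeFactors _ (Finset.filter_subset _ _)
  have h2 : (roughPart y n).primeFactors = n.primeFactors.filter (fun p : ℕ => ¬((p : ℝ) ≤ y)) :=
    prodPart_primeFactors _ (Finset.filter_subset _ _)
  have hs0 : smoothPart y n ≠ 0 := prodPart_ne_zero _ (Finset.filter_subset _ _)
  have hr0 : roughPart y n ≠ 0 := prodPart_ne_zero _ (Finset.filter_subset _ _)
  rw [← Nat.disjoint_primeFactors hs0 hr0, h1, h2]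
  exact Finset.disjoint_filter_filter_not _ _ _

lemma Pplus_le_iff {d : ℕ} (hd : d ≠ 0) (hy : 1 ≤ y) :
    ((Pplus d : ℝ) ≤ y) ↔ ∀ q ∈ d.primeFactors, (q : ℝ) ≤ y := by
  rcases le_or_gt d 1 with h1 | h1
  · have : d = 1 := by omega
    subst this
    simp [Pplus, hy]
  · rw [Pplus, if_neg (by omega)]
    constructor
    · intro h q hq
      refine le_trans ?_ h
      exact_mod_cast Nat.cast_le.mpr (Finset.le_sup (f := id) hq)
    · intro h
      obtain ⟨b, hb, hbe⟩ := Finset.exists_mem_eq_sup d.primeFactors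
        (Nat.nonempty_primeFactors.mpr h1) id
      rw [hbe]
      exact h b hb
    
lemma dvd_smooth_iff {d : ℕ} (hn : n ≠ 0) (hd : d ∣ n) (hy : 1 ≤ y) :
    d ∣ smoothPart y n ↔ (Pplus d : ℝ) ≤ y := by
  have hd0 : d ≠ 0 := by rintro rfl; exact hn (Nat.eq_zero_of_zero_dvd hd)
  have hs0 : smoothPart y n ≠ 0 := prodPart_ne_zero _ (Finset.filter_subset _ _)
  rw [Pplus_le_iff y hd0 hy]
  constructor
  · intro hds q hq
    have hq2 := Nat.primeFactors_mono hds hs0 hq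
    rw [smoothPart, prodPart_primeFactors _ (Finset.filter_subset _ _)] at hq2
    exact (Finset.mem_filter.mp hq2).2
  · intro h
    rw [← Nat.factorization_le_iff_dvd hd0 hs0]
    intro q
    rcases Nat.eq_zero_or_pos (d.factorization q) with h0 | hpos
    · simp [h0]
    · have hqd : q ∈ d.primeFactors := by
        rw [← Nat.support_factorization, Finsupp.mem_support_iff]; omega
      have hqn : q ∈ n.primeFactors := Nat.primeFactors_mono hd hn hqd
      have hqt : q ∈ n.primeFactors.filter (fun p : ℕ => (p : ℝ) ≤ y) :=
        Finset.mem_filter.mpr ⟨hqn, h q hqd⟩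
      rw [smoothPart, prodPart_factorization _ (Finset.filter_subset _ _), if_pos hqt]
      exact (Nat.factorization_le_iff_dvd hd0 hn).mpr hd q

lemma rough_omega_lt {K : ℕ} (hK : 1 ≤ K) {x : ℝ} (hx : 1 ≤ x) (hn : n ≠ 0)
    (hnx : (n : ℝ) ≤ x) :
    ∑ p ∈ (roughPart (x ^ (1 / (K : ℝ))) n).primeFactors,
      (roughPart (x ^ (1 / (K : ℝ))) n).factorization p < K := by
  set y : ℝ := x ^ (1 / (K : ℝ)) with hy
  have hy1 : 1 ≤ y := Real.one_le_rpow hx (by positivity)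
  have hyK : y ^ K = x := by
    rw [hy, ← Real.rpow_natCast (x ^ (1 / (K : ℝ))) K, ← Real.rpow_mul (by linarith),
      one_div, inv_mul_cancel₀ (Nat.cast_ne_zero.mpr (by omega) : (K : ℝ) ≠ 0), Real.rpow_one]
  set r : ℕ := roughPart y n with hr
  set t : Finset ℕ := n.primeFactors.filter (fun p : ℕ => ¬((p : ℝ) ≤ y)) with ht
  have hrt : r.primeFactors = t := prodPart_primeFactors _ (Finset.filter_subset _ _)
  have hrfact : ∀ q ∈ t, r.factorization q = n.factorization q := by
    intro q hq
    rw [hr, roughPart, prodPart_factorization _ (Finset.filter_subset _ _), if_pos hq]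
  by_contra hcon
  push_neg at hcon
  rw [hrt] at hcon
  have hsum : ∑ p ∈ t, r.factorization p = ∑ p ∈ t, n.factorization p :=
    Finset.sum_congr rfl hrfact
  rw [hsum] at hcon
  -- t is nonempty
  have htne : t.Nonempty := by
    by_contra hte
    rw [Finset.not_nonempty_iff_eq_empty] at hte
    rw [hte] at hcon
    simp at hcon
    omega
  have hr0 : r ≠ 0 := prodPart_ne_zero _ (Finset.filter_subset _ _)
  have hrn : r ∣ n := by
    refine Dvd.intro_left (smoothPart y n) ?_
    exact smooth_mul_rough y hn
  have hrx : (r : ℝ) ≤ x := le_trans (Nat.cast_le.mpr (Nat.le_of_dvd (Nat.pos_of_ne_zero hn) hrn)) hnx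
  have hprod : (r : ℝ) = ∏ p ∈ t, (p : ℝ) ^ n.factorization p := by
    rw [hr, roughPart, ← ht]
    push_cast
    rfl
  have hstrict : y ^ (∑ p ∈ t, n.factorization p) < (r : ℝ) := by
    rw [hprod, ← Finset.prod_pow_eq_pow_sum]
    refine Finset.prod_lt_prod_of_nonempty (fun p hp => by positivity) (fun p hp => ?_) htne
    have hp2 := Finset.mem_filter.mp hp
    have he : n.factorization p ≠ 0 := by
      have := hp2.1
      rw [← Nat.support_factorization, Finsupp.mem_support_iff] at this
      exact this
    exact pow_lt_pow_left₀ (lt_of_not_ge hp2.2) (by linarith) he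
  have hchain : x ≤ y ^ (∑ p ∈ t, n.factorization p) := by
    rw [← hyK]
    exact pow_le_pow_right₀ hy1 hcon
  linarith
end decomp

def pGp (f : ℕ → ℂ) (p ν : ℕ) : Polynomial ℂ :=
  ∑ r ∈ Finset.range (ν + 1), Polynomial.C (Acomp f p r ν) * pbinom r

lemma pGp_eval (f : ℕ → ℂ) (z : ℂ) (p ν : ℕ) : (pGp f p ν).eval z = Gp f z p ν := by
  rw [pGp, Gp, Polynomial.eval_finset_sum]
  refine Finset.sum_congr rfl (fun r _ => ?_)
  rw [Polynomial.eval_mul, Polynomial.eval_C, pbinom_eval]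
  ring

lemma pGp_natDegree_le (f : ℕ → ℂ) (p ν : ℕ) : (pGp f p ν).natDegree ≤ ν := by
  refine Polynomial.natDegree_sum_le_of_forall_le _ _ (fun r hr => ?_)
  simp only [Finset.mem_range] at hr
  exact le_trans (Polynomial.natDegree_C_mul_le _ _) (le_trans (pbinom_natDegree_le r) (by omega))

def pZ (f : ℕ → ℂ) (n : ℕ) : Polynomial ℂ :=
  ∏ p ∈ n.primeFactors, pGp f p (n.factorization p)

lemma pZ_eval (f : ℕ → ℂ) (z : ℂ) (n : ℕ) : (pZ f n).eval z = zconv f z n := by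
  rw [pZ, zconv_eq_prod, Polynomial.eval_prod]
  exact Finset.prod_congr rfl (fun p _ => pGp_eval f z p _)

lemma pZ_natDegree_le (f : ℕ → ℂ) (n : ℕ) :
    (pZ f n).natDegree ≤ ∑ p ∈ n.primeFactors, n.factorization p := by
  refine le_trans (Polynomial.natDegree_prod_le _ _) ?_
  exact Finset.sum_le_sum (fun p _ => pGp_natDegree_le f p _)

lemma zconv_interp {K : ℕ} (hK : 1 ≤ K) (f : ℕ → ℂ) {n : ℕ}
    (hn : ∑ p ∈ n.primeFactors, n.factorization p < K) (z : ℂ) :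
    zconv f z n = ∑ ℓ ∈ Finset.range K, linnikCoeff z K ℓ * zconv f (ℓ : ℂ) n := by
  have h := linnik_interpolation hK (pZ f n) (lt_of_le_of_lt (pZ_natDegree_le f n) hn) z
  rw [pZ_eval] at h
  rw [h]
  exact Finset.sum_congr rfl (fun ℓ _ => by rw [pZ_eval])

/-- **Theorem 3.3** (combinatorial identity of Linnik's type): for every multiplicative `f`
and `n ≤ x`,
`f^{(∗z)}(n) = ∑_{0≤ℓ<K} c_ℓ ∑_{n=n₁n₂, P⁺(n₁)≤x^{1/K}} f^{(∗(z-ℓ))}(n₁) f^{(∗ℓ)}(n₂)`,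
with `|c_ℓ| = O_{K,A}(1)` uniformly for `|z| ≤ A`. -/
theorem linnik_type_identity (K : ℕ) (hK : 1 ≤ K) (A : ℝ) (hA : 1 ≤ A) :
    ∃ Cb : ℝ, 0 < Cb ∧
      ∀ z : ℂ, ‖z‖ ≤ A →
        (∀ ℓ < K, ‖linnikCoeff z K ℓ‖ ≤ Cb) ∧
        (∀ x : ℝ, 1 ≤ x →
          ∀ f : ℕ → ℂ, f 1 = 1 →
            (∀ m n : ℕ, Nat.Coprime m n → f (m * n) = f m * f n) →
            ∀ n : ℕ, 1 ≤ n → (n : ℝ) ≤ x →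
              zconv f z n =
                ∑ ℓ ∈ Finset.range K, linnikCoeff z K ℓ *
                  ∑ d ∈ n.divisors,
                    if (Pplus d : ℝ) ≤ x ^ (1 / (K : ℝ)) then
                      zconv f (z - ℓ) d * zconv f (ℓ : ℂ) (n / d)
                    else 0) := by

    have hKR : (0:ℝ) < (K : ℝ) := by exact_mod_cast hK
    have hAK : (0:ℝ) < A + K := by linarith
    refine ⟨(K : ℝ) * ((A + K) ^ K * (K : ℝ) ^ K),
      mul_pos hKR (mul_pos (pow_pos hAK K) (pow_pos hKR K)), ?_⟩
    intro z hz
    constructor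
    · intro ℓ _
      exact linnikCoeff_abs_le hK hA hz ℓ
    · intro x hx f hf1 _hfmult n hn1 hnx
      have hn0 : n ≠ 0 := by omega
      set y : ℝ := x ^ (1 / (K : ℝ)) with hy
      have hy1 : (1:ℝ) ≤ y := Real.one_le_rpow hx (by positivity)
      set s : ℕ := smoothPart y n with hsdef
      set r : ℕ := roughPart y n with hrdef
      have hsr : s * r = n := smooth_mul_rough y hn0
      have hcop : Nat.Coprime s r := coprime_smooth_rough y hn0
      have hs0 : s ≠ 0 := prodPart_ne_zero _ (Finset.filter_subset _ _)
      have homega : ∑ p ∈ r.primeFactors, r.factorization p < K :=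
        rough_omega_lt hK hx hn0 hnx
      have hinner : ∀ ℓ : ℕ,
          (∑ d ∈ n.divisors, if ((Pplus d : ℕ) : ℝ) ≤ y then
              zconv f (z - ℓ) d * zconv f (ℓ : ℂ) (n / d) else 0)
            = zconv f z s * zconv f (ℓ : ℂ) r := by
        intro ℓ
        have hset : n.divisors.filter (fun d => ((Pplus d : ℕ) : ℝ) ≤ y) = s.divisors := by
          ext d
          simp only [Finset.mem_filter, Nat.mem_divisors]
          constructor
          · rintro ⟨⟨hdn, _⟩, hP⟩
            exact ⟨(dvd_smooth_iff y hn0 hdn hy1).mpr hP, hs0⟩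
          · rintro ⟨hds, _⟩
            have hdn : d ∣ n := hds.trans ⟨r, hsr.symm⟩
            exact ⟨⟨hdn, hn0⟩, (dvd_smooth_iff y hn0 hdn hy1).mp hds⟩
        rw [← Finset.sum_filter, hset]
        have hterm : ∀ d ∈ s.divisors, zconv f (z - ℓ) d * zconv f (ℓ : ℂ) (n / d)
            = (zconv f (z - ℓ) d * zconv f (ℓ : ℂ) (s / d)) * zconv f (ℓ : ℂ) r := by
          intro d hd
          obtain ⟨hds, _⟩ := Nat.mem_divisors.mp hd
          have hd0 : 0 < d := Nat.pos_of_mem_divisors hd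
          have hcop2 : Nat.Coprime (s / d) r :=
            Nat.Coprime.coprime_dvd_left (Nat.div_dvd_of_dvd hds) hcop
          have hnd : n / d = (s / d) * r := by
            obtain ⟨e, he⟩ := hds
            rw [← hsr, he, mul_assoc, Nat.mul_div_cancel_left _ hd0,
              Nat.mul_div_cancel_left _ hd0]
          rw [hnd, zconv_mul f _ hcop2]
          ring
        rw [Finset.sum_congr rfl hterm, ← Finset.sum_mul, zconv_conv_sub f hf1 ℓ z hs0]
      calc zconv f z n = zconv f z s * zconv f z r := by rw [← hsr, zconv_mul f z hcop]
        _ = zconv f z s * ∑ ℓ ∈ Finset.range K, linnikCoeff z K ℓ * zconv f (ℓ : ℂ) r := by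
            rw [← zconv_interp hK f homega z]
        _ = ∑ ℓ ∈ Finset.range K, linnikCoeff z K ℓ * (zconv f z s * zconv f (ℓ : ℂ) r) := by
            rw [Finset.mul_sum]
            exact Finset.sum_congr rfl (fun ℓ _ => by ring)
        _ = _ := by
            refine Finset.sum_congr rfl (fun ℓ _ => ?_)
            rw [hinner ℓ]


end
end

section
/- For every multiplicative function f : ℕ → ℝ, every compactly supported function g : ℕ → ℂ, and all y, w ≥ 2, one has Σ_{P⁺(n) ≤ y} f(n)g(n) = Σ_triv + Σ_I + O(Σ_II) with an absolute implied constant, where Σ_I = Σ_{n ≤ w, P⁺(n) ≤ y} f(n)g(n), Σ_triv = Σ_{n > w, P⁺(n) ≤ y, ∃ p^ν ∥ n with p^ν > y} f(n)g(n), and Σ_II = (log y)·sup_{(α),(β)} |Σ_{w < m ≤ yw} Σ_n α_m β_n g(mn)|, the supremum being over all complex sequences (α_m), (β_n) with |α_m| ≤ |f(m)| and |β_n| ≤ (|f| ∗ |f|)(n). -/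
open scoped Classical BigOperators

noncomputable section

namespace FWF

/-! ### Basic facts about `Pplus` -/

lemma Pplus_one : Pplus 1 = 1 := by simp [Pplus]

lemma Pplus_of_two_le {n : ℕ} (h : 2 ≤ n) : (Pplus n).Prime ∧ Pplus n ∣ n := by
  have h1 : ¬ n ≤ 1 := by omega
  obtain ⟨p, hp, hsup⟩ := Finset.exists_mem_eq_sup n.primeFactors
    (Nat.nonempty_primeFactors.mpr (by omega)) id
  unfold Pplus
  rw [if_neg h1, hsup]
  exact ⟨Nat.prime_of_mem_primeFactors hp, Nat.dvd_of_mem_primeFactors hp⟩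

lemma one_le_Pplus (n : ℕ) : 1 ≤ Pplus n := by
  by_cases h : n ≤ 1
  · simp [Pplus, h]
  · have := (Pplus_of_two_le (by omega : 2 ≤ n)).1.two_le
    omega

lemma le_Pplus_of_dvd {p n : ℕ} (hp : p.Prime) (hd : p ∣ n) (hn : n ≠ 0) : p ≤ Pplus n := by
  have h2 : 2 ≤ n := le_trans hp.two_le (Nat.le_of_dvd (Nat.pos_of_ne_zero hn) hd)
  unfold Pplus
  rw [if_neg (by omega)]
  exact Finset.le_sup (f := id) (Nat.mem_primeFactors.mpr ⟨hp, hd, hn⟩)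

lemma Pplus_mul {a b : ℕ} (ha : 1 ≤ a) (hb : 1 ≤ b) :
    Pplus (a * b) = max (Pplus a) (Pplus b) := by
  rcases eq_or_lt_of_le ha with h1 | h2
  · rw [← h1, one_mul, Pplus_one]
    exact (max_eq_right (one_le_Pplus b)).symm
  rcases eq_or_lt_of_le hb with g1 | g2
  · rw [← g1, mul_one, Pplus_one]
    exact (max_eq_left (one_le_Pplus a)).symm
  have hab : ¬ a * b ≤ 1 := by nlinarith
  unfold Pplus
  rw [if_neg hab, if_neg (by omega), if_neg (by omega),
    Nat.primeFactors_mul (by omega) (by omega), Finset.sup_union]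

lemma Pplus_prime_pow {p e : ℕ} (hp : p.Prime) (he : 1 ≤ e) : Pplus (p ^ e) = p := by
  have hle : p ≤ p ^ e := Nat.le_self_pow (by omega) p
  have h2 := hp.two_le
  unfold Pplus
  rw [if_neg (by omega), Nat.primeFactors_prime_pow (by omega) hp, Finset.sup_singleton]
  rfl

/-! ### The "upper part" of an integer -/

/-- product of all maximal prime powers of `n` at primes `≥ q`. -/
def upPart (n q : ℕ) : ℕ :=
  ∏ p ∈ n.primeFactors.filter (fun p => q ≤ p), p ^ n.factorization p

lemma upPart_pos (n q : ℕ) : 0 < upPart n q := by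
  refine Finset.prod_pos (fun p hp => pow_pos ?_ _)
  have := Nat.prime_of_mem_primeFactors (Finset.mem_filter.mp hp).1
  exact this.pos

lemma upPart_dvd_of_le {n q q' : ℕ} (h : q ≤ q') : upPart n q' ∣ upPart n q := by
  refine Finset.prod_dvd_prod_of_subset _ _ _ (fun p hp => ?_)
  rw [Finset.mem_filter] at hp ⊢
  exact ⟨hp.1, le_trans h hp.2⟩

lemma upPart_factorization {n : ℕ} (q p : ℕ) :
    (upPart n q).factorization p
      = if q ≤ p ∧ p ∈ n.primeFactors then n.factorization p else 0 := by
  unfold upPart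
  rw [Nat.factorization_prod (fun x hx => by
    have := Nat.prime_of_mem_primeFactors (Finset.mem_filter.mp hx).1
    exact pow_ne_zero _ this.ne_zero)]
  rw [Finsupp.finset_sum_apply]
  have hcong : ∀ x ∈ n.primeFactors.filter (fun p => q ≤ p),
      ((x ^ n.factorization x).factorization) p
        = if x = p then n.factorization x else 0 := by
    intro x hx
    have hxp := Nat.prime_of_mem_primeFactors (Finset.mem_filter.mp hx).1
    rw [hxp.factorization_pow, Finsupp.single_apply]
  rw [Finset.sum_congr rfl hcong, Finset.sum_ite_eq' _ p (fun x => n.factorization x)]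
  simp only [Finset.mem_filter]
  by_cases h : q ≤ p ∧ p ∈ n.primeFactors
  · rw [if_pos ⟨h.2, h.1⟩, if_pos h]
  · rw [if_neg (fun hc => h ⟨hc.2, hc.1⟩), if_neg h]

lemma upPart_succ {n q : ℕ} (hq : q ∈ n.primeFactors) :
    upPart n q = q ^ n.factorization q * upPart n (q + 1) := by
  unfold upPart
  have hsplit : n.primeFactors.filter (fun p => q ≤ p)
      = insert q (n.primeFactors.filter (fun p => q + 1 ≤ p)) := by
    ext p
    simp only [Finset.mem_filter, Finset.mem_insert]
    constructor
    · rintro ⟨hp, hle⟩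
      rcases eq_or_lt_of_le hle with h | h
      · exact Or.inl h.symm
      · exact Or.inr ⟨hp, by omega⟩
    · rintro (rfl | ⟨hp, h⟩)
      · exact ⟨hq, le_refl _⟩
      · exact ⟨hp, by omega⟩
  rw [hsplit, Finset.prod_insert (by simp [Finset.mem_filter])]

lemma prod_primeFactors_pow {m : ℕ} (hm : m ≠ 0) :
    ∏ p ∈ m.primeFactors, p ^ m.factorization p = m := by
  conv_rhs => rw [← Nat.factorization_prod_pow_eq_self hm]
  rw [Finsupp.prod, Nat.support_factorization]

lemma rep {m r : ℕ} (hm : 2 ≤ m) (hr : 1 ≤ r) (hlt : Pplus r < m.minFac) :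
    upPart (m * r) m.minFac = m := by
  have hm0 : m ≠ 0 := by omega
  have hr0 : r ≠ 0 := by omega
  have hnotr : ∀ p : ℕ, p.Prime → p ∣ m → ¬ p ∣ r := by
    intro p hp hpm hpr
    have h1 := le_Pplus_of_dvd hp hpr hr0
    have h2 : m.minFac ≤ p := Nat.minFac_le_of_dvd hp.two_le hpm
    omega
  have hfil : (m * r).primeFactors.filter (fun p => m.minFac ≤ p) = m.primeFactors := by
    ext p
    simp only [Finset.mem_filter, Nat.primeFactors_mul hm0 hr0, Finset.mem_union]
    constructor
    · rintro ⟨hmem | hmem, hle⟩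
      · exact hmem
      · have := le_Pplus_of_dvd (Nat.prime_of_mem_primeFactors hmem)
          (Nat.dvd_of_mem_primeFactors hmem) hr0
        omega
    · intro hmem
      exact ⟨Or.inl hmem,
        Nat.minFac_le_of_dvd (Nat.prime_of_mem_primeFactors hmem).two_le
          (Nat.dvd_of_mem_primeFactors hmem)⟩
  unfold upPart
  rw [hfil]
  have hcong : ∀ p ∈ m.primeFactors, p ^ (m * r).factorization p = p ^ m.factorization p := by
    intro p hp
    have : r.factorization p = 0 :=
      Nat.factorization_eq_zero_of_not_dvd (hnotr p (Nat.prime_of_mem_primeFactors hp)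
        (Nat.dvd_of_mem_primeFactors hp))
    rw [Nat.factorization_mul hm0 hr0, Finsupp.add_apply, this, add_zero]
  rw [Finset.prod_congr rfl hcong, prod_primeFactors_pow hm0]

/-! ### Conditions -/

def Mcond (y w : ℝ) (m : ℕ) : Prop :=
  w < (m : ℝ) ∧ (m : ℝ) ≤ y * w ∧
    (∀ p : ℕ, p.Prime → p ∣ m → ((p ^ m.factorization p : ℕ) : ℝ) ≤ y) ∧
    ((m / m.minFac ^ m.factorization m.minFac : ℕ) : ℝ) ≤ w

def Rcond (y : ℝ) (n : ℕ) : Prop :=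
  1 ≤ n ∧ ∀ p : ℕ, p.Prime → p ∣ n → ((p ^ n.factorization p : ℕ) : ℝ) ≤ y

def PairC (y w : ℝ) (m r : ℕ) : Prop := Mcond y w m ∧ Rcond y r ∧ Pplus r < m.minFac

lemma Mcond_two_le {y w : ℝ} {m : ℕ} (hw : 2 ≤ w) (h : Mcond y w m) : 2 ≤ m := by
  by_contra hc
  push_neg at hc
  interval_cases m <;> [skip; skip] <;> · have := h.1; norm_num at this; linarith

lemma pp_le_y {y : ℝ} {n : ℕ} (hy : 2 ≤ y) (h1 : 1 ≤ n)
    (hpp : ∀ p : ℕ, p.Prime → p ∣ n → ((p ^ n.factorization p : ℕ) : ℝ) ≤ y) :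
    ((Pplus n : ℕ) : ℝ) ≤ y := by
  rcases eq_or_lt_of_le h1 with h | h
  · rw [← h, Pplus_one]; norm_num; linarith
  obtain ⟨hp, hd⟩ := Pplus_of_two_le (by omega : 2 ≤ n)
  have hv : 0 < n.factorization (Pplus n) := hp.factorization_pos_of_dvd (by omega) hd
  have hle : Pplus n ≤ Pplus n ^ n.factorization (Pplus n) := Nat.le_self_pow (by omega) _
  calc ((Pplus n : ℕ) : ℝ) ≤ ((Pplus n ^ n.factorization (Pplus n) : ℕ) : ℝ) := by
        exact_mod_cast hle
    _ ≤ y := hpp _ hp hd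

lemma minFac_le_y {y w : ℝ} {m : ℕ} (hw : 2 ≤ w) (h : Mcond y w m) :
    ((m.minFac : ℕ) : ℝ) ≤ y := by
  have hm2 := Mcond_two_le hw h
  have hq : m.minFac.Prime := Nat.minFac_prime (by omega)
  have hd := Nat.minFac_dvd m
  have hv : 0 < m.factorization m.minFac := hq.factorization_pos_of_dvd (by omega) hd
  have hle : m.minFac ≤ m.minFac ^ m.factorization m.minFac := Nat.le_self_pow (by omega) _
  calc ((m.minFac : ℕ) : ℝ) ≤ ((m.minFac ^ m.factorization m.minFac : ℕ) : ℝ) := by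
        exact_mod_cast hle
    _ ≤ y := h.2.2.1 _ hq hd

lemma uniq_aux {y w : ℝ} (hw : 2 ≤ w) {m1 r1 m2 r2 : ℕ}
    (h1 : PairC y w m1 r1) (h2 : PairC y w m2 r2)
    (heq : m1 * r1 = m2 * r2) (hlt : m1.minFac < m2.minFac) : False := by
  have hm1 : 2 ≤ m1 := Mcond_two_le hw h1.1
  have hm2 : 2 ≤ m2 := Mcond_two_le hw h2.1
  have hr1 : 1 ≤ r1 := h1.2.1.1
  have hr2 : 1 ≤ r2 := h2.2.1.1
  have hn0 : m1 * r1 ≠ 0 := Nat.mul_ne_zero (by omega) (by omega)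
  have hrep1 : upPart (m1 * r1) m1.minFac = m1 := rep hm1 hr1 h1.2.2
  have hrep2 : upPart (m1 * r1) m2.minFac = m2 := by
    rw [heq]; exact rep hm2 hr2 h2.2.2
  have hq1mem : m1.minFac ∈ (m1 * r1).primeFactors := by
    refine Nat.mem_primeFactors.mpr ⟨Nat.minFac_prime (by omega), ?_, hn0⟩
    exact dvd_trans (Nat.minFac_dvd m1) (dvd_mul_right m1 r1)
  obtain ⟨P1, hP1⟩ : ∃ x, x = m1.minFac := ⟨_, rfl⟩
  obtain ⟨v1, hv1⟩ : ∃ x, x = (m1 * r1).factorization P1 := ⟨_, rfl⟩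
  obtain ⟨U, hU⟩ : ∃ x, x = upPart (m1 * r1) (P1 + 1) := ⟨_, rfl⟩
  have hP1pos : 0 < P1 := by rw [hP1]; exact Nat.minFac_pos m1
  have hsucc : m1 = P1 ^ v1 * U := by
    rw [hv1, hU, hP1, ← upPart_succ (hP1 ▸ hq1mem), hrep1]
  have hfacm1 : m1.factorization P1 = v1 := by
    have h := upPart_factorization (n := m1 * r1) m1.minFac m1.minFac
    rw [hrep1, if_pos ⟨le_refl _, hq1mem⟩] at h
    rw [hP1, h, hv1, hP1]
  have hquot : m1 / P1 ^ m1.factorization P1 = U := by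
    rw [hfacm1]
    conv_lhs => rw [hsucc]
    exact Nat.mul_div_cancel_left _ (pow_pos hP1pos _)
  have hwbound : ((U : ℕ) : ℝ) ≤ w := by
    rw [← hquot, hP1]; exact h1.1.2.2.2
  have hdvd : m2 ∣ U := by
    rw [← hrep2, hU]
    exact upPart_dvd_of_le (by omega)
  have hle : m2 ≤ U := Nat.le_of_dvd (hU ▸ upPart_pos _ _) hdvd
  have : (m2 : ℝ) ≤ w := le_trans (by exact_mod_cast hle) hwbound
  linarith [h2.1.1]

lemma uniq {y w : ℝ} (hw : 2 ≤ w) {m1 r1 m2 r2 : ℕ}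
    (h1 : PairC y w m1 r1) (h2 : PairC y w m2 r2)
    (heq : m1 * r1 = m2 * r2) : m1 = m2 ∧ r1 = r2 := by
  have hq : m1.minFac = m2.minFac := by
    rcases lt_trichotomy m1.minFac m2.minFac with h | h | h
    · exact (uniq_aux hw h1 h2 heq h).elim
    · exact h
    · exact (uniq_aux hw h2 h1 heq.symm h).elim
  have hm1 : 2 ≤ m1 := Mcond_two_le hw h1.1
  have hm2 : 2 ≤ m2 := Mcond_two_le hw h2.1
  have hm : m1 = m2 := by
    rw [← rep hm1 h1.2.1.1 h1.2.2, ← rep hm2 h2.2.1.1 h2.2.2, hq, heq]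
  refine ⟨hm, ?_⟩
  subst hm
  exact Nat.eq_of_mul_eq_mul_left (by omega) heq

lemma exist {y w : ℝ} (hy : 2 ≤ y) (hw : 2 ≤ w) :
    ∀ n : ℕ, w < (n : ℝ) →
      (∀ p : ℕ, p.Prime → p ∣ n → ((p ^ n.factorization p : ℕ) : ℝ) ≤ y) →
      ∃ m r : ℕ, PairC y w m r ∧ m * r = n := by
  intro n
  induction n using Nat.strong_induction_on with
  | _ n IH =>
  intro hwn hpp
  have hn2 : 2 ≤ n := by
    by_contra hc
    push_neg at hc
    have : (n : ℝ) ≤ 1 := by exact_mod_cast Nat.lt_succ_iff.mp hc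
    linarith
  have hn0 : n ≠ 0 := by omega
  have hqp : n.minFac.Prime := Nat.minFac_prime (by omega)
  have hqd : n.minFac ∣ n := Nat.minFac_dvd n
  have he : 1 ≤ n.factorization n.minFac := hqp.factorization_pos_of_dvd hn0 hqd
  set q := n.minFac with hqdef
  set e := n.factorization q with hedef
  set n' := n / q ^ e with hn'def
  have hsplit : q ^ e * n' = n := Nat.ordProj_mul_ordCompl_eq_self n q
  have hn'0 : 0 < n' := Nat.ordCompl_pos q hn0
  have hqn' : ¬ q ∣ n' := Nat.not_dvd_ordCompl hqp hn0
  have hn'dvd : n' ∣ n := Nat.ordCompl_dvd n q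
  have hfac' : n'.factorization = n.factorization.erase q := Nat.factorization_ordCompl n q
  have hq_lt : ∀ p : ℕ, p.Prime → p ∣ n' → q < p := by
    intro p hp hpd
    have h1 : q ≤ p := Nat.minFac_le_of_dvd hp.two_le (hpd.trans hn'dvd)
    rcases eq_or_lt_of_le h1 with h | h
    · exact absurd (h ▸ hpd) hqn'
    · exact h
  have hppn' : ∀ p : ℕ, p.Prime → p ∣ n' → ((p ^ n'.factorization p : ℕ) : ℝ) ≤ y := by
    intro p hp hpd
    have hpq : p ≠ q := fun h => hqn' (h ▸ hpd)
    rw [hfac', Finsupp.erase_ne hpq]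
    exact hpp p hp (hpd.trans hn'dvd)
  have hqe_le : ((q ^ e : ℕ) : ℝ) ≤ y := hpp q hqp hqd
  by_cases hcase : (n' : ℝ) ≤ w
  · refine ⟨n, 1, ⟨⟨hwn, ?_, hpp, ?_⟩, ⟨le_refl 1, ?_⟩, ?_⟩, mul_one n⟩
    · have hcast : ((q ^ e : ℕ) : ℝ) * ((n' : ℕ) : ℝ) = (n : ℝ) := by
        rw [← Nat.cast_mul, hsplit]
      rw [← hcast]
      have h0 : (0 : ℝ) ≤ ((n' : ℕ) : ℝ) := by positivity
      exact mul_le_mul hqe_le hcase h0 (by linarith)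
    · exact hcase
    · intro p hp hpd
      exact absurd (Nat.dvd_one.mp hpd) hp.one_lt.ne'
    · rw [Pplus_one]
      exact hqp.two_le
  · push_neg at hcase
    have hne1 : 1 < q ^ e := by
      have h2 := hqp.two_le
      have h3 : q ≤ q ^ e := Nat.le_self_pow (by omega) q
      omega
    have hlt : n' < n := by
      rw [hn'def]
      exact Nat.div_lt_self (by omega) hne1
    obtain ⟨m, r', hpair, hmr⟩ := IH n' hlt hcase hppn'
    have hm2 : 2 ≤ m := Mcond_two_le hw hpair.1
    have hr'1 : 1 ≤ r' := hpair.2.1.1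
    have hr'0 : r' ≠ 0 := by omega
    have hmdvd : m ∣ n' := ⟨r', hmr.symm⟩
    have hr'dvd : r' ∣ n' := ⟨m, by rw [← hmr]; ring⟩
    have hpos : 0 < q ^ e * r' := Nat.mul_pos (pow_pos hqp.pos e) (by omega)
    refine ⟨m, q ^ e * r', ⟨hpair.1, ⟨by omega, ?_⟩, ?_⟩, ?_⟩
    · -- prime power condition for q ^ e * r'
      intro p hp hpd
      have hqe0 : q ^ e ≠ 0 := pow_ne_zero e hqp.ne_zero
      have hfs : (q ^ e * r').factorization p
          = (q ^ e).factorization p + r'.factorization p := by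
        rw [Nat.factorization_mul hqe0 hr'0, Finsupp.add_apply]
      by_cases hpq : p = q
      · have hz : r'.factorization p = 0 := by
          refine Nat.factorization_eq_zero_of_not_dvd (fun hc => ?_)
          exact hqn' ((hpq ▸ hc : q ∣ r').trans hr'dvd)
        have hqq : (q ^ e).factorization p = e := by
          rw [hqp.factorization_pow, Finsupp.single_apply, if_pos hpq.symm]
        rw [hfs, hz, hqq, add_zero, hpq]
        exact hqe_le
      · have hz : (q ^ e).factorization p = 0 := by
          rw [hqp.factorization_pow, Finsupp.single_apply, if_neg (fun h => hpq h.symm)]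
        have hpr' : p ∣ r' := by
          rcases hp.dvd_mul.mp hpd with h | h
          · exact absurd ((Nat.prime_dvd_prime_iff_eq hp hqp).mp (hp.dvd_of_dvd_pow h)) hpq
          · exact h
        rw [hfs, hz, zero_add]
        exact hpair.2.1.2 p hp hpr'
    · -- Pplus (q^e * r') < m.minFac
      rw [Pplus_mul (by omega : 1 ≤ q ^ e) hr'1, Pplus_prime_pow hqp he]
      have hmf : m.minFac.Prime := Nat.minFac_prime (by omega)
      have hmfd : m.minFac ∣ n' := (Nat.minFac_dvd m).trans hmdvd
      exact max_lt (hq_lt _ hmf hmfd) hpair.2.2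
    · rw [← mul_assoc, mul_comm m (q ^ e), mul_assoc, hmr, hsplit]

lemma back {y w : ℝ} (hy : 2 ≤ y) (hw : 2 ≤ w) {m r : ℕ} (h : PairC y w m r) :
    Nat.Coprime m r ∧ 1 ≤ m * r ∧ w < ((m * r : ℕ) : ℝ) ∧
      ((Pplus (m * r) : ℕ) : ℝ) ≤ y ∧
      (∀ p : ℕ, p.Prime → p ∣ m * r → ((p ^ (m * r).factorization p : ℕ) : ℝ) ≤ y) := by
  have hm2 : 2 ≤ m := Mcond_two_le hw h.1
  have hr1 : 1 ≤ r := h.2.1.1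
  have hm0 : m ≠ 0 := by omega
  have hr0 : r ≠ 0 := by omega
  have hcop : Nat.Coprime m r := by
    by_contra hc
    obtain ⟨p, hp, hpm, hpr⟩ := Nat.Prime.not_coprime_iff_dvd.mp hc
    have h1 := le_Pplus_of_dvd hp hpr hr0
    have h2 : m.minFac ≤ p := Nat.minFac_le_of_dvd hp.two_le hpm
    have h3 := h.2.2
    omega
  have hppmr : ∀ p : ℕ, p.Prime → p ∣ m * r → ((p ^ (m * r).factorization p : ℕ) : ℝ) ≤ y := by
    intro p hp hpd
    have hfs : (m * r).factorization p = m.factorization p + r.factorization p := by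
      rw [Nat.factorization_mul hm0 hr0, Finsupp.add_apply]
    rcases hp.dvd_mul.mp hpd with hc | hc
    · have hz : r.factorization p = 0 := by
        refine Nat.factorization_eq_zero_of_not_dvd (fun hcon => ?_)
        have : p ∣ Nat.gcd m r := Nat.dvd_gcd hc hcon
        rw [hcop] at this
        exact hp.one_lt.ne' (Nat.dvd_one.mp this)
      rw [hfs, hz, add_zero]
      exact h.1.2.2.1 p hp hc
    · have hz : m.factorization p = 0 := by
        refine Nat.factorization_eq_zero_of_not_dvd (fun hcon => ?_)
        have : p ∣ Nat.gcd m r := Nat.dvd_gcd hcon hc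
        rw [hcop] at this
        exact hp.one_lt.ne' (Nat.dvd_one.mp this)
      rw [hfs, hz, zero_add]
      exact h.2.1.2 p hp hc
  have hmr0 : m * r ≠ 0 := Nat.mul_ne_zero hm0 hr0
  refine ⟨hcop, Nat.one_le_iff_ne_zero.mpr hmr0, ?_, ?_, hppmr⟩
  · have : (m : ℝ) ≤ ((m * r : ℕ) : ℝ) := by
      exact_mod_cast Nat.le_mul_of_pos_right m (by omega)
    linarith [h.1.1]
  · exact pp_le_y hy (Nat.one_le_iff_ne_zero.mpr hmr0) hppmr

/-! ### Bit comparison identity -/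

lemma bitsum : ∀ (K p q : ℕ), p < 2 ^ K → q < 2 ^ K →
    (∑ i ∈ Finset.range K,
        if p / 2 ^ i % 2 = 1 ∧ q / 2 ^ i % 2 = 0 ∧ p / 2 ^ (i + 1) = q / 2 ^ (i + 1)
        then (1 : ℂ) else 0)
      = if q < p then 1 else 0 := by
  intro K
  induction K with
  | zero =>
    intro p q hp hq
    simp only [pow_zero, Nat.lt_one_iff] at hp hq
    subst hp; subst hq
    simp
  | succ K IH =>
    intro p q hp hq
    rw [Finset.sum_range_succ']
    have hdd : ∀ (x i : ℕ), x / 2 ^ (i + 1) = (x / 2) / 2 ^ i := by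
      intro x i
      rw [Nat.div_div_eq_div_mul, pow_succ, mul_comm (2 ^ i) 2]
    have hcong : ∀ i ∈ Finset.range K,
        (if p / 2 ^ (i + 1) % 2 = 1 ∧ q / 2 ^ (i + 1) % 2 = 0 ∧
            p / 2 ^ (i + 1 + 1) = q / 2 ^ (i + 1 + 1) then (1 : ℂ) else 0)
        = (if (p / 2) / 2 ^ i % 2 = 1 ∧ (q / 2) / 2 ^ i % 2 = 0 ∧
            (p / 2) / 2 ^ (i + 1) = (q / 2) / 2 ^ (i + 1) then (1 : ℂ) else 0) := by
      intro i _
      rw [hdd p i, hdd q i, hdd p (i + 1), hdd q (i + 1)]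
    have hp2 : p / 2 < 2 ^ K := by
      have h2 : (2:ℕ) ^ (K + 1) = 2 ^ K * 2 := pow_succ 2 K
      omega
    have hq2 : q / 2 < 2 ^ K := by
      have h2 : (2:ℕ) ^ (K + 1) = 2 ^ K * 2 := pow_succ 2 K
      omega
    rw [Finset.sum_congr rfl hcong, IH (p / 2) (q / 2) hp2 hq2]
    simp only [pow_zero, Nat.div_one, zero_add, pow_one]
    split_ifs <;> first | (exfalso; omega) | norm_num

/-! ### Roots of unity -/

lemma rootsum {N : ℕ} (hN : 1 ≤ N) (s t : ℕ) (hs : s < N) (ht : t < N) :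
    (∑ j ∈ Finset.range N,
        (Complex.exp ((↑(2 * Real.pi / (N : ℝ)) : ℂ) * Complex.I)) ^ (j * (s + (N - 1) * t)))
      = if s = t then (N : ℂ) else 0 := by
  set z : ℂ := (↑(2 * Real.pi / (N : ℝ)) : ℂ) * Complex.I with hz
  have hN0 : (N : ℝ) ≠ 0 := by positivity
  have key : ∀ e : ℕ, Complex.exp z ^ e = 1 ↔ (N ∣ e) := by
    intro e
    rw [← Complex.exp_nat_mul, Complex.exp_eq_one_iff]
    constructor
    · rintro ⟨k, hk⟩
      rw [hz] at hk
      have hk' : ((e : ℝ) * (2 * Real.pi / (N : ℝ)) : ℂ) * Complex.I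
          = (((k : ℝ) * (2 * Real.pi) : ℝ) : ℂ) * Complex.I := by
        push_cast
        push_cast at hk
        rw [← mul_assoc] at hk
        rw [hk]; ring
      have hre : (e : ℝ) * (2 * Real.pi / (N : ℝ)) = (k : ℝ) * (2 * Real.pi) := by
        have := mul_right_cancel₀ Complex.I_ne_zero hk'
        exact_mod_cast this
      have hpi : (2 : ℝ) * Real.pi ≠ 0 := by
        have := Real.pi_pos; positivity
      have hpi' : 2 * Real.pi > 0 := by positivity
      have hek : (e : ℝ) = (k : ℝ) * (N : ℝ) := by
        field_simp at hre
        have h2 : (e : ℝ) * (2 * Real.pi) = ((k : ℝ) * (N : ℝ)) * (2 * Real.pi) := by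
          linear_combination (2 * Real.pi) * hre
        exact mul_right_cancel₀ hpi h2
      have hke : (e : ℤ) = k * (N : ℤ) := by exact_mod_cast hek
      exact Int.natCast_dvd_natCast.mp ⟨k, by rw [hke]; ring⟩
    · rintro ⟨c, rfl⟩
      refine ⟨(c : ℤ), ?_⟩
      rw [hz]
      have hNC : (N : ℂ) ≠ 0 := Nat.cast_ne_zero.mpr (by omega)
      push_cast
      field_simp
  by_cases hst : s = t
  · subst hst
    have hNe : s + (N - 1) * s = N * s := by
      have h1 : N - 1 + 1 = N := Nat.succ_pred_eq_of_pos hN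
      calc s + (N - 1) * s = (N - 1 + 1) * s := by ring
        _ = N * s := by rw [h1]
    rw [if_pos rfl]
    have hone : ∀ j ∈ Finset.range N, Complex.exp z ^ (j * (s + (N - 1) * s)) = 1 := by
      intro j _
      rw [hNe, show j * (N * s) = N * (j * s) by ring, pow_mul,
        (key N).mpr ⟨1, (mul_one N).symm⟩, one_pow]
    rw [Finset.sum_congr rfl hone, Finset.sum_const, Finset.card_range]
    simp
  · rw [if_neg hst]
    have hnd : ¬ N ∣ (s + (N - 1) * t) := by
      rintro ⟨c, hc⟩
      have h3 : (N - 1) * t + t = N * t := by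
        have h1 : N - 1 + 1 = N := Nat.succ_pred_eq_of_pos hN
        calc (N - 1) * t + t = (N - 1 + 1) * t := by ring
          _ = N * t := by rw [h1]
      have h4 : s + N * t = N * c + t := by omega
      have h5 : (s + N * t) % N = s % N := Nat.add_mul_mod_self_left s N t
      have h6 : (N * c + t) % N = t % N := by
        rw [add_comm]; exact Nat.add_mul_mod_self_left t N c
      rw [h4, h6] at h5
      rw [Nat.mod_eq_of_lt hs, Nat.mod_eq_of_lt ht] at h5
      exact hst h5.symm
    have hr1 : Complex.exp z ^ (s + (N - 1) * t) ≠ 1 := fun hc => hnd ((key _).mp hc)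
    have hcong : ∀ j ∈ Finset.range N,
        Complex.exp z ^ (j * (s + (N - 1) * t))
          = (Complex.exp z ^ (s + (N - 1) * t)) ^ j := by
      intro j _
      rw [← pow_mul, mul_comm]
    rw [Finset.sum_congr rfl hcong, geom_sum_eq hr1]
    have hpowN : (Complex.exp z ^ (s + (N - 1) * t)) ^ N = 1 := by
      rw [← pow_mul, mul_comm, pow_mul, (key N).mpr ⟨1, (mul_one N).symm⟩, one_pow]
    rw [hpowN]
    simp

/-! ### tsum conversion -/

lemma double_tsum_eq (h : ℕ → ℕ → ℂ) (S1 S2 : Finset ℕ)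
    (H : ∀ m n, h m n ≠ 0 → m ∈ S1 ∧ n ∈ S2) :
    ∑' (m : ℕ), ∑' (n : ℕ), h m n = ∑ m ∈ S1, ∑ n ∈ S2, h m n := by
  have hinner : ∀ m, ∑' (n : ℕ), h m n = ∑ n ∈ S2, h m n := by
    intro m
    refine tsum_eq_sum (fun n hn => ?_)
    by_contra hne
    exact hn (H m n hne).2
  rw [tsum_congr hinner]
  refine tsum_eq_sum (fun m hm => ?_)
  refine Finset.sum_eq_zero (fun n _ => ?_)
  by_contra hne
  exact hm (H m n hne).1

end FWF

open FWF

/-- **Lemma 3.4** (well-factorability of friable numbers). -/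
theorem friable_well_factorability :
    ∃ C : ℝ, 0 < C ∧
      ∀ f : ℕ → ℝ, f 1 = 1 →
        (∀ m n : ℕ, Nat.Coprime m n → f (m * n) = f m * f n) →
        ∀ g : ℕ → ℂ, (Function.support g).Finite →
          ∀ y w : ℝ, 2 ≤ y → 2 ≤ w →
            ∀ T : ℝ,
              (∀ α β : ℕ → ℂ,
                (∀ m : ℕ, 1 ≤ m → ‖α m‖ ≤ |f m|) →
                (∀ n : ℕ, 1 ≤ n →
                  ‖β n‖ ≤ ∑ d ∈ n.divisors, |f d| * |f (n / d)|) →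
                ‖(∑' m : ℕ, ∑' n : ℕ,
                    if 1 ≤ n ∧ w < (m : ℝ) ∧ (m : ℝ) ≤ y * w then α m * β n * g (m * n)
                    else 0)‖ ≤ T) →
              ‖((∑' n : ℕ, if 1 ≤ n ∧ (Pplus n : ℝ) ≤ y then (f n : ℂ) * g n else 0) -
                  (∑' n : ℕ,
                    if 1 ≤ n ∧ w < (n : ℝ) ∧ (Pplus n : ℝ) ≤ y ∧
                        ∃ p : ℕ, p.Prime ∧ p ∣ n ∧ (((p ^ n.factorization p : ℕ) : ℝ) > y)
                      then (f n : ℂ) * g n else 0) -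
                  (∑' n : ℕ,
                    if 1 ≤ n ∧ (n : ℝ) ≤ w ∧ (Pplus n : ℝ) ≤ y
                      then (f n : ℂ) * g n else 0))‖
              ≤ C * (Real.log y * T) := by
  refine ⟨3, by norm_num, ?_⟩
  intro f hf1 hfmul g hg y w hy hw T hT
  have hT0 : 0 ≤ T := by
    have h := hT (fun _ => 0) (fun _ => 0)
      (fun m _ => by simpa using abs_nonneg (f m))
      (fun n _ => by
        simpa using Finset.sum_nonneg
          (fun d _ => mul_nonneg (abs_nonneg (f d)) (abs_nonneg (f (n / d)))))
    simpa using h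
  set F : Finset ℕ := hg.toFinset with hF
  set Dv : Finset ℕ := F.biUnion Nat.divisors with hDv
  set K : ℕ := Nat.log 2 ⌊y⌋₊ + 1 with hK
  set NN : ℕ := 2 ^ K with hNN
  have hNN1 : 1 ≤ NN := Nat.one_le_two_pow
  have hNNR : (0 : ℝ) < (NN : ℝ) := by exact_mod_cast Nat.lt_of_lt_of_le Nat.zero_lt_one hNN1
  have hNNC : (NN : ℂ) ≠ 0 := Nat.cast_ne_zero.mpr (by omega)
  set ζ : ℂ := Complex.exp ((↑(2 * Real.pi / (NN : ℝ)) : ℂ) * Complex.I) with hζ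
  have hζabs : ∀ e : ℕ, ‖ζ ^ e‖ = 1 := by
    intro e
    rw [hζ, norm_pow, Complex.norm_exp_ofReal_mul_I, one_pow]
  set A : ℕ → ℕ → ℕ → ℂ := fun i j m =>
    if Mcond y w m ∧ m.minFac / 2 ^ i % 2 = 1
    then (f m : ℂ) * ζ ^ (j * (m.minFac / 2 ^ (i + 1))) else 0 with hA
  set B : ℕ → ℕ → ℕ → ℂ := fun i j n =>
    if Rcond y n ∧ Pplus n / 2 ^ i % 2 = 0
    then (f n : ℂ) * ζ ^ (j * ((NN - 1) * (Pplus n / 2 ^ (i + 1)))) else 0 with hB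
  have hAadm : ∀ i j m : ℕ, ‖A i j m‖ ≤ |f m| := by
    intro i j m
    rw [hA]
    simp only
    split_ifs with h
    · rw [norm_mul, Complex.norm_real, Real.norm_eq_abs, hζabs, mul_one]
    · simpa using abs_nonneg (f m)
  have hBadm : ∀ i j n : ℕ, 1 ≤ n →
      ‖B i j n‖ ≤ ∑ d ∈ n.divisors, |f d| * |f (n / d)| := by
    intro i j n hn
    have h1 : ‖B i j n‖ ≤ |f n| := by
      rw [hB]
      simp only
      split_ifs with h
      · rw [norm_mul, Complex.norm_real, Real.norm_eq_abs, hζabs, mul_one]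
      · simpa using abs_nonneg (f n)
    refine le_trans h1 ?_
    have h1mem : 1 ∈ n.divisors := Nat.one_mem_divisors.mpr (by omega)
    have h2 := Finset.single_le_sum (f := fun d => |f d| * |f (n / d)|)
      (fun d _ => mul_nonneg (abs_nonneg _) (abs_nonneg _)) h1mem
    simpa [hf1] using h2
  have hBil : ∀ i j : ℕ, ‖∑' (m : ℕ), ∑' (n : ℕ),
      if 1 ≤ n ∧ w < (m : ℝ) ∧ (m : ℝ) ≤ y * w
      then A i j m * B i j n * g (m * n) else 0‖ ≤ T :=
    fun i j => hT (A i j) (B i j) (fun m _ => hAadm i j m) (fun n hn => hBadm i j n hn)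
  have EqB : ∀ i j : ℕ, (∑' (m : ℕ), ∑' (n : ℕ),
      if 1 ≤ n ∧ w < (m : ℝ) ∧ (m : ℝ) ≤ y * w
      then A i j m * B i j n * g (m * n) else 0)
      = ∑ m ∈ Dv, ∑ n ∈ Dv,
          (if 1 ≤ n ∧ w < (m : ℝ) ∧ (m : ℝ) ≤ y * w
           then A i j m * B i j n * g (m * n) else 0) := by
    intro i j
    refine double_tsum_eq _ Dv Dv ?_
    intro m n hne
    by_cases hc : 1 ≤ n ∧ w < (m : ℝ) ∧ (m : ℝ) ≤ y * w
    · rw [if_pos hc] at hne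
      have hg0 : g (m * n) ≠ 0 := fun h => hne (by rw [h, mul_zero])
      have hm0 : m ≠ 0 := by
        intro h
        rw [h] at hc
        have := hc.2.1
        norm_num at this
        linarith
      have hn0 : n ≠ 0 := by omega
      have hmn : m * n ∈ F := by
        rw [hF, Set.Finite.mem_toFinset]
        exact hg0
      constructor
      · exact Finset.mem_biUnion.mpr ⟨m * n, hmn,
          Nat.mem_divisors.mpr ⟨dvd_mul_right m n, Nat.mul_ne_zero hm0 hn0⟩⟩
      · exact Finset.mem_biUnion.mpr ⟨m * n, hmn,
          Nat.mem_divisors.mpr ⟨dvd_mul_left n m, Nat.mul_ne_zero hm0 hn0⟩⟩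
    · rw [if_neg hc] at hne
      exact absurd rfl hne
  have hfloor : ∀ p : ℕ, (p : ℝ) ≤ y → p < NN := by
    intro p hp
    have h1 : p ≤ ⌊y⌋₊ := Nat.le_floor hp
    have h2 : ⌊y⌋₊ < 2 ^ K := by
      rw [hK]
      exact Nat.lt_pow_succ_log_self (by norm_num) _
    rw [hNN]
    omega
  -- the pointwise identity
  have Wclaim : ∀ m n : ℕ,
      (∑ i ∈ Finset.range K, (NN : ℂ)⁻¹ * ∑ j ∈ Finset.range NN,
          (if 1 ≤ n ∧ w < (m : ℝ) ∧ (m : ℝ) ≤ y * w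
           then A i j m * B i j n * g (m * n) else 0))
        = if PairC y w m n then ((f m : ℂ) * (f n : ℂ)) * g (m * n) else 0 := by
    intro m n
    by_cases hMR : Mcond y w m ∧ Rcond y n
    · obtain ⟨hM, hR⟩ := hMR
      have hrange : 1 ≤ n ∧ w < (m : ℝ) ∧ (m : ℝ) ≤ y * w := ⟨hR.1, hM.1, hM.2.1⟩
      have hPN : m.minFac < NN := hfloor _ (minFac_le_y hw hM)
      have hQN : Pplus n < NN := hfloor _ (pp_le_y hy hR.1 hR.2)
      have step1 : ∀ i : ℕ, (NN : ℂ)⁻¹ * ∑ j ∈ Finset.range NN,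
          (if 1 ≤ n ∧ w < (m : ℝ) ∧ (m : ℝ) ≤ y * w
           then A i j m * B i j n * g (m * n) else 0)
          = if (m.minFac / 2 ^ i % 2 = 1 ∧ Pplus n / 2 ^ i % 2 = 0 ∧
                m.minFac / 2 ^ (i + 1) = Pplus n / 2 ^ (i + 1))
            then ((f m : ℂ) * (f n : ℂ)) * g (m * n) else 0 := by
        intro i
        by_cases hb1 : m.minFac / 2 ^ i % 2 = 1
        · by_cases hb2 : Pplus n / 2 ^ i % 2 = 0
          · have hterm : ∀ j ∈ Finset.range NN,
                (if 1 ≤ n ∧ w < (m : ℝ) ∧ (m : ℝ) ≤ y * w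
                 then A i j m * B i j n * g (m * n) else 0)
                = (((f m : ℂ) * (f n : ℂ)) * g (m * n)) *
                    ζ ^ (j * (m.minFac / 2 ^ (i + 1) + (NN - 1) * (Pplus n / 2 ^ (i + 1)))) := by
              intro j _
              rw [if_pos hrange, hA, hB]
              simp only
              rw [if_pos ⟨hM, hb1⟩, if_pos ⟨hR, hb2⟩]
              rw [show ((f m : ℂ) * ζ ^ (j * (m.minFac / 2 ^ (i + 1)))) *
                    ((f n : ℂ) * ζ ^ (j * ((NN - 1) * (Pplus n / 2 ^ (i + 1))))) * g (m * n)
                  = (((f m : ℂ) * (f n : ℂ)) * g (m * n)) *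
                    (ζ ^ (j * (m.minFac / 2 ^ (i + 1))) *
                      ζ ^ (j * ((NN - 1) * (Pplus n / 2 ^ (i + 1))))) from by ring]
              rw [← pow_add, ← Nat.mul_add]
            rw [Finset.sum_congr rfl hterm, ← Finset.mul_sum,
              rootsum hNN1 _ _ (lt_of_le_of_lt (Nat.div_le_self _ _) hPN)
                (lt_of_le_of_lt (Nat.div_le_self _ _) hQN)]
            by_cases hst : m.minFac / 2 ^ (i + 1) = Pplus n / 2 ^ (i + 1)
            · rw [if_pos hst, if_pos ⟨hb1, hb2, hst⟩]
              rw [mul_comm, mul_assoc, mul_inv_cancel₀ hNNC, mul_one]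
            · rw [if_neg hst, if_neg (fun hc => hst hc.2.2), mul_zero, mul_zero]
          · have hzero : ∀ j ∈ Finset.range NN,
                (if 1 ≤ n ∧ w < (m : ℝ) ∧ (m : ℝ) ≤ y * w
                 then A i j m * B i j n * g (m * n) else 0) = 0 := by
              intro j _
              rw [if_pos hrange, hB]
              simp only
              rw [if_neg (fun hc => hb2 hc.2), mul_zero, zero_mul]
            rw [Finset.sum_congr rfl hzero, Finset.sum_const_zero, mul_zero,
              if_neg (fun hc => hb2 hc.2.1)]
        · have hzero : ∀ j ∈ Finset.range NN,
              (if 1 ≤ n ∧ w < (m : ℝ) ∧ (m : ℝ) ≤ y * w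
               then A i j m * B i j n * g (m * n) else 0) = 0 := by
            intro j _
            rw [if_pos hrange, hA]
            simp only
            rw [if_neg (fun hc => hb1 hc.2), zero_mul, zero_mul]
          rw [Finset.sum_congr rfl hzero, Finset.sum_const_zero, mul_zero,
            if_neg (fun hc => hb1 hc.1)]
      rw [Finset.sum_congr rfl (fun i _ => step1 i)]
      have hmerge : ∀ i ∈ Finset.range K,
          (if (m.minFac / 2 ^ i % 2 = 1 ∧ Pplus n / 2 ^ i % 2 = 0 ∧
                m.minFac / 2 ^ (i + 1) = Pplus n / 2 ^ (i + 1))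
            then ((f m : ℂ) * (f n : ℂ)) * g (m * n) else 0)
          = (if (m.minFac / 2 ^ i % 2 = 1 ∧ Pplus n / 2 ^ i % 2 = 0 ∧
                m.minFac / 2 ^ (i + 1) = Pplus n / 2 ^ (i + 1))
            then (1 : ℂ) else 0) * (((f m : ℂ) * (f n : ℂ)) * g (m * n)) := by
        intro i _
        split_ifs <;> ring
      rw [Finset.sum_congr rfl hmerge, ← Finset.sum_mul,
        bitsum K _ _ (hNN ▸ hPN) (hNN ▸ hQN)]
      by_cases hQP : Pplus n < m.minFac
      · rw [if_pos hQP, if_pos ⟨hM, hR, hQP⟩, one_mul]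
      · rw [if_neg hQP, if_neg (fun hc => hQP hc.2.2), zero_mul]
    · have hzero : ∀ i ∈ Finset.range K, (NN : ℂ)⁻¹ * ∑ j ∈ Finset.range NN,
          (if 1 ≤ n ∧ w < (m : ℝ) ∧ (m : ℝ) ≤ y * w
           then A i j m * B i j n * g (m * n) else 0) = 0 := by
        intro i _
        have hz : ∀ j ∈ Finset.range NN,
            (if 1 ≤ n ∧ w < (m : ℝ) ∧ (m : ℝ) ≤ y * w
             then A i j m * B i j n * g (m * n) else 0) = 0 := by
          intro j _
          by_cases hc : 1 ≤ n ∧ w < (m : ℝ) ∧ (m : ℝ) ≤ y * w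
          · rw [if_pos hc]
            rcases not_and_or.mp hMR with hM | hR
            · rw [hA]
              simp only
              rw [if_neg (fun hc2 => hM hc2.1), zero_mul, zero_mul]
            · rw [hB]
              simp only
              rw [if_neg (fun hc2 => hR hc2.1), mul_zero, zero_mul]
          · rw [if_neg hc]
        rw [Finset.sum_congr rfl hz, Finset.sum_const_zero, mul_zero]
      rw [Finset.sum_congr rfl hzero, Finset.sum_const_zero,
        if_neg (fun hc => hMR ⟨hc.1, hc.2.1⟩)]
  -- Step A: convert the three tsums to a single finite sum over F
  have hconv : ∀ (p : ℕ → Prop) (inst : ∀ n, Decidable (p n)),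
      (∑' (n : ℕ), (@ite _ (p n) (inst n) ((f n : ℂ) * g n) 0))
        = ∑ n ∈ F, (@ite _ (p n) (inst n) ((f n : ℂ) * g n) 0) := by
    intro p inst
    refine tsum_eq_sum (fun b hb => ?_)
    have hgb : g b = 0 := by
      rw [hF, Set.Finite.mem_toFinset, Function.mem_support, not_not] at hb
      exact hb
    rw [hgb, mul_zero, ite_self]
  have EqA : ((∑' n : ℕ, if 1 ≤ n ∧ (Pplus n : ℝ) ≤ y then (f n : ℂ) * g n else 0) -
        (∑' n : ℕ,
          if 1 ≤ n ∧ w < (n : ℝ) ∧ (Pplus n : ℝ) ≤ y ∧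
              ∃ p : ℕ, p.Prime ∧ p ∣ n ∧ (((p ^ n.factorization p : ℕ) : ℝ) > y)
            then (f n : ℂ) * g n else 0) -
        (∑' n : ℕ,
          if 1 ≤ n ∧ (n : ℝ) ≤ w ∧ (Pplus n : ℝ) ≤ y
            then (f n : ℂ) * g n else 0))
      = ∑ n ∈ F, (if 1 ≤ n ∧ w < (n : ℝ) ∧ (Pplus n : ℝ) ≤ y ∧
            (∀ p : ℕ, p.Prime → p ∣ n → ((p ^ n.factorization p : ℕ) : ℝ) ≤ y)
          then (f n : ℂ) * g n else 0) := by
    rw [show (∑' (n : ℕ), if 1 ≤ n ∧ (Pplus n : ℝ) ≤ y then (f n : ℂ) * g n else 0)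
        = ∑ n ∈ F, (if 1 ≤ n ∧ (Pplus n : ℝ) ≤ y then (f n : ℂ) * g n else 0) from hconv _ _,
      show (∑' (n : ℕ),
          if 1 ≤ n ∧ w < (n : ℝ) ∧ (Pplus n : ℝ) ≤ y ∧
              ∃ p : ℕ, p.Prime ∧ p ∣ n ∧ (((p ^ n.factorization p : ℕ) : ℝ) > y)
            then (f n : ℂ) * g n else 0)
        = ∑ n ∈ F, (if 1 ≤ n ∧ w < (n : ℝ) ∧ (Pplus n : ℝ) ≤ y ∧
              ∃ p : ℕ, p.Prime ∧ p ∣ n ∧ (((p ^ n.factorization p : ℕ) : ℝ) > y)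
            then (f n : ℂ) * g n else 0) from hconv _ _,
      show (∑' (n : ℕ), if 1 ≤ n ∧ (n : ℝ) ≤ w ∧ (Pplus n : ℝ) ≤ y then (f n : ℂ) * g n else 0)
        = ∑ n ∈ F, (if 1 ≤ n ∧ (n : ℝ) ≤ w ∧ (Pplus n : ℝ) ≤ y then (f n : ℂ) * g n else 0)
        from hconv _ _,
      ← Finset.sum_sub_distrib, ← Finset.sum_sub_distrib]
    refine Finset.sum_congr rfl (fun n _ => ?_)
    by_cases h1 : 1 ≤ n
    · by_cases hP : (Pplus n : ℝ) ≤ y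
      · by_cases hC : w < (n : ℝ)
        · have hnw : ¬ ((n : ℝ) ≤ w) := not_le.mpr hC
          by_cases hE : ∃ p : ℕ, p.Prime ∧ p ∣ n ∧ (((p ^ n.factorization p : ℕ) : ℝ) > y)
          · have hnc : ¬ (∀ p : ℕ, p.Prime → p ∣ n →
                ((p ^ n.factorization p : ℕ) : ℝ) ≤ y) := by
              intro hc
              obtain ⟨p, hp, hd, hgt⟩ := hE
              exact absurd (hc p hp hd) (not_le.mpr hgt)
            rw [if_pos ⟨h1, hP⟩, if_pos ⟨h1, hC, hP, hE⟩,
              if_neg (fun hx => hnw hx.2.1), if_neg (fun hx => hnc hx.2.2.2)]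
            ring
          · have hc : ∀ p : ℕ, p.Prime → p ∣ n →
                ((p ^ n.factorization p : ℕ) : ℝ) ≤ y := by
              intro p hp hd
              by_contra hgt
              exact hE ⟨p, hp, hd, not_le.mp hgt⟩
            rw [if_pos ⟨h1, hP⟩, if_neg (fun hx => hE hx.2.2.2),
              if_neg (fun hx => hnw hx.2.1), if_pos ⟨h1, hC, hP, hc⟩]
            ring
        · have hnw : (n : ℝ) ≤ w := not_lt.mp hC
          rw [if_pos ⟨h1, hP⟩, if_neg (fun hx => hC hx.2.1), if_pos ⟨h1, hnw, hP⟩,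
            if_neg (fun hx => hC hx.2.1)]
          ring
      · rw [if_neg (fun hx => hP hx.2), if_neg (fun hx => hP hx.2.2.1),
          if_neg (fun hx => hP hx.2.2), if_neg (fun hx => hP hx.2.2.1)]
        ring
    · rw [if_neg (fun hx => h1 hx.1), if_neg (fun hx => h1 hx.1),
        if_neg (fun hx => h1 hx.1), if_neg (fun hx => h1 hx.1)]
      ring
  -- Step D: the bijection between pairs and integers
  have EqD : (∑ z ∈ Dv ×ˢ Dv,
        (if PairC y w z.1 z.2 then ((f z.1 : ℂ) * (f z.2 : ℂ)) * g (z.1 * z.2) else 0))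
      = ∑ n ∈ F, (if 1 ≤ n ∧ w < (n : ℝ) ∧ (Pplus n : ℝ) ≤ y ∧
            (∀ p : ℕ, p.Prime → p ∣ n → ((p ^ n.factorization p : ℕ) : ℝ) ≤ y)
          then (f n : ℂ) * g n else 0) := by
    rw [← Finset.sum_filter, ← Finset.sum_filter]
    rw [← Finset.sum_filter_of_ne
      (s := (Dv ×ˢ Dv).filter (fun z => PairC y w z.1 z.2))
      (p := fun z => g (z.1 * z.2) ≠ 0)
      (f := fun z => ((f z.1 : ℂ) * (f z.2 : ℂ)) * g (z.1 * z.2))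
      (fun z _ hzne => fun hgz => hzne (by simp [hgz]))]
    set jm : ℕ → ℕ × ℕ := fun n =>
      if h : ∃ z : ℕ × ℕ, PairC y w z.1 z.2 ∧ z.1 * z.2 = n then h.choose else (1, 1) with hjm
    have hjm_spec : ∀ n : ℕ, (∃ z : ℕ × ℕ, PairC y w z.1 z.2 ∧ z.1 * z.2 = n) →
        PairC y w (jm n).1 (jm n).2 ∧ (jm n).1 * (jm n).2 = n := by
      intro n h
      rw [hjm]
      simp only [dif_pos h]
      exact h.choose_spec
    refine Finset.sum_nbij' (fun z => z.1 * z.2) jm ?_ ?_ ?_ ?_ ?_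
    · intro z hz
      rw [Finset.mem_filter] at hz
      obtain ⟨hz1, hgz⟩ := hz
      rw [Finset.mem_filter] at hz1
      obtain ⟨_, hpz⟩ := hz1
      have hb := back hy hw hpz
      rw [Finset.mem_filter]
      refine ⟨?_, hb.2.1, hb.2.2.1, hb.2.2.2.1, hb.2.2.2.2⟩
      rw [hF, Set.Finite.mem_toFinset, Function.mem_support]
      exact hgz
    · intro n hn
      rw [Finset.mem_filter] at hn
      obtain ⟨hnF, h1, hwn, hPy, hpp⟩ := hn
      have hn0 : n ≠ 0 := by omega
      have hex : ∃ z : ℕ × ℕ, PairC y w z.1 z.2 ∧ z.1 * z.2 = n := by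
        obtain ⟨m, r, hp, hmr⟩ := exist hy hw n hwn hpp
        exact ⟨(m, r), hp, hmr⟩
      obtain ⟨hpair, hprod⟩ := hjm_spec n hex
      rw [Finset.mem_filter, Finset.mem_filter, Finset.mem_product]
      refine ⟨⟨⟨?_, ?_⟩, hpair⟩, ?_⟩
      · exact Finset.mem_biUnion.mpr ⟨n, hnF,
          Nat.mem_divisors.mpr ⟨⟨(jm n).2, hprod.symm⟩, hn0⟩⟩
      · exact Finset.mem_biUnion.mpr ⟨n, hnF,
          Nat.mem_divisors.mpr ⟨Dvd.intro_left _ hprod, hn0⟩⟩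
      · rw [hprod]
        rw [hF, Set.Finite.mem_toFinset, Function.mem_support] at hnF
        exact hnF
    · intro z hz
      rw [Finset.mem_filter] at hz
      obtain ⟨hz1, _⟩ := hz
      rw [Finset.mem_filter] at hz1
      obtain ⟨_, hpz⟩ := hz1
      have hex : ∃ zz : ℕ × ℕ, PairC y w zz.1 zz.2 ∧ zz.1 * zz.2 = z.1 * z.2 :=
        ⟨z, hpz, rfl⟩
      obtain ⟨hpair, hprod⟩ := hjm_spec _ hex
      have := uniq hw hpair hpz hprod
      exact Prod.ext this.1 this.2
    · intro n hn
      rw [Finset.mem_filter] at hn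
      obtain ⟨hnF, h1, hwn, hPy, hpp⟩ := hn
      have hex : ∃ z : ℕ × ℕ, PairC y w z.1 z.2 ∧ z.1 * z.2 = n := by
        obtain ⟨m, r, hp, hmr⟩ := exist hy hw n hwn hpp
        exact ⟨(m, r), hp, hmr⟩
      exact (hjm_spec n hex).2
    · intro z hz
      rw [Finset.mem_filter] at hz
      obtain ⟨hz1, _⟩ := hz
      rw [Finset.mem_filter] at hz1
      obtain ⟨_, hpz⟩ := hz1
      have hcop := (back hy hw hpz).1
      rw [hfmul z.1 z.2 hcop]
      push_cast
      ring
  -- Step C: combine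
  have EqC : (∑' n : ℕ, if 1 ≤ n ∧ (Pplus n : ℝ) ≤ y then (f n : ℂ) * g n else 0) -
        (∑' n : ℕ,
          if 1 ≤ n ∧ w < (n : ℝ) ∧ (Pplus n : ℝ) ≤ y ∧
              ∃ p : ℕ, p.Prime ∧ p ∣ n ∧ (((p ^ n.factorization p : ℕ) : ℝ) > y)
            then (f n : ℂ) * g n else 0) -
        (∑' n : ℕ,
          if 1 ≤ n ∧ (n : ℝ) ≤ w ∧ (Pplus n : ℝ) ≤ y
            then (f n : ℂ) * g n else 0)
      = ∑ i ∈ Finset.range K, (NN : ℂ)⁻¹ * ∑ j ∈ Finset.range NN,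
          (∑' (m : ℕ), ∑' (n : ℕ),
            if 1 ≤ n ∧ w < (m : ℝ) ∧ (m : ℝ) ≤ y * w
            then A i j m * B i j n * g (m * n) else 0) := by
    rw [EqA, ← EqD]
    calc (∑ z ∈ Dv ×ˢ Dv,
          (if PairC y w z.1 z.2 then ((f z.1 : ℂ) * (f z.2 : ℂ)) * g (z.1 * z.2) else 0))
        = ∑ z ∈ Dv ×ˢ Dv, ∑ i ∈ Finset.range K, (NN : ℂ)⁻¹ * ∑ j ∈ Finset.range NN,
            (if 1 ≤ z.2 ∧ w < (z.1 : ℝ) ∧ (z.1 : ℝ) ≤ y * w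
             then A i j z.1 * B i j z.2 * g (z.1 * z.2) else 0) :=
          Finset.sum_congr rfl (fun z _ => (Wclaim z.1 z.2).symm)
      _ = ∑ i ∈ Finset.range K, ∑ z ∈ Dv ×ˢ Dv, (NN : ℂ)⁻¹ * ∑ j ∈ Finset.range NN,
            (if 1 ≤ z.2 ∧ w < (z.1 : ℝ) ∧ (z.1 : ℝ) ≤ y * w
             then A i j z.1 * B i j z.2 * g (z.1 * z.2) else 0) := Finset.sum_comm
      _ = ∑ i ∈ Finset.range K, (NN : ℂ)⁻¹ * ∑ j ∈ Finset.range NN, ∑ z ∈ Dv ×ˢ Dv,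
            (if 1 ≤ z.2 ∧ w < (z.1 : ℝ) ∧ (z.1 : ℝ) ≤ y * w
             then A i j z.1 * B i j z.2 * g (z.1 * z.2) else 0) := by
          refine Finset.sum_congr rfl (fun i _ => ?_)
          rw [← Finset.mul_sum]
          congr 1
          exact Finset.sum_comm
      _ = ∑ i ∈ Finset.range K, (NN : ℂ)⁻¹ * ∑ j ∈ Finset.range NN,
            (∑' (m : ℕ), ∑' (n : ℕ),
              if 1 ≤ n ∧ w < (m : ℝ) ∧ (m : ℝ) ≤ y * w
              then A i j m * B i j n * g (m * n) else 0) := by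
          refine Finset.sum_congr rfl (fun i _ => ?_)
          congr 1
          refine Finset.sum_congr rfl (fun j _ => ?_)
          rw [EqB i j, ← Finset.sum_product']
  -- final estimate
  rw [EqC]
  have habs : ‖∑ i ∈ Finset.range K, (NN : ℂ)⁻¹ * ∑ j ∈ Finset.range NN,
      (∑' (m : ℕ), ∑' (n : ℕ),
        if 1 ≤ n ∧ w < (m : ℝ) ∧ (m : ℝ) ≤ y * w
        then A i j m * B i j n * g (m * n) else 0)‖ ≤ (K : ℝ) * T := by
    refine le_trans (norm_sum_le _ _) ?_
    have hterm : ∀ i ∈ Finset.range K, ‖(NN : ℂ)⁻¹ * ∑ j ∈ Finset.range NN,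
        (∑' (m : ℕ), ∑' (n : ℕ),
          if 1 ≤ n ∧ w < (m : ℝ) ∧ (m : ℝ) ≤ y * w
          then A i j m * B i j n * g (m * n) else 0)‖ ≤ T := by
      intro i _
      rw [norm_mul, norm_inv, Complex.norm_natCast]
      have hsum : ‖∑ j ∈ Finset.range NN,
          (∑' (m : ℕ), ∑' (n : ℕ),
            if 1 ≤ n ∧ w < (m : ℝ) ∧ (m : ℝ) ≤ y * w
            then A i j m * B i j n * g (m * n) else 0)‖ ≤ (NN : ℝ) * T := by
        refine le_trans (norm_sum_le _ _) ?_
        calc ∑ j ∈ Finset.range NN, ‖∑' (m : ℕ), ∑' (n : ℕ),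
              if 1 ≤ n ∧ w < (m : ℝ) ∧ (m : ℝ) ≤ y * w
              then A i j m * B i j n * g (m * n) else 0‖
            ≤ ∑ j ∈ Finset.range NN, T := Finset.sum_le_sum (fun j _ => hBil i j)
          _ = (NN : ℝ) * T := by rw [Finset.sum_const, Finset.card_range, nsmul_eq_mul]
      calc (NN : ℝ)⁻¹ * ‖∑ j ∈ Finset.range NN,
            (∑' (m : ℕ), ∑' (n : ℕ),
              if 1 ≤ n ∧ w < (m : ℝ) ∧ (m : ℝ) ≤ y * w
              then A i j m * B i j n * g (m * n) else 0)‖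
          ≤ (NN : ℝ)⁻¹ * ((NN : ℝ) * T) := by
            exact mul_le_mul_of_nonneg_left hsum (by positivity)
        _ = T := by
            rw [← mul_assoc, inv_mul_cancel₀ (ne_of_gt hNNR), one_mul]
    calc ∑ i ∈ Finset.range K, ‖(NN : ℂ)⁻¹ * ∑ j ∈ Finset.range NN,
          (∑' (m : ℕ), ∑' (n : ℕ),
            if 1 ≤ n ∧ w < (m : ℝ) ∧ (m : ℝ) ≤ y * w
            then A i j m * B i j n * g (m * n) else 0)‖
        ≤ ∑ i ∈ Finset.range K, T := Finset.sum_le_sum hterm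
      _ = (K : ℝ) * T := by rw [Finset.sum_const, Finset.card_range, nsmul_eq_mul]
  refine le_trans habs ?_
  -- (K : ℝ) * T ≤ 3 * (log y * T)
  have hy0 : (0 : ℝ) < y := by linarith
  have hfl2 : 2 ≤ ⌊y⌋₊ := Nat.le_floor (by exact_mod_cast hy)
  have h2L : ((2 : ℝ)) ^ (Nat.log 2 ⌊y⌋₊) ≤ y := by
    have h1 : (2 : ℕ) ^ (Nat.log 2 ⌊y⌋₊) ≤ ⌊y⌋₊ := Nat.pow_log_le_self 2 (by omega)
    calc ((2 : ℝ)) ^ (Nat.log 2 ⌊y⌋₊) = (((2 : ℕ) ^ (Nat.log 2 ⌊y⌋₊) : ℕ) : ℝ) := by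
          push_cast; ring
      _ ≤ (⌊y⌋₊ : ℝ) := by exact_mod_cast h1
      _ ≤ y := Nat.floor_le (le_of_lt hy0)
  have hLlog : ((Nat.log 2 ⌊y⌋₊ : ℕ) : ℝ) * Real.log 2 ≤ Real.log y := by
    have := Real.log_le_log (by positivity) h2L
    rwa [Real.log_pow] at this
  have hlog2 : (0.6931471803 : ℝ) < Real.log 2 := Real.log_two_gt_d9
  have hlogy2 : Real.log 2 ≤ Real.log y := Real.log_le_log (by norm_num) hy
  have hK3 : (K : ℝ) ≤ 3 * Real.log y := by
    have hKcast : (K : ℝ) = ((Nat.log 2 ⌊y⌋₊ : ℕ) : ℝ) + 1 := by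
      rw [hK]; push_cast; ring
    rw [hKcast]
    nlinarith [(show (0:ℝ) ≤ ((Nat.log 2 ⌊y⌋₊ : ℕ) : ℝ) from Nat.cast_nonneg _),
      hLlog, hlogy2, hlog2]
  calc (K : ℝ) * T ≤ (3 * Real.log y) * T := mul_le_mul_of_nonneg_right hK3 hT0
    _ = 3 * (Real.log y * T) := by ring

end
end
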